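/- arXiv:math/0608269 — 14 statements merged into one kernel-verified Lean document; each statement's English description precedes it below -/
import Mathlib

section
/- Let n ≥ 4, let Σ be a nonempty set, let q and f be permutably reducible n-ary quasigroups on Σ, and let (o_1,…,o_n) ∈ Σ^n. If for every index i ∈ {1,…,n} and all x_1,…,x_n ∈ Σ one has q(x_1,…,x_{i−1}, o_i, x_{i+1},…,x_n) = f(x_1,…,x_{i−1}, o_i, x_{i+1},…,x_n), then q(x_1,…,x_n) = f(x_1,…,x_n) for all (x_1,…,x_n) ∈ Σ^n. -/
/-- An `n`-ary quasigroup on `S`: a function `(Fin n → S) → S` that is bijective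
in each argument when the other arguments are fixed. -/
def IsNQuasigroup {S : Type*} {n : ℕ} (f : (Fin n → S) → S) : Prop :=
  ∀ (i : Fin n) (x : Fin n → S), Function.Bijective fun a => f (Function.update x i a)

/-- An `n`-ary quasigroup `f` is permutably reducible if there are `1 < k < n`,
a permutation `σ` of the indices, a `k`-ary quasigroup `g` and an `(n-k+1)`-ary
quasigroup `h` with `f x = h (g (x∘σ on first k), x∘σ on the rest)`. -/
def IsPermutablyReducible {S : Type*} {n : ℕ} (f : (Fin n → S) → S) : Prop :=
  ∃ (k : ℕ) (_ : 1 < k) (hkn : k < n) (σ : Equiv.Perm (Fin n))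
    (g : (Fin k → S) → S) (h : (Fin (n - k + 1) → S) → S),
    IsNQuasigroup g ∧ IsNQuasigroup h ∧
    ∀ x : Fin n → S,
      f x = h (Fin.cons (g fun j => x (σ ⟨j.1, lt_trans j.2 hkn⟩))
        (fun j : Fin (n - k) => x (σ ⟨k + j.1, by have := j.2; omega⟩)))

namespace NQGaux

open Function

variable {S : Type*} {n : ℕ}

/-- One can change the value at a coordinate `i1` of the bag `A` to anything,
compensating at another coordinate `i2` of the bag, without changing the value of `q`. -/
def Move (q : (Fin n → S) → S) (A : Finset (Fin n)) : Prop :=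
  ∀ (x : Fin n → S) (i1 i2 : Fin n), i1 ∈ A → i2 ∈ A → i1 ≠ i2 → ∀ s : S,
    ∃ t : S, q (update (update x i1 s) i2 t) = q x

/-- If two tuples agree outside the bag `A` and have equal `q`-values, then the
`q`-equality persists after modifying both at a common coordinate outside `A`. -/
def Transfer (q : (Fin n → S) → S) (A : Finset (Fin n)) : Prop :=
  ∀ (x y : Fin n → S) (j : Fin n) (a : S), j ∉ A → (∀ i, i ∉ A → x i = y i) →
    q x = q y → q (update x j a) = q (update y j a)

def Inj (q : (Fin n → S) → S) : Prop :=
  ∀ (x : Fin n → S) (j : Fin n) (a b : S),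
    q (update x j a) = q (update x j b) → a = b

theorem inj_of_quasigroup {q : (Fin n → S) → S} (hq : IsNQuasigroup q) : Inj q :=
  fun x j a b hab => (hq j x).injective hab

theorem upd2_off {x : Fin n → S} {i1 i2 i : Fin n} {s t : S} (h1 : i ≠ i1) (h2 : i ≠ i2) :
    (update (update x i1 s) i2 t) i = x i := by
  rw [update_of_ne h2, update_of_ne h1]

theorem transfer_two {q : (Fin n → S) → S} {A : Finset (Fin n)} (T : Transfer q A)
    {j1 j2 : Fin n} (h1 : j1 ∉ A) (h2 : j2 ∉ A) {x y : Fin n → S}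
    (hag : ∀ i, i ∉ A → x i = y i) (hxy : q x = q y) (a b : S) :
    q (update (update x j1 a) j2 b) = q (update (update y j1 a) j2 b) := by
  refine T _ _ j2 b h2 (fun i hi => ?_) (T _ _ j1 a h1 hag hxy)
  by_cases hij : i = j1
  · subst hij; rw [update_self, update_self]
  · rw [update_of_ne hij, update_of_ne hij]; exact hag i hi

theorem exists_split {q : (Fin n → S) → S} (hqr : IsPermutablyReducible q) :
    ∃ A : Finset (Fin n), 2 ≤ A.card ∧ A.card < n ∧ Move q A ∧ Transfer q A := by
  obtain ⟨k, hk1, hkn, σ, g, h, hg, hh, hdec⟩ := hqr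
  set e1 : Fin k → Fin n := fun j => σ ⟨j.1, lt_trans j.2 hkn⟩ with he1
  set e2 : Fin (n - k) → Fin n := fun j => σ ⟨k + j.1, by have := j.2; omega⟩ with he2
  have hdec' : ∀ x : Fin n → S,
      q x = h (Fin.cons (g fun j => x (e1 j)) fun j => x (e2 j)) := fun x => hdec x
  have he1inj : Function.Injective e1 := by
    intro a b hab
    have h2 := congrArg Fin.val (σ.injective hab)
    exact Fin.ext h2
  have hdisj : ∀ (p : Fin k) (jj : Fin (n - k)), e1 p ≠ e2 jj := by
    intro p jj hpj
    have h2 := σ.injective hpj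
    simp only [Fin.mk.injEq] at h2
    have hp := p.2
    omega
  refine ⟨Finset.image e1 Finset.univ, ?_, ?_, ?_, ?_⟩
  · rw [Finset.card_image_of_injective _ he1inj, Finset.card_univ, Fintype.card_fin]; omega
  · rw [Finset.card_image_of_injective _ he1inj, Finset.card_univ, Fintype.card_fin]; omega
  · -- Move
    intro x i1 i2 hi1 hi2 h12 s
    obtain ⟨p1, -, hp1⟩ := Finset.mem_image.mp hi1
    obtain ⟨p2, -, hp2⟩ := Finset.mem_image.mp hi2
    have hp12 : p1 ≠ p2 := by rintro rfl; exact h12 (hp1 ▸ hp2 ▸ rfl)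
    obtain ⟨t, ht⟩ := (hg p2 (update (fun jj => x (e1 jj)) p1 s)).surjective (g fun jj => x (e1 jj))
    refine ⟨t, ?_⟩
    rw [hdec', hdec']
    have hXe1 : (fun jj => (update (update x i1 s) i2 t) (e1 jj))
        = update (update (fun jj => x (e1 jj)) p1 s) p2 t := by
      funext jj
      by_cases hj2 : jj = p2
      · subst hj2
        rw [update_self, hp2, update_self]
      · rw [update_of_ne hj2, update_of_ne (fun hc => hj2 (he1inj (hc.trans hp2.symm)))]
        by_cases hj1 : jj = p1
        · subst hj1; rw [update_self, hp1, update_self]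
        · rw [update_of_ne hj1, update_of_ne (fun hc => hj1 (he1inj (hc.trans hp1.symm)))]
    have hXe2 : (fun jj => (update (update x i1 s) i2 t) (e2 jj)) = fun jj => x (e2 jj) := by
      funext jj
      rw [update_of_ne (fun hc => hdisj p2 jj (hp2.trans hc.symm)),
        update_of_ne (fun hc => hdisj p1 jj (hp1.trans hc.symm))]
    have ht' : g (update (update (fun jj => x (e1 jj)) p1 s) p2 t) = g fun jj => x (e1 jj) := ht
    rw [hXe1, hXe2, ht']
  · -- Transfer
    intro x y j a hj hag hqeq
    have hW : (fun jj => x (e2 jj)) = fun jj => y (e2 jj) := by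
      funext jj
      refine hag _ (fun hc => ?_)
      obtain ⟨p, -, hp⟩ := Finset.mem_image.mp hc
      exact hdisj p jj hp
    rw [hdec', hdec', hW] at hqeq
    have hinj : ∀ b1 b2 : S, h (Fin.cons b1 fun jj => y (e2 jj)) = h (Fin.cons b2 fun jj => y (e2 jj)) → b1 = b2 := by
      intro b1 b2 hb
      have e : ∀ b : S, h (Function.update (Fin.cons b1 fun jj => y (e2 jj)) 0 b)
          = h (Fin.cons b fun jj => y (e2 jj)) := fun b => by rw [Fin.update_cons_zero]
      exact (hh 0 (Fin.cons b1 fun jj => y (e2 jj))).injective (by show h _ = h _; rw [e, e]; exact hb)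
    have hg' : g (fun jj => x (e1 jj)) = g (fun jj => y (e1 jj)) := hinj _ _ hqeq
    rw [hdec', hdec']
    have hje1 : ∀ p : Fin k, e1 p ≠ j := fun p hc => hj (hc ▸ Finset.mem_image_of_mem e1 (Finset.mem_univ p))
    have hX1 : (fun jj => (update x j a) (e1 jj)) = fun jj => x (e1 jj) := by
      funext jj; rw [update_of_ne (hje1 jj)]
    have hX2 : (fun jj => (update y j a) (e1 jj)) = fun jj => y (e1 jj) := by
      funext jj; rw [update_of_ne (hje1 jj)]
    have hW2 : (fun jj => (update x j a) (e2 jj)) = fun jj => (update y j a) (e2 jj) := by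
      funext jj
      by_cases hc : e2 jj = j
      · rw [hc, update_self, update_self]
      · rw [update_of_ne hc, update_of_ne hc]
        refine hag _ (fun hm => ?_)
        obtain ⟨p, -, hp⟩ := Finset.mem_image.mp hm
        exact hdisj p jj hp
    rw [hX1, hX2, hW2, hg']


variable {q f : (Fin n → S) → S} {A C : Finset (Fin n)} {o : Fin n → S}

/-- Case `A = C` (more precisely: a pair inside `A ∩ C` and a coordinate outside `A ∪ C`). -/
theorem caseL1 (Mq : Move q A) (Tq : Transfer q A) (Tf : Transfer f C)
    (Sh : ∀ x i, x i = o i → q x = f x)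
    {i1 i2 j : Fin n} (hi1A : i1 ∈ A) (hi1C : i1 ∈ C) (hi2A : i2 ∈ A) (hi2C : i2 ∈ C)
    (h12 : i1 ≠ i2) (hjA : j ∉ A) (hjC : j ∉ C) (x : Fin n → S) : q x = f x := by
  have hji1 : j ≠ i1 := fun h => hjA (by rw [h]; exact hi1A)
  have hji2 : j ≠ i2 := fun h => hjA (by rw [h]; exact hi2A)
  obtain ⟨t, ht⟩ := Mq x i1 i2 hi1A hi2A h12 (o i1)
  set x' := update (update x i1 (o i1)) i2 t with hx'
  have hagA : ∀ i, i ∉ A → x i = x' i := fun i hi =>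
    (upd2_off (fun h => hi (by rw [h]; exact hi1A)) (fun h => hi (by rw [h]; exact hi2A))).symm
  have hagC : ∀ i, i ∉ C → x i = x' i := fun i hi =>
    (upd2_off (fun h => hi (by rw [h]; exact hi1C)) (fun h => hi (by rw [h]; exact hi2C))).symm
  have hq1 : q (update x j (o j)) = q (update x' j (o j)) := Tq x x' j (o j) hjA hagA ht.symm
  have hsh1 : q (update x j (o j)) = f (update x j (o j)) := Sh _ j (update_self ..)
  have hsh2 : q (update x' j (o j)) = f (update x' j (o j)) := Sh _ j (update_self ..)
  have hf1 : f (update x j (o j)) = f (update x' j (o j)) := by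
    rw [← hsh1, ← hsh2, hq1]
  have hagC' : ∀ i, i ∉ C → (update x j (o j)) i = (update x' j (o j)) i := by
    intro i hi
    by_cases hij : i = j
    · subst hij; rw [update_self, update_self]
    · rw [update_of_ne hij, update_of_ne hij]; exact hagC i hi
  have hf2 := Tf _ _ j (x j) hjC hagC' hf1
  have e1 : update (update x j (o j)) j (x j) = x := by rw [update_idem, update_eq_self]
  have e2 : update (update x' j (o j)) j (x j) = x' := by
    rw [update_idem, hagA j hjA, update_eq_self]
  rw [e1, e2] at hf2
  have hx'i1 : x' i1 = o i1 := by rw [hx', update_of_ne h12, update_self]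
  have hsh3 : q x' = f x' := Sh x' i1 hx'i1
  rw [← ht, hsh3, ← hf2]

/-- Case `A ∩ C = ∅`-style: a pair in `A \ C` and a pair in `C \ A`. -/
theorem caseL2 (Mq : Move q A) (Tq : Transfer q A) (Mf : Move f C) (Tf : Transfer f C)
    (Sh : ∀ x i, x i = o i → q x = f x)
    {i1 i2 j1 j2 : Fin n} (hi1A : i1 ∈ A) (hi1C : i1 ∉ C) (hi2A : i2 ∈ A) (hi2C : i2 ∉ C)
    (h12 : i1 ≠ i2) (hj1C : j1 ∈ C) (hj1A : j1 ∉ A) (hj2C : j2 ∈ C) (hj2A : j2 ∉ A)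
    (hj12 : j1 ≠ j2) (x : Fin n → S) : q x = f x := by
  have hi1j1 : i1 ≠ j1 := fun h => hi1C (by rw [h]; exact hj1C)
  have hi1j2 : i1 ≠ j2 := fun h => hi1C (by rw [h]; exact hj2C)
  have hi2j1 : i2 ≠ j1 := fun h => hi2C (by rw [h]; exact hj1C)
  have hi2j2 : i2 ≠ j2 := fun h => hi2C (by rw [h]; exact hj2C)
  obtain ⟨t, ht⟩ := Mq x i1 i2 hi1A hi2A h12 (o i1)
  obtain ⟨u, hu⟩ := Mf x j1 j2 hj1C hj2C hj12 (o j1)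
  -- x' := update (update x i1 (o i1)) i2 t ; z := update (update x j1 (o j1)) j2 u
  -- z' := update (update x' j1 (o j1)) j2 u
  have hagA : ∀ i, i ∉ A → x i = (update (update x i1 (o i1)) i2 t) i := fun i hi =>
    (upd2_off (fun h => hi (by rw [h]; exact hi1A)) (fun h => hi (by rw [h]; exact hi2A))).symm
  have hqzz' : q (update (update x j1 (o j1)) j2 u)
      = q (update (update (update (update x i1 (o i1)) i2 t) j1 (o j1)) j2 u) :=
    transfer_two Tq hj1A hj2A hagA ht.symm (o j1) u
  have hshz : q (update (update x j1 (o j1)) j2 u) = f (update (update x j1 (o j1)) j2 u) :=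
    Sh _ j1 (by rw [update_of_ne hj12, update_self])
  have hshz' : q (update (update (update (update x i1 (o i1)) i2 t) j1 (o j1)) j2 u)
      = f (update (update (update (update x i1 (o i1)) i2 t) j1 (o j1)) j2 u) :=
    Sh _ i1 (by rw [upd2_off hi1j1 hi1j2, update_of_ne h12, update_self])
  -- f z = f z'
  have hfzz' : f (update (update x j1 (o j1)) j2 u)
      = f (update (update (update (update x i1 (o i1)) i2 t) j1 (o j1)) j2 u) := by
    rw [← hshz, ← hshz', hqzz']
  -- transfer (z, x) pair over i1 i2 updates
  have hagC : ∀ i, i ∉ C → (update (update x j1 (o j1)) j2 u) i = x i := fun i hi =>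
    upd2_off (fun h => hi (by rw [h]; exact hj1C)) (fun h => hi (by rw [h]; exact hj2C))
  have hfz2 : f (update (update (update (update x j1 (o j1)) j2 u) i1 (o i1)) i2 t)
      = f (update (update x i1 (o i1)) i2 t) :=
    transfer_two Tf hi1C hi2C hagC hu (o i1) t
  have heq : update (update (update (update x j1 (o j1)) j2 u) i1 (o i1)) i2 t
      = update (update (update (update x i1 (o i1)) i2 t) j1 (o j1)) j2 u := by
    funext i
    simp only [update_apply]
    split_ifs <;> simp_all
  rw [heq] at hfz2
  have hshx' : q (update (update x i1 (o i1)) i2 t) = f (update (update x i1 (o i1)) i2 t) :=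
    Sh _ i1 (by rw [update_of_ne h12, update_self])
  rw [← ht, hshx', ← hfz2, ← hfzz', hu]

/-- Case: a pair in `A ∩ C` plus a coordinate in `A \ C`. -/
theorem caseL3 (Mq : Move q A) (Tq : Transfer q A) (Tf : Transfer f C)
    (Sh : ∀ x i, x i = o i → q x = f x)
    {i1 i2 is j : Fin n} (hi1A : i1 ∈ A) (hi1C : i1 ∈ C) (hi2A : i2 ∈ A) (hi2C : i2 ∈ C)
    (h12 : i1 ≠ i2) (hisA : is ∈ A) (hisC : is ∉ C) (hjA : j ∉ A) (x : Fin n → S) :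
    q x = f x := by
  have hisi1 : is ≠ i1 := fun h => hisC (by rw [h]; exact hi1C)
  have hisi2 : is ≠ i2 := fun h => hisC (by rw [h]; exact hi2C)
  have hisj : is ≠ j := fun h => hjA (by rw [← h]; exact hisA)
  have hji1 : j ≠ i1 := fun h => hjA (by rw [h]; exact hi1A)
  have hji2 : j ≠ i2 := fun h => hjA (by rw [h]; exact hi2A)
  obtain ⟨t, ht⟩ := Mq (update x is (o is)) i1 i2 hi1A hi2A h12 (o i1)
  -- x₀ := update x is (o is), x'₀ := update (update x₀ i1 (o i1)) i2 t
  -- x' := update (update x i1 (o i1)) i2 t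
  have hsh0 : q (update x is (o is)) = f (update x is (o is)) := Sh _ is (update_self ..)
  have hsh0' : q (update (update (update x is (o is)) i1 (o i1)) i2 t)
      = f (update (update (update x is (o is)) i1 (o i1)) i2 t) :=
    Sh _ is (by rw [upd2_off hisi1 hisi2, update_self])
  have hf0 : f (update x is (o is)) = f (update (update (update x is (o is)) i1 (o i1)) i2 t) := by
    rw [← hsh0, ← hsh0']; exact ht.symm
  have hagC0 : ∀ i, i ∉ C → (update x is (o is)) i
      = (update (update (update x is (o is)) i1 (o i1)) i2 t) i := fun i hi =>
    (upd2_off (fun h => hi (by rw [h]; exact hi1C)) (fun h => hi (by rw [h]; exact hi2C))).symm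
  have hstar1 := Tf _ _ is (x is) hisC hagC0 hf0
  have ex1 : update (update x is (o is)) is (x is) = x := by rw [update_idem, update_eq_self]
  have ex2 : update (update (update (update x is (o is)) i1 (o i1)) i2 t) is (x is)
      = update (update x i1 (o i1)) i2 t := by
    funext i
    simp only [update_apply]
    split_ifs <;> simp_all
  rw [ex1, ex2] at hstar1
  -- hstar1 : f x = f x'
  have hagA0 : ∀ i, i ∉ A → (update x is (o is)) i
      = (update (update (update x is (o is)) i1 (o i1)) i2 t) i := fun i hi =>
    (upd2_off (fun h => hi (by rw [h]; exact hi1A)) (fun h => hi (by rw [h]; exact hi2A))).symm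
  have hqy : q (update (update x is (o is)) j (o j))
      = q (update (update (update (update x is (o is)) i1 (o i1)) i2 t) j (o j)) :=
    Tq _ _ j (o j) hjA hagA0 ht.symm
  have hshy : q (update (update x is (o is)) j (o j))
      = f (update (update x is (o is)) j (o j)) :=
    Sh _ is (by rw [update_of_ne hisj, update_self])
  have hshy' : q (update (update (update (update x is (o is)) i1 (o i1)) i2 t) j (o j))
      = f (update (update (update (update x is (o is)) i1 (o i1)) i2 t) j (o j)) :=
    Sh _ is (by rw [update_of_ne hisj, upd2_off hisi1 hisi2, update_self])
  have hfy : f (update (update x is (o is)) j (o j))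
      = f (update (update (update (update x is (o is)) i1 (o i1)) i2 t) j (o j)) := by
    rw [← hshy, ← hshy', hqy]
  have hagC0' : ∀ i, i ∉ C → (update (update x is (o is)) j (o j)) i
      = (update (update (update (update x is (o is)) i1 (o i1)) i2 t) j (o j)) i := by
    intro i hi
    by_cases hij : i = j
    · subst hij; rw [update_self, update_self]
    · rw [update_of_ne hij, update_of_ne hij]; exact hagC0 i hi
  have hfy2 := Tf _ _ is (x is) hisC hagC0' hfy
  have ey1 : update (update (update x is (o is)) j (o j)) is (x is) = update x j (o j) := by
    funext i
    simp only [update_apply]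
    split_ifs <;> simp_all
  have ey2 : update (update (update (update (update x is (o is)) i1 (o i1)) i2 t) j (o j)) is (x is)
      = update (update (update x i1 (o i1)) i2 t) j (o j) := by
    funext i
    simp only [update_apply]
    split_ifs <;> simp_all
  rw [ey1, ey2] at hfy2
  have hshyy : q (update x j (o j)) = f (update x j (o j)) := Sh _ j (update_self ..)
  have hshyy' : q (update (update (update x i1 (o i1)) i2 t) j (o j))
      = f (update (update (update x i1 (o i1)) i2 t) j (o j)) := Sh _ j (update_self ..)
  have hqyy : q (update x j (o j)) = q (update (update (update x i1 (o i1)) i2 t) j (o j)) := by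
    rw [hshyy, hshyy', hfy2]
  have hagA' : ∀ i, i ∉ A → (update x j (o j)) i
      = (update (update (update x i1 (o i1)) i2 t) j (o j)) i := by
    intro i hi
    by_cases hij : i = j
    · subst hij; rw [update_self, update_self]
    · rw [update_of_ne hij, update_of_ne hij]
      exact (upd2_off (fun h => hi (by rw [h]; exact hi1A)) (fun h => hi (by rw [h]; exact hi2A))).symm
  have hqx := Tq _ _ j (x j) hjA hagA' hqyy
  have ez1 : update (update x j (o j)) j (x j) = x := by rw [update_idem, update_eq_self]
  have ez2 : update (update (update (update x i1 (o i1)) i2 t) j (o j)) j (x j)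
      = update (update x i1 (o i1)) i2 t := by
    rw [update_idem, show x j = (update (update x i1 (o i1)) i2 t) j from (upd2_off hji1 hji2).symm,
      update_eq_self]
  rw [ez1, ez2] at hqx
  have hshx' : q (update (update x i1 (o i1)) i2 t) = f (update (update x i1 (o i1)) i2 t) :=
    Sh _ i1 (by rw [update_of_ne h12, update_self])
  rw [hqx, hshx', ← hstar1]

/-- Transport case: `i1 ∈ A ∩ C`, `i2 ∈ A \ C`, and a pair `j, j2 ∈ C \ A`. -/
theorem caseL4 (Mq : Move q A) (Tq : Transfer q A) (Mf : Move f C) (Tf : Transfer f C)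
    (Sh : ∀ x i, x i = o i → q x = f x)
    {i1 i2 j j2 : Fin n} (hi1A : i1 ∈ A) (hi1C : i1 ∈ C) (hi2A : i2 ∈ A) (hi2C : i2 ∉ C)
    (hjC : j ∈ C) (hjA : j ∉ A) (hj2C : j2 ∈ C) (hj2A : j2 ∉ A) (hjj : j ≠ j2)
    (x : Fin n → S) : q x = f x := by
  have h12 : i1 ≠ i2 := fun h => hi2C (by rw [← h]; exact hi1C)
  have hi1j : i1 ≠ j := fun h => hjA (by rw [← h]; exact hi1A)
  have hi1j2 : i1 ≠ j2 := fun h => hj2A (by rw [← h]; exact hi1A)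
  have hi2j : i2 ≠ j := fun h => hjA (by rw [← h]; exact hi2A)
  have hi2j2 : i2 ≠ j2 := fun h => hj2A (by rw [← h]; exact hi2A)
  obtain ⟨u1, hu1⟩ := Mf x j j2 hjC hj2C hjj (o j)
  obtain ⟨t', ht'⟩ := Mq x i1 i2 hi1A hi2A h12 (o i1)
  obtain ⟨t'', ht''⟩ := Mq (update x i2 (o i2)) i1 i2 hi1A hi2A h12 (o i1)
  -- abbreviations (all spelled out):
  -- x¹ = U (U x j (o j)) j2 u1 ; X = U (U x i1 (o i1)) i2 t'
  -- z = U x i2 (o i2) ; z' = U (U z i1 (o i1)) i2 t''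
  -- X¹ = U (U X j (o j)) j2 u1 ; z¹ = U x¹ i2 (o i2) ; z'¹ = U (U z' j (o j)) j2 u1
  have hagA : ∀ i, i ∉ A → x i = (update (update x i1 (o i1)) i2 t') i := fun i hi =>
    (upd2_off (fun h => hi (by rw [h]; exact hi1A)) (fun h => hi (by rw [h]; exact hi2A))).symm
  have ha : q (update (update x j (o j)) j2 u1)
      = q (update (update (update (update x i1 (o i1)) i2 t') j (o j)) j2 u1) :=
    transfer_two Tq hjA hj2A hagA ht'.symm (o j) u1
  have hagA2 : ∀ i, i ∉ A → (update x i2 (o i2)) i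
      = (update (update (update x i2 (o i2)) i1 (o i1)) i2 t'') i := fun i hi =>
    (upd2_off (fun h => hi (by rw [h]; exact hi1A)) (fun h => hi (by rw [h]; exact hi2A))).symm
  have hb : q (update (update (update x i2 (o i2)) j (o j)) j2 u1)
      = q (update (update (update (update (update x i2 (o i2)) i1 (o i1)) i2 t'') j (o j)) j2 u1) :=
    transfer_two Tq hjA hj2A hagA2 ht''.symm (o j) u1
  have heqz1 : update (update (update x i2 (o i2)) j (o j)) j2 u1
      = update (update (update x j (o j)) j2 u1) i2 (o i2) := by
    funext i
    simp only [update_apply]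
    split_ifs <;> simp_all
  rw [heqz1] at hb
  have hagC1 : ∀ i, i ∉ C → x i = (update (update x j (o j)) j2 u1) i := fun i hi =>
    (upd2_off (fun h => hi (by rw [h]; exact hjC)) (fun h => hi (by rw [h]; exact hj2C))).symm
  have hc : f (update x i2 (o i2)) = f (update (update (update x j (o j)) j2 u1) i2 (o i2)) :=
    Tf _ _ i2 (o i2) hi2C hagC1 hu1.symm
  have hshz : q (update x i2 (o i2)) = f (update x i2 (o i2)) := Sh _ i2 (update_self ..)
  have hshz1 : q (update (update (update x j (o j)) j2 u1) i2 (o i2))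
      = f (update (update (update x j (o j)) j2 u1) i2 (o i2)) := Sh _ i2 (update_self ..)
  have hshz' : q (update (update (update x i2 (o i2)) i1 (o i1)) i2 t'')
      = f (update (update (update x i2 (o i2)) i1 (o i1)) i2 t'') :=
    Sh _ i1 (by rw [update_of_ne h12, update_self])
  have hshz'1 : q (update (update (update (update (update x i2 (o i2)) i1 (o i1)) i2 t'') j (o j)) j2 u1)
      = f (update (update (update (update (update x i2 (o i2)) i1 (o i1)) i2 t'') j (o j)) j2 u1) :=
    Sh _ i1 (by rw [upd2_off hi1j hi1j2, update_of_ne h12, update_self])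
  -- chain A : f z' = f z'¹
  have hchain : f (update (update (update x i2 (o i2)) i1 (o i1)) i2 t'')
      = f (update (update (update (update (update x i2 (o i2)) i1 (o i1)) i2 t'') j (o j)) j2 u1) := by
    rw [← hshz', ← hshz'1, ht'', hshz, hc, ← hshz1, hb]
  have hagC2 : ∀ i, i ∉ C → (update (update (update x i2 (o i2)) i1 (o i1)) i2 t'') i
      = (update (update (update (update (update x i2 (o i2)) i1 (o i1)) i2 t'') j (o j)) j2 u1) i :=
    fun i hi =>
    (upd2_off (fun h => hi (by rw [h]; exact hjC)) (fun h => hi (by rw [h]; exact hj2C))).symm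
  have hd := Tf _ _ i2 t' hi2C hagC2 hchain
  have heqX : update (update (update (update x i2 (o i2)) i1 (o i1)) i2 t'') i2 t'
      = update (update x i1 (o i1)) i2 t' := by
    funext i
    simp only [update_apply]
    split_ifs <;> simp_all
  have heqX1 : update (update (update (update (update (update x i2 (o i2)) i1 (o i1)) i2 t'') j (o j)) j2 u1) i2 t'
      = update (update (update (update x i1 (o i1)) i2 t') j (o j)) j2 u1 := by
    funext i
    simp only [update_apply]
    split_ifs <;> simp_all
  rw [heqX, heqX1] at hd
  have hshX : q (update (update x i1 (o i1)) i2 t') = f (update (update x i1 (o i1)) i2 t') :=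
    Sh _ i1 (by rw [update_of_ne h12, update_self])
  have hshX1 : q (update (update (update (update x i1 (o i1)) i2 t') j (o j)) j2 u1)
      = f (update (update (update (update x i1 (o i1)) i2 t') j (o j)) j2 u1) :=
    Sh _ i1 (by rw [upd2_off hi1j hi1j2, update_of_ne h12, update_self])
  have hshx1 : q (update (update x j (o j)) j2 u1) = f (update (update x j (o j)) j2 u1) :=
    Sh _ j (by rw [update_of_ne hjj, update_self])
  rw [← ht', hshX, hd, ← hshX1, ← ha, hshx1, hu1]

/-- The main "generic position" case: `i1 ∈ A ∩ C`, `i2 ∈ A \ C`, `js ∈ C \ A`,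
`j ∉ A ∪ C`. -/
theorem caseCore (Mq : Move q A) (Tq : Transfer q A) (Mf : Move f C) (Tf : Transfer f C)
    (Injq : Inj q) (Sh : ∀ x i, x i = o i → q x = f x)
    {i1 i2 js j : Fin n} (hi1A : i1 ∈ A) (hi1C : i1 ∈ C) (hi2A : i2 ∈ A) (hi2C : i2 ∉ C)
    (hjsC : js ∈ C) (hjsA : js ∉ A) (hjA : j ∉ A) (hjC : j ∉ C)
    (x : Fin n → S) : q x = f x := by
  have h12 : i1 ≠ i2 := fun h => hi2C (by rw [← h]; exact hi1C)
  have hi1js : i1 ≠ js := fun h => hjsA (by rw [← h]; exact hi1A)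
  have hi2js : i2 ≠ js := fun h => hjsA (by rw [← h]; exact hi2A)
  have hi1j : i1 ≠ j := fun h => hjA (by rw [← h]; exact hi1A)
  have hi2j : i2 ≠ j := fun h => hjA (by rw [← h]; exact hi2A)
  have hjsj : js ≠ j := fun h => hjC (by rw [← h]; exact hjsC)
  obtain ⟨s1, h1⟩ := Mq x i2 i1 hi2A hi1A (Ne.symm h12) (o i2)
  set X1 : Fin n → S := update (update x i2 (o i2)) i1 s1 with hX1
  obtain ⟨r1, h2⟩ := Mf x i1 js hi1C hjsC hi1js (o i1)
  set X2 : Fin n → S := update (update x i1 (o i1)) js r1 with hX2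
  obtain ⟨r2, h3⟩ := Mf X1 i1 js hi1C hjsC hi1js (o i1)
  set W1 : Fin n → S := update (update X1 i1 (o i1)) js r2 with hW1
  obtain ⟨t2, h4⟩ := Mq X2 i2 i1 hi2A hi1A (Ne.symm h12) (o i2)
  set V : Fin n → S := update (update X2 i2 (o i2)) i1 t2 with hV
  obtain ⟨r3, h5⟩ := Mf V i1 js hi1C hjsC hi1js (o i1)
  set W2 : Fin n → S := update (update V i1 (o i1)) js r3 with hW2
  -- coordinate evaluations
  have eX1i2 : X1 i2 = o i2 := by rw [hX1, update_of_ne (Ne.symm h12), update_self]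
  have eX2i1 : X2 i1 = o i1 := by rw [hX2, update_of_ne hi1js, update_self]
  have eW1i1 : W1 i1 = o i1 := by rw [hW1, update_of_ne hi1js, update_self]
  have eVi2 : V i2 = o i2 := by rw [hV, update_of_ne (Ne.symm h12), update_self]
  have eW2i1 : W2 i1 = o i1 := by rw [hW2, update_of_ne hi1js, update_self]
  -- transfers along j
  have agQ1 : ∀ i, i ∉ A → x i = X1 i := fun i hi => by
    rw [hX1]
    exact (upd2_off (fun h => hi (by rw [h]; exact hi2A)) (fun h => hi (by rw [h]; exact hi1A))).symm
  have T1 : q (update x j (o j)) = q (update X1 j (o j)) := Tq x X1 j (o j) hjA agQ1 h1.symm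
  have agF2 : ∀ i, i ∉ C → x i = X2 i := fun i hi => by
    rw [hX2]
    exact (upd2_off (fun h => hi (by rw [h]; exact hi1C)) (fun h => hi (by rw [h]; exact hjsC))).symm
  have T2 : f (update x j (o j)) = f (update X2 j (o j)) := Tf x X2 j (o j) hjC agF2 h2.symm
  have agF3 : ∀ i, i ∉ C → X1 i = W1 i := fun i hi => by
    rw [hW1]
    exact (upd2_off (fun h => hi (by rw [h]; exact hi1C)) (fun h => hi (by rw [h]; exact hjsC))).symm
  have T3 : f (update X1 j (o j)) = f (update W1 j (o j)) := Tf X1 W1 j (o j) hjC agF3 h3.symm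
  have agQ4 : ∀ i, i ∉ A → X2 i = V i := fun i hi => by
    rw [hV]
    exact (upd2_off (fun h => hi (by rw [h]; exact hi2A)) (fun h => hi (by rw [h]; exact hi1A))).symm
  have T4 : q (update X2 j (o j)) = q (update V j (o j)) := Tq X2 V j (o j) hjA agQ4 h4.symm
  have agF5 : ∀ i, i ∉ C → V i = W2 i := fun i hi => by
    rw [hW2]
    exact (upd2_off (fun h => hi (by rw [h]; exact hi1C)) (fun h => hi (by rw [h]; exact hjsC))).symm
  have T5 : f (update V j (o j)) = f (update W2 j (o j)) := Tf V W2 j (o j) hjC agF5 h5.symm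
  -- shell equalities on the hyperplane x_j = o_j
  have Sx : q (update x j (o j)) = f (update x j (o j)) := Sh _ j (update_self ..)
  have SX1 : q (update X1 j (o j)) = f (update X1 j (o j)) :=
    Sh _ i2 (by rw [update_of_ne hi2j, eX1i2])
  have SW1 : q (update W1 j (o j)) = f (update W1 j (o j)) :=
    Sh _ i1 (by rw [update_of_ne hi1j, eW1i1])
  have SX2 : q (update X2 j (o j)) = f (update X2 j (o j)) :=
    Sh _ i1 (by rw [update_of_ne hi1j, eX2i1])
  have SV : q (update V j (o j)) = f (update V j (o j)) :=
    Sh _ i2 (by rw [update_of_ne hi2j, eVi2])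
  have SW2 : q (update W2 j (o j)) = f (update W2 j (o j)) :=
    Sh _ i1 (by rw [update_of_ne hi1j, eW2i1])
  have hqw : q (update W1 j (o j)) = q (update W2 j (o j)) := by
    calc q (update W1 j (o j)) = f (update W1 j (o j)) := SW1
    _ = f (update X1 j (o j)) := T3.symm
    _ = q (update X1 j (o j)) := SX1.symm
    _ = q (update x j (o j)) := T1.symm
    _ = f (update x j (o j)) := Sx
    _ = f (update X2 j (o j)) := T2
    _ = q (update X2 j (o j)) := SX2.symm
    _ = q (update V j (o j)) := T4
    _ = f (update V j (o j)) := SV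
    _ = f (update W2 j (o j)) := T5
    _ = q (update W2 j (o j)) := SW2.symm
  have hE1 : update W1 j (o j)
      = update (update (update (update x i2 (o i2)) i1 (o i1)) j (o j)) js r2 := by
    rw [hW1, hX1]
    funext i
    simp only [update_apply]
    split_ifs <;> simp_all
  have hE2 : update W2 j (o j)
      = update (update (update (update x i2 (o i2)) i1 (o i1)) j (o j)) js r3 := by
    rw [hW2, hV, hX2]
    funext i
    simp only [update_apply]
    split_ifs <;> simp_all
  have r23 : r2 = r3 := Injq _ js r2 r3 (by rw [← hE1, ← hE2]; exact hqw)
  have hW12 : W1 = W2 := by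
    rw [hW1, hW2, hV, hX2, hX1, r23]
    funext i
    simp only [update_apply]
    split_ifs <;> simp_all
  calc q x = q X1 := h1.symm
  _ = f X1 := Sh X1 i2 eX1i2
  _ = f W1 := h3.symm
  _ = q W1 := (Sh W1 i1 eW1i1).symm
  _ = q W2 := by rw [hW12]
  _ = f W2 := Sh W2 i1 eW2i1
  _ = f V := h5
  _ = q V := (Sh V i2 eVi2).symm
  _ = q X2 := h4
  _ = f X2 := Sh X2 i1 eX2i1
  _ = f x := h2

theorem engine (hn : 4 ≤ n)
    (Mq : Move q A) (Tq : Transfer q A) (Mf : Move f C) (Tf : Transfer f C)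
    (Injq : Inj q) (Sh : ∀ x i, x i = o i → q x = f x)
    (hA2 : 2 ≤ A.card) (hAn : A.card < n) (hC2 : 2 ≤ C.card) (hCn : C.card < n) :
    ∀ x, q x = f x := by
  have Sh' : ∀ x i, x i = o i → f x = q x := fun x i h => (Sh x i h).symm
  have hcompl : ∀ (B : Finset (Fin n)), B.card < n → ∃ j, j ∉ B := by
    intro B hB
    have hpos : 0 < Bᶜ.card := by rw [Finset.card_compl, Fintype.card_fin]; omega
    obtain ⟨j, hj⟩ := Finset.card_pos.mp hpos
    exact ⟨j, Finset.mem_compl.mp hj⟩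
  by_cases hb : (A \ C).Nonempty
  · by_cases hc : (C \ A).Nonempty
    · by_cases ha : (A ∩ C).Nonempty
      · obtain ⟨i1, hi1⟩ := ha
        obtain ⟨i2, hi2⟩ := hb
        obtain ⟨js, hjs⟩ := hc
        rw [Finset.mem_inter] at hi1
        rw [Finset.mem_sdiff] at hi2 hjs
        by_cases hd : ((A ∪ C)ᶜ : Finset (Fin n)).Nonempty
        · obtain ⟨j, hj⟩ := hd
          rw [Finset.mem_compl, Finset.mem_union] at hj
          push_neg at hj
          exact caseCore Mq Tq Mf Tf Injq Sh hi1.1 hi1.2 hi2.1 hi2.2 hjs.1 hjs.2 hj.1 hj.2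
        · have hd0 : ((A ∪ C)ᶜ : Finset (Fin n)).card = 0 := by
            rw [Finset.card_eq_zero, ← Finset.not_nonempty_iff_eq_empty]
            exact hd
          have hun : (A ∪ C).card = n := by
            have h1 := Finset.card_compl (A ∪ C)
            have h2 : (A ∪ C).card ≤ n := by
              have h3 := Finset.card_le_univ (A ∪ C)
              rwa [Fintype.card_fin] at h3
            rw [Fintype.card_fin] at h1
            omega
          by_cases hc2 : 2 ≤ (C \ A).card
          · obtain ⟨j, hj, j2, hj2, hjj⟩ := Finset.one_lt_card.mp (by omega : 1 < (C \ A).card)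
            rw [Finset.mem_sdiff] at hj hj2
            exact caseL4 Mq Tq Mf Tf Sh hi1.1 hi1.2 hi2.1 hi2.2 hj.1 hj.2 hj2.1 hj2.2 hjj
          · by_cases hb2 : 2 ≤ (A \ C).card
            · obtain ⟨j, hj, j2, hj2, hjj⟩ := Finset.one_lt_card.mp (by omega : 1 < (A \ C).card)
              rw [Finset.mem_sdiff] at hj hj2
              exact fun x =>
                (caseL4 Mf Tf Mq Tq Sh' hi1.2 hi1.1 hjs.1 hjs.2 hj.1 hj.2 hj2.1 hj2.2 hjj x).symm
            · have h1 := Finset.card_union_add_card_inter A C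
              have h2 := Finset.card_inter_add_card_sdiff A C
              have h3 := Finset.card_inter_add_card_sdiff C A
              rw [Finset.inter_comm C A] at h3
              obtain ⟨i1', hi1', i2', hi2', h12'⟩ :=
                Finset.one_lt_card.mp (by omega : 1 < (A ∩ C).card)
              rw [Finset.mem_inter] at hi1' hi2'
              obtain ⟨j, hj⟩ := hcompl A hAn
              exact caseL3 Mq Tq Tf Sh hi1'.1 hi1'.2 hi2'.1 hi2'.2 h12' hi2.1 hi2.2 hj
      · have hdisj : ∀ i, i ∈ A → i ∉ C := fun i hiA hiC =>
          ha ⟨i, Finset.mem_inter.mpr ⟨hiA, hiC⟩⟩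
        have hdisj' : ∀ i, i ∈ C → i ∉ A := fun i hiC hiA => hdisj i hiA hiC
        obtain ⟨i1, hi1, i2, hi2, h12⟩ := Finset.one_lt_card.mp (by omega : 1 < A.card)
        obtain ⟨j1, hj1, j2, hj2, hj12⟩ := Finset.one_lt_card.mp (by omega : 1 < C.card)
        exact caseL2 Mq Tq Mf Tf Sh hi1 (hdisj _ hi1) hi2 (hdisj _ hi2) h12
          hj1 (hdisj' _ hj1) hj2 (hdisj' _ hj2) hj12
    · have hsub : C ⊆ A := by
        rw [← Finset.sdiff_eq_empty_iff_subset]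
        exact Finset.not_nonempty_iff_eq_empty.mp hc
      obtain ⟨i1, hi1, i2, hi2, h12⟩ := Finset.one_lt_card.mp (by omega : 1 < C.card)
      obtain ⟨is, his⟩ := hb
      rw [Finset.mem_sdiff] at his
      obtain ⟨j, hj⟩ := hcompl A hAn
      exact caseL3 Mq Tq Tf Sh (hsub hi1) hi1 (hsub hi2) hi2 h12 his.1 his.2 hj
  · have hsub : A ⊆ C := by
      rw [← Finset.sdiff_eq_empty_iff_subset]
      exact Finset.not_nonempty_iff_eq_empty.mp hb
    by_cases hc : (C \ A).Nonempty
    · obtain ⟨i1, hi1, i2, hi2, h12⟩ := Finset.one_lt_card.mp (by omega : 1 < A.card)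
      obtain ⟨is, his⟩ := hc
      rw [Finset.mem_sdiff] at his
      obtain ⟨j, hj⟩ := hcompl C hCn
      exact fun x =>
        (caseL3 Mf Tf Tq Sh' (hsub hi1) hi1 (hsub hi2) hi2 h12 his.1 his.2 hj x).symm
    · have hsub2 : C ⊆ A := by
        rw [← Finset.sdiff_eq_empty_iff_subset]
        exact Finset.not_nonempty_iff_eq_empty.mp hc
      obtain ⟨i1, hi1, i2, hi2, h12⟩ := Finset.one_lt_card.mp (by omega : 1 < A.card)
      obtain ⟨j, hj⟩ := hcompl A hAn
      exact caseL1 Mq Tq Tf Sh hi1 (hsub hi1) hi2 (hsub hi2) h12 hj (fun h => hj (hsub2 h))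

end NQGaux

theorem reducible_reconstruction_from_shell {S : Type*} [Nonempty S] {n : ℕ} (hn : 4 ≤ n)
    (q f : (Fin n → S) → S)
    (hq : IsNQuasigroup q) (hf : IsNQuasigroup f)
    (hqr : IsPermutablyReducible q) (hfr : IsPermutablyReducible f)
    (o : Fin n → S)
    (hyp : ∀ (i : Fin n) (x : Fin n → S),
      q (Function.update x i (o i)) = f (Function.update x i (o i))) :
    ∀ x : Fin n → S, q x = f x := by
  obtain ⟨A, hA2, hAn, MqA, TqA⟩ := NQGaux.exists_split hqr
  obtain ⟨C, hC2, hCn, MfC, TfC⟩ := NQGaux.exists_split hfr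
  have Sh : ∀ (x : Fin n → S) (i : Fin n), x i = o i → q x = f x := by
    intro x i hxi
    have h := hyp i x
    rwa [← hxi, Function.update_eq_self] at h
  exact NQGaux.engine hn MqA TqA MfC TfC (NQGaux.inj_of_quasigroup hq) Sh hA2 hAn hC2 hCn
end

section
/- Let n ≥ m ≥ 2 with m < n, let Σ be a nonempty set, let h be an (n−m+1)-ary quasigroup on Σ and g an m-ary quasigroup on Σ, and let ō ∈ Σ^{m−1}, θ̄ ∈ Σ^{n−m}. Define f(x, ȳ, z̄) = h(g(x, ȳ), z̄) for x ∈ Σ, ȳ ∈ Σ^{m−1}, z̄ ∈ Σ^{n−m}, and set h_0(x, z̄) = f(x, ō, z̄), g_0(x, ȳ) = f(x, ȳ, θ̄), and δ(x) = f(x, ō, θ̄). Then δ is a bijection of Σ and f(x, ȳ, z̄) = h_0(δ^{−1}(g_0(x, ȳ)), z̄) for all x, ȳ, z̄. -/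
/-- A reducible n-ary quasigroup `f(x,ȳ,z̄) = h(g(x,ȳ),z̄)` can be represented by
the superposition of its retracts: `f(x,ȳ,z̄) = h₀(δ⁻¹(g₀(x,ȳ)),z̄)`. -/
theorem reducible_representation_by_retracts {S : Type*} [Nonempty S] {n m : ℕ}
    (hm : 2 ≤ m) (hmn : m < n)
    (h : (Fin (n - m + 1) → S) → S) (g : (Fin m → S) → S)
    (hh : IsNQuasigroup h) (hg : IsNQuasigroup g)
    (o : Fin (m - 1) → S) (θ : Fin (n - m) → S)
    (f : S → (Fin (m - 1) → S) → (Fin (n - m) → S) → S)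
    (hf : ∀ x y z, f x y z = h (Fin.cons (g fun j => (Fin.cons x y : Fin (m - 1 + 1) → S) (Fin.cast (show m = m - 1 + 1 by omega) j)) z))
    (h0 : S → (Fin (n - m) → S) → S) (hh0 : ∀ x z, h0 x z = f x o z)
    (g0 : S → (Fin (m - 1) → S) → S) (hg0 : ∀ x y, g0 x y = f x y θ)
    (δ : S → S) (hδ : ∀ x, δ x = f x o θ) :
    Function.Bijective δ ∧
      ∀ x y z, f x y z = h0 (Function.invFun δ (g0 x y)) z := by
  have hm0 : 0 < m := by omega
  have hcast : m = m - 1 + 1 := by omega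
  -- G y a := g (cons a y ∘ cast)
  set G : (Fin (m - 1) → S) → S → S := fun y a =>
    g fun j => (Fin.cons a y : Fin (m - 1 + 1) → S) (Fin.cast hcast j) with hG
  have upd_eq : ∀ (y : Fin (m - 1) → S) (x a : S),
      Function.update (fun j => (Fin.cons x y : Fin (m - 1 + 1) → S) (Fin.cast hcast j))
        ⟨0, hm0⟩ a = fun j => (Fin.cons a y : Fin (m - 1 + 1) → S) (Fin.cast hcast j) := by
    intro y x a
    funext j
    by_cases hj : j = ⟨0, hm0⟩
    · subst hj
      rw [Function.update_self]
      have : (Fin.cast hcast ⟨0, hm0⟩ : Fin (m - 1 + 1)) = 0 := rfl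
      rw [this, Fin.cons_zero]
    · rw [Function.update_of_ne hj]
      have hne : (Fin.cast hcast j : Fin (m - 1 + 1)) ≠ 0 := by
        simp only [Fin.ne_iff_vne] at hj ⊢
        simpa using hj
      obtain ⟨k, hk⟩ := Fin.eq_succ_of_ne_zero hne
      rw [hk, Fin.cons_succ, Fin.cons_succ]
  have Gbij : ∀ y : Fin (m - 1) → S, Function.Bijective (G y) := by
    intro y
    have := hg ⟨0, hm0⟩ (fun j =>
      (Fin.cons (Classical.arbitrary S) y : Fin (m - 1 + 1) → S) (Fin.cast hcast j))
    have heq : (fun a => g (Function.update (fun j =>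
        (Fin.cons (Classical.arbitrary S) y : Fin (m - 1 + 1) → S) (Fin.cast hcast j))
        ⟨0, hm0⟩ a)) = G y := by
      funext a
      rw [upd_eq]
    rwa [heq] at this
  -- H u := h (cons u θ)
  have Hbij : Function.Bijective (fun u => h (Fin.cons u θ)) := by
    have := hh 0 (Fin.cons (Classical.arbitrary S) θ)
    have heq : (fun a => h (Function.update (Fin.cons (Classical.arbitrary S) θ) 0 a))
        = fun u => h (Fin.cons u θ) := by
      funext a
      rw [Fin.update_cons_zero]
    rwa [heq] at this
  have hδeq : δ = (fun u => h (Fin.cons u θ)) ∘ G o := by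
    funext x
    simp only [Function.comp_apply, hδ, hf, hG]
  have δbij : Function.Bijective δ := by
    rw [hδeq]; exact Hbij.comp (Gbij o)
  refine ⟨δbij, fun x y z => ?_⟩
  obtain ⟨t, ht⟩ := (Gbij o).surjective (G y x)
  have hδt : δ t = g0 x y := by
    rw [hδeq, hg0, hf]
    simp only [Function.comp_apply]
    rw [ht]
  have hinv : Function.invFun δ (g0 x y) = t := by
    rw [← hδt]
    exact Function.leftInverse_invFun δbij.injective t
  rw [hinv, hh0, hf, hf]
  show h (Fin.cons (G y x) z) = h (Fin.cons (G o t) z)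
  rw [ht]
end

section
/- Let Σ be a nonempty set, let q_in, q_out, f_in, f_out : Σ^2 → Σ be (binary) quasigroups, define q(x_1,x_2,x_3) = q_out(x_1, q_in(x_2,x_3)) and f(x_1,x_2,x_3) = f_out(x_1, f_in(x_2,x_3)), and let (o_1,o_2,o_3) ∈ Σ^3. If q(o_1,x_2,x_3) = f(o_1,x_2,x_3) and q(x_1,o_2,x_3) = f(x_1,o_2,x_3) for all (x_1,x_2,x_3) ∈ Σ^3, then q(x̄) = f(x̄) for all x̄ ∈ Σ^3. -/
/-- A binary quasigroup on `S`: bijective in each argument when the other is fixed. -/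
def IsQuasigroupOp {S : Type*} (q : S → S → S) : Prop :=
  (∀ a : S, Function.Bijective (q a)) ∧ (∀ b : S, Function.Bijective fun a => q a b)

theorem sync_from_two_hyperplanes {S : Type*} [Nonempty S]
    (q_in q_out f_in f_out : S → S → S)
    (hqin : IsQuasigroupOp q_in) (hqout : IsQuasigroupOp q_out)
    (hfin : IsQuasigroupOp f_in) (hfout : IsQuasigroupOp f_out)
    (o₁ o₂ o₃ : S)
    (H1 : ∀ x₂ x₃ : S, q_out o₁ (q_in x₂ x₃) = f_out o₁ (f_in x₂ x₃))
    (H2 : ∀ x₁ x₃ : S, q_out x₁ (q_in o₂ x₃) = f_out x₁ (f_in o₂ x₃)) :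
    ∀ x₁ x₂ x₃ : S, q_out x₁ (q_in x₂ x₃) = f_out x₁ (f_in x₂ x₃) := by
  intro x₁ x₂ x₃
  obtain ⟨x₃', hx₃'⟩ := (hqin.1 o₂).2 (q_in x₂ x₃)
  have h := H2 x₁ x₃'
  rw [hx₃'] at h
  rw [h]
  congr 1
  apply (hfout.1 o₁).1
  rw [← H1 o₂ x₃', ← H1 x₂ x₃, hx₃']
end

section
/- Let k ≥ 2r with r ≥ 1 and k − r odd, and let Σ = {0,…,k−1}, Ω = {0,…,r−1}. Define q_{k,r} : Σ^2 → Σ by: q_{k,r}(i,j) = (i+j) mod r for i,j < r; q_{k,r}(r+i, j) = ((i+j) mod (k−r)) + r for 0 ≤ i < k−r, j < r; q_{k,r}(i, r+j) = ((2i+j) mod (k−r)) + r for i < r, 0 ≤ j < k−r; and q_{k,r}(r+i, r+j) = (i−j) mod (k−r) if (i−j) mod (k−r) < r, and ((2i−j) mod (k−r)) + r otherwise, for 0 ≤ i,j < k−r. Then q_{k,r} is a binary quasigroup on Σ (a Latin square of order k) and it is Ω-closed. -/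
/-- A binary quasigroup `q` on `S` is `Ω`-closed: it maps `Ω²` into `Ω` and the
restriction `q|_{Ω²}` is a binary quasigroup on `Ω`. -/
def IsOmegaClosed2 {S : Type*} (Ω : Set S) (q : S → S → S) : Prop :=
  ∃ hmem : ∀ a b : S, a ∈ Ω → b ∈ Ω → q a b ∈ Ω,
    IsQuasigroupOp fun a b : Ω => (⟨q a b, hmem a b a.2 b.2⟩ : Ω)

/-- The formula defining the quasigroup `q_{k,r}` on `{0,…,k-1}` (here values are
computed in `ℕ`; subtraction modulo `k - r` is realized by adding `k - r` first). -/
def qkrFormula (k r a b : ℕ) : ℕ :=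
  if a < r then
    if b < r then (a + b) % r
    else (2 * a + (b - r)) % (k - r) + r
  else
    if b < r then ((a - r) + b) % (k - r) + r
    else
      if ((a - r) + (k - r) - (b - r)) % (k - r) < r then
        ((a - r) + (k - r) - (b - r)) % (k - r)
      else
        (2 * (a - r) + (k - r) - (b - r)) % (k - r) + r


private lemma qkr_cancel1 {M x y : ℕ} (hx : x < M) (hy : y < M) (h : x % M = y % M) : x = y := by
  rwa [Nat.mod_eq_of_lt hx, Nat.mod_eq_of_lt hy] at h

private lemma qkr_cancel2 {M x y : ℕ} (hM : Odd M) (hx : x < M) (hy : y < M)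
    (h : (2 * x) % M = (2 * y) % M) : x = y :=
  qkr_cancel1 hx hy (Nat.ModEq.cancel_left_of_coprime (Nat.coprime_two_right.mpr hM) h)

/-- From `X ≡ Y [MOD M]`, shifting both sides (by `t1, t2` with `t1 ≡ t2`) to a common
form `c + u`, `c + v`, deduce `u ≡ v [MOD M]`. -/
private lemma qkr_extract {M X Y c u v t1 t2 : ℕ} (h : X % M = Y % M) (ht : t1 % M = t2 % M)
    (h1 : X + t1 = c + u) (h2 : Y + t2 = c + v) : u % M = v % M := by
  have hA : (X + t1) % M = (Y + t2) % M := Nat.ModEq.add h ht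
  rw [h1, h2] at hA
  exact Nat.ModEq.add_left_cancel' c hA

private lemma qkr_bnd1 {r k x : ℕ} (hr : 0 < r) (hrk : r ≤ k) : x % r < k :=
  lt_of_lt_of_le (Nat.mod_lt _ hr) hrk

private lemma qkr_bnd2 {r k x : ℕ} (hm : 0 < k - r) : x % (k - r) + r < k := by
  have := Nat.mod_lt x hm; omega

private lemma qkr_bnd3 {r k x : ℕ} (hm : 0 < k - r) : x % (k - r) < k := by
  have := Nat.mod_lt x hm; omega

theorem qkr_isQuasigroup_and_omegaClosed {k r : ℕ} (hr : 1 ≤ r) (hkr : 2 * r ≤ k)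
    (hodd : Odd (k - r)) :
    ∃ Q : Fin k → Fin k → Fin k,
      (∀ i j : Fin k, (Q i j : ℕ) = qkrFormula k r i j) ∧
      IsQuasigroupOp Q ∧
      IsOmegaClosed2 {i : Fin k | (i : ℕ) < r} Q := by
  have hr0 : 0 < r := hr
  have hm0 : 0 < k - r := hodd.pos
  have hrm : r ≤ k - r := by omega
  have hbound : ∀ a b : ℕ, qkrFormula k r a b < k := by
    intro a b
    unfold qkrFormula
    split_ifs <;>
      first
        | exact qkr_bnd1 hr0 (by omega)
        | exact qkr_bnd2 hm0
        | exact qkr_bnd3 hm0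
  refine ⟨fun a b => ⟨qkrFormula k r a b, hbound a b⟩, fun _ _ => rfl, ⟨?_, ?_⟩, ?_⟩
  · -- rows
    intro a
    rw [← Finite.injective_iff_bijective]
    intro b1 b2 hE
    have h : qkrFormula k r ↑a ↑b1 = qkrFormula k r ↑a ↑b2 := congrArg Fin.val hE
    have hA := a.isLt; have hB1 := b1.isLt; have hB2 := b2.isLt
    apply Fin.ext
    unfold qkrFormula at h
    split_ifs at h with c1 c2 c3 c4 c5 c6 c7 c8 c9 c10 c11
    · -- R1 : a<r, b1<r, b2<r
      have e := qkr_extract (c := (a : ℕ)) (u := (b1 : ℕ)) (v := (b2 : ℕ)) (t1 := 0) (t2 := 0)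
        h rfl (by omega) (by omega)
      exact qkr_cancel1 c2 c3 e
    · -- R2 : b1<r, b2≥r
      have := Nat.mod_lt ((a : ℕ) + (b1 : ℕ)) hr0; omega
    · -- R3
      have := Nat.mod_lt ((a : ℕ) + (b2 : ℕ)) hr0; omega
    · -- R4 : a<r, b1≥r, b2≥r
      have h' := Nat.add_right_cancel h
      have e := qkr_extract (c := 2 * (a : ℕ)) (u := (b1 : ℕ) - r) (v := (b2 : ℕ) - r)
        (t1 := 0) (t2 := 0) h' rfl (by omega) (by omega)
      have := qkr_cancel1 (by omega) (by omega) e; omega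
    · -- R5 : a≥r, b1<r, b2<r
      have h' := Nat.add_right_cancel h
      have e := qkr_extract (c := (a : ℕ) - r) (u := (b1 : ℕ)) (v := (b2 : ℕ))
        (t1 := 0) (t2 := 0) h' rfl (by omega) (by omega)
      exact qkr_cancel1 (by omega) (by omega) e
    · -- R6 : a≥r, b1<r, b2≥r, T2<r : ranges disjoint
      omega
    · -- R7 : a≥r, b1<r, b2≥r, T2≥r
      have h' := Nat.add_right_cancel h
      have e := qkr_extract (c := ((a : ℕ) - r) + ((b2 : ℕ) - r)) (u := (b1 : ℕ))
        (v := (a : ℕ) - r + (k - r) - ((b2 : ℕ) - r)) (t1 := (b2 : ℕ) - r) (t2 := (b2 : ℕ) - r)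
        h' rfl (by omega) (by omega)
      rw [Nat.mod_eq_of_lt (show (b1 : ℕ) < k - r by omega)] at e
      omega
    · -- R8 : a≥r, b1≥r, T1<r, b2<r
      omega
    · -- R9 : T1<r, b2≥r, T2<r
      have e := qkr_extract (c := (a : ℕ) - r + (k - r)) (u := (b2 : ℕ) - r) (v := (b1 : ℕ) - r)
        (t1 := ((b1 : ℕ) - r) + ((b2 : ℕ) - r)) (t2 := ((b1 : ℕ) - r) + ((b2 : ℕ) - r))
        h rfl (by omega) (by omega)
      have := qkr_cancel1 (by omega) (by omega) e; omega
    · -- R10 : T1<r, b2≥r, T2≥r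
      omega
    · -- R11 : T1≥r, b2<r
      have h' := Nat.add_right_cancel h
      have e := qkr_extract (c := ((a : ℕ) - r) + ((b1 : ℕ) - r))
        (u := (a : ℕ) - r + (k - r) - ((b1 : ℕ) - r)) (v := (b2 : ℕ))
        (t1 := (b1 : ℕ) - r) (t2 := (b1 : ℕ) - r) h' rfl (by omega) (by omega)
      rw [Nat.mod_eq_of_lt (show (b2 : ℕ) < k - r by omega)] at e
      omega
    · -- R12 : T1≥r, b2≥r, T2<r
      omega
    · -- R13 : T1≥r, b2≥r, T2≥r
      have h' := Nat.add_right_cancel h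
      have e := qkr_extract (c := 2 * ((a : ℕ) - r) + (k - r)) (u := (b2 : ℕ) - r)
        (v := (b1 : ℕ) - r) (t1 := ((b1 : ℕ) - r) + ((b2 : ℕ) - r))
        (t2 := ((b1 : ℕ) - r) + ((b2 : ℕ) - r)) h' rfl (by omega) (by omega)
      have := qkr_cancel1 (by omega) (by omega) e; omega
  · -- columns
    intro b
    rw [← Finite.injective_iff_bijective]
    intro a1 a2 hE
    have h : qkrFormula k r ↑a1 ↑b = qkrFormula k r ↑a2 ↑b := congrArg Fin.val hE
    have hB := b.isLt; have hA1 := a1.isLt; have hA2 := a2.isLt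
    apply Fin.ext
    unfold qkrFormula at h
    split_ifs at h with c1 c2 c3 c4 c5 c6 c7 c8 c9 c10 c11
    · -- C1 : a1<r, b<r, a2<r
      have e := qkr_extract (c := (b : ℕ)) (u := (a1 : ℕ)) (v := (a2 : ℕ)) (t1 := 0) (t2 := 0)
        h rfl (by omega) (by omega)
      exact qkr_cancel1 c1 c3 e
    · -- C2 : a1<r, b<r, a2≥r
      have := Nat.mod_lt ((a1 : ℕ) + (b : ℕ)) hr0; omega
    · -- C3 : a1<r, b≥r, a2<r
      have h' := Nat.add_right_cancel h
      have e := qkr_extract (c := (b : ℕ) - r) (u := 2 * (a1 : ℕ)) (v := 2 * (a2 : ℕ))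
        (t1 := 0) (t2 := 0) h' rfl (by omega) (by omega)
      exact qkr_cancel2 hodd (by omega) (by omega) e
    · -- C4 : a1<r, b≥r, a2≥r, T2<r
      omega
    · -- C5 : a1<r, b≥r, a2≥r, T2≥r
      have h' := Nat.add_right_cancel h
      have e := qkr_extract (c := 2 * ((b : ℕ) - r)) (u := 2 * (a1 : ℕ))
        (v := 2 * ((a2 : ℕ) - r + (k - r) - ((b : ℕ) - r)))
        (t1 := (b : ℕ) - r) (t2 := (k - r) + ((b : ℕ) - r))
        h' (Nat.add_mod_left _ _).symm (by omega) (by omega)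
      have e2 := e.trans
        (Nat.ModEq.symm (Nat.ModEq.mul_left 2
          (Nat.mod_modEq ((a2 : ℕ) - r + (k - r) - ((b : ℕ) - r)) (k - r))))
      have := qkr_cancel2 hodd (by omega) (Nat.mod_lt _ hm0) e2
      omega
    · -- C6 : a1≥r, b<r, a2<r
      have := Nat.mod_lt ((a2 : ℕ) + (b : ℕ)) hr0; omega
    · -- C7 : a1≥r, b<r, a2≥r
      have h' := Nat.add_right_cancel h
      have e := qkr_extract (c := (b : ℕ)) (u := (a1 : ℕ) - r) (v := (a2 : ℕ) - r)
        (t1 := 0) (t2 := 0) h' rfl (by omega) (by omega)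
      have := qkr_cancel1 (by omega) (by omega) e; omega
    · -- C8 : a1≥r, b≥r, T1<r, a2<r
      omega
    · -- C9 : T1<r, a2≥r, T2<r
      have e := qkr_extract (c := k - r) (u := (a1 : ℕ) - r) (v := (a2 : ℕ) - r)
        (t1 := (b : ℕ) - r) (t2 := (b : ℕ) - r) h rfl (by omega) (by omega)
      have := qkr_cancel1 (by omega) (by omega) e; omega
    · -- C10 : T1<r, a2≥r, T2≥r
      omega
    · -- C11 : T1≥r, a2<r
      have h' := Nat.add_right_cancel h
      have e := qkr_extract (c := 2 * ((b : ℕ) - r))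
        (u := 2 * ((a1 : ℕ) - r + (k - r) - ((b : ℕ) - r))) (v := 2 * (a2 : ℕ))
        (t1 := (k - r) + ((b : ℕ) - r)) (t2 := (b : ℕ) - r)
        h' (Nat.add_mod_left _ _) (by omega) (by omega)
      have e2 := (Nat.ModEq.mul_left 2
        (Nat.mod_modEq ((a1 : ℕ) - r + (k - r) - ((b : ℕ) - r)) (k - r))).trans e
      have := qkr_cancel2 hodd (Nat.mod_lt _ hm0) (by omega) e2
      omega
    · -- C12 : T1≥r, a2≥r, T2<r
      omega
    · -- C13 : T1≥r, a2≥r, T2≥r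
      have h' := Nat.add_right_cancel h
      have e := qkr_extract (c := k - r) (u := 2 * ((a1 : ℕ) - r)) (v := 2 * ((a2 : ℕ) - r))
        (t1 := (b : ℕ) - r) (t2 := (b : ℕ) - r) h' rfl (by omega) (by omega)
      have := qkr_cancel2 hodd (by omega) (by omega) e; omega
  · -- Omega closed
    have hmem : ∀ a b : Fin k, a ∈ {i : Fin k | (i : ℕ) < r} → b ∈ {i : Fin k | (i : ℕ) < r} →
        (⟨qkrFormula k r a b, hbound a b⟩ : Fin k) ∈ {i : Fin k | (i : ℕ) < r} := by
      intro a b ha hb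
      show qkrFormula k r ↑a ↑b < r
      unfold qkrFormula
      rw [if_pos (show ((a : Fin k) : ℕ) < r from ha), if_pos (show ((b : Fin k) : ℕ) < r from hb)]
      exact Nat.mod_lt _ hr0
    refine ⟨hmem, ?_, ?_⟩
    · intro a
      rw [← Finite.injective_iff_bijective]
      intro b1 b2 hE
      have h : qkrFormula k r ↑↑a ↑↑b1 = qkrFormula k r ↑↑a ↑↑b2 :=
        congrArg (fun x : {i : Fin k | (i : ℕ) < r} => ((x : Fin k) : ℕ)) hE
      unfold qkrFormula at h
      rw [if_pos (show (((a : Fin k)) : ℕ) < r from a.2), if_pos (show (((b1 : Fin k)) : ℕ) < r from b1.2)] at h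
      rw [if_pos (show (((a : Fin k)) : ℕ) < r from a.2), if_pos (show (((b2 : Fin k)) : ℕ) < r from b2.2)] at h
      have e := qkr_extract (c := ((a : Fin k) : ℕ)) (u := ((b1 : Fin k) : ℕ))
        (v := ((b2 : Fin k) : ℕ)) (t1 := 0) (t2 := 0) h rfl (by omega) (by omega)
      exact Subtype.ext (Fin.ext (qkr_cancel1 b1.2 b2.2 e))
    · intro b
      rw [← Finite.injective_iff_bijective]
      intro a1 a2 hE
      have h : qkrFormula k r ↑↑a1 ↑↑b = qkrFormula k r ↑↑a2 ↑↑b :=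
        congrArg (fun x : {i : Fin k | (i : ℕ) < r} => ((x : Fin k) : ℕ)) hE
      unfold qkrFormula at h
      rw [if_pos (show (((a1 : Fin k)) : ℕ) < r from a1.2), if_pos (show (((b : Fin k)) : ℕ) < r from b.2)] at h
      rw [if_pos (show (((a2 : Fin k)) : ℕ) < r from a2.2), if_pos (show (((b : Fin k)) : ℕ) < r from b.2)] at h
      have e := qkr_extract (c := ((b : Fin k) : ℕ)) (u := ((a1 : Fin k) : ℕ))
        (v := ((a2 : Fin k) : ℕ)) (t1 := 0) (t2 := 0) h rfl (by omega) (by omega)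
      exact Subtype.ext (Fin.ext (qkr_cancel1 a1.2 a2.2 e))
end

section
/- Let q : Σ^n → Σ be an Ω-closed n-ary quasigroup with subquasigroup g = q|_{Ω^n} : Ω^n → Ω, where Ω ⊆ Σ, and let h : Ω^n → Ω be an arbitrary n-ary quasigroup on Ω. Then the function f : Σ^n → Σ defined by f(x̄) = h(x̄) if x̄ ∈ Ω^n and f(x̄) = q(x̄) otherwise is an n-ary quasigroup on Σ. -/
/-- Switching a subquasigroup: replacing the values of an `Ω`-closed `n`-ary
quasigroup on `Ω^n` by another `n`-ary quasigroup on `Ω` again yields an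
`n`-ary quasigroup on `S`. -/
theorem switching_subquasigroup {S : Type*} {n : ℕ} (Ω : Set S) [DecidablePred (· ∈ Ω)]
    (q : (Fin n → S) → S) (hq : IsNQuasigroup q)
    (hmem : ∀ x : Fin n → S, (∀ i, x i ∈ Ω) → q x ∈ Ω)
    (hsub : IsNQuasigroup fun x : Fin n → Ω =>
      (⟨q fun i => (x i : S), hmem _ fun i => (x i).2⟩ : Ω))
    (h : (Fin n → Ω) → Ω) (hh : IsNQuasigroup h)
    (f : (Fin n → S) → S)
    (hf : ∀ x : Fin n → S,
      f x = if hx : ∀ i, x i ∈ Ω then ↑(h fun i => ⟨x i, hx i⟩) else q x) :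
    IsNQuasigroup f := by
  intro i x
  by_cases hP : (∀ j, j ≠ i → x j ∈ Ω) ∧ ∃ ω, ω ∈ Ω
  · obtain ⟨hP, ω, hω⟩ := hP
    set x' : Fin n → Ω := fun j => if hj : j = i then ⟨ω, hω⟩ else ⟨x j, hP j hj⟩ with hx'
    have hx'eq : ∀ (a : Ω),
        (fun j => ((Function.update x' i a j : Ω) : S)) = Function.update x i (a : S) := by
      intro a
      funext j
      by_cases hj : j = i
      · subst hj; simp
      · simp [Function.update_of_ne hj, hx', dif_neg hj]
    have hall : ∀ a : S, (∀ k, Function.update x i a k ∈ Ω) ↔ a ∈ Ω := by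
      intro a
      constructor
      · intro hk; simpa using hk i
      · intro ha k
        by_cases hk : k = i
        · subst hk; simpa
        · rw [Function.update_of_ne hk]; exact hP k hk
    have hqbij := hq i x
    have hq_mapsΩ : ∀ a : Ω, q (Function.update x i (a : S)) ∈ Ω := fun a => by
      rw [← hx'eq a]; exact hmem _ fun k => (Function.update x' i a k).2
    have hsubbij' : Function.Bijective
        (fun a : Ω => (⟨q (Function.update x i (a : S)), hq_mapsΩ a⟩ : Ω)) := by
      have heq : (fun a : Ω => (⟨q (Function.update x i (a : S)), hq_mapsΩ a⟩ : Ω)) =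
          (fun a : Ω => (⟨q fun j => ((Function.update x' i a j : Ω) : S),
            hmem _ fun j => (Function.update x' i a j).2⟩ : Ω)) := by
        funext a
        exact Subtype.ext (congrArg q (hx'eq a).symm)
      rw [heq]; exact hsub i x'
    have hq_compl : ∀ a : S, a ∉ Ω → q (Function.update x i a) ∉ Ω := by
      intro a ha hmem'
      obtain ⟨c, hc⟩ := hsubbij'.2 ⟨_, hmem'⟩
      have hc' : q (Function.update x i (c : S)) = q (Function.update x i a) :=
        congrArg Subtype.val hc
      have : (c : S) = a := hqbij.1 hc'
      exact ha (this ▸ c.2)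
    have hg : ∀ a : S, f (Function.update x i a) =
        if ha : a ∈ Ω then ↑(h (Function.update x' i ⟨a, ha⟩))
        else q (Function.update x i a) := by
      intro a
      rw [hf]
      by_cases ha : a ∈ Ω
      · rw [dif_pos ((hall a).2 ha), dif_pos ha]
        congr 1
        apply congrArg
        funext k
        apply Subtype.ext
        by_cases hk : k = i
        · subst hk; simp
        · simp [Function.update_of_ne hk, hx', dif_neg hk]
      · rw [dif_neg (fun hc => ha ((hall a).1 hc)), dif_neg ha]
    constructor
    · intro a b hab
      have hab' : f (Function.update x i a) = f (Function.update x i b) := hab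
      by_cases ha : a ∈ Ω <;> by_cases hb : b ∈ Ω
      · rw [hg a, hg b, dif_pos ha, dif_pos hb] at hab'
        have h1 : h (Function.update x' i ⟨a, ha⟩) = h (Function.update x' i ⟨b, hb⟩) :=
          Subtype.coe_injective hab'
        exact congrArg Subtype.val ((hh i x').1 h1)
      · exfalso
        rw [hg a, hg b, dif_pos ha, dif_neg hb] at hab'
        exact hq_compl b hb (hab' ▸ (h (Function.update x' i ⟨a, ha⟩)).2)
      · exfalso
        rw [hg a, hg b, dif_neg ha, dif_pos hb] at hab'
        exact hq_compl a ha (hab'.symm ▸ (h (Function.update x' i ⟨b, hb⟩)).2)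
      · rw [hg a, hg b, dif_neg ha, dif_neg hb] at hab'
        exact hqbij.1 hab'
    · intro y
      by_cases hy : y ∈ Ω
      · obtain ⟨u, hu⟩ := (hh i x').2 ⟨y, hy⟩
        refine ⟨(u : S), ?_⟩
        show f (Function.update x i (u : S)) = y
        rw [hg, dif_pos u.2]
        have : (⟨(u : S), u.2⟩ : Ω) = u := rfl
        rw [this]
        exact congrArg Subtype.val hu
      · obtain ⟨a, ha⟩ := hqbij.2 y
        have ha' : q (Function.update x i a) = y := ha
        have haΩ : a ∉ Ω := fun hc => hy (ha' ▸ hq_mapsΩ ⟨a, hc⟩)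
        refine ⟨a, ?_⟩
        show f (Function.update x i a) = y
        rw [hg, dif_neg haΩ]
        exact ha'
  · have hnot : ∀ a : S, ¬ ∀ k, Function.update x i a k ∈ Ω := by
      intro a hk
      apply hP
      constructor
      · intro j hj
        have := hk j
        rwa [Function.update_of_ne hj] at this
      · exact ⟨a, by simpa using hk i⟩
    have heq : (fun a => f (Function.update x i a)) =
        fun a => q (Function.update x i a) :=
      funext fun a => by rw [hf, dif_neg (hnot a)]
    rw [heq]
    exact hq i x
end

section
/- Let f : Σ^n → Σ be a permutably reducible Ω-closed n-ary quasigroup, where Ω ⊆ Σ is nonempty and n ≥ 3. Then the subquasigroup f|_{Ω^n} : Ω^n → Ω is also permutably reducible. -/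
/-- Padding a `k`-tuple to an `n`-tuple via `σ`, filling with a default. -/
def padAux {S : Type*} {Ω : Set S} (ω : Ω) {n k : ℕ} (σ : Equiv.Perm (Fin n))
    (y : Fin k → Ω) (i : Fin n) : Ω :=
  if h1 : (σ.symm i).1 < k then y ⟨(σ.symm i).1, h1⟩ else ω

/-- Embedding an `(n-k+1)`-tuple into an `n`-tuple via `σ`, placing `es` of the
head at position `k-1` of the first block and the default elsewhere. -/
def embAux {S : Type*} {Ω : Set S} (ω : Ω) {n k : ℕ} (hk : k - 1 < k) (σ : Equiv.Perm (Fin n))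
    (es : Ω → Ω) (z : Fin (n - k + 1) → Ω) (i : Fin n) : Ω :=
  if h1 : (σ.symm i).1 < k then
    Function.update (fun _ : Fin k => ω) ⟨k - 1, hk⟩ (es (z 0)) ⟨(σ.symm i).1, h1⟩
  else z ⟨min ((σ.symm i).1 - k + 1) (n - k), Nat.lt_succ_of_le (Nat.min_le_right _ _)⟩

/-- A subquasigroup of a permutably reducible `n`-ary quasigroup is permutably
reducible. -/
theorem subquasigroup_of_reducible_is_reducible {S : Type*} {n : ℕ} (hn : 3 ≤ n)
    (Ω : Set S) (hΩ : Ω.Nonempty)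
    (f : (Fin n → S) → S) (hf : IsNQuasigroup f) (hred : IsPermutablyReducible f)
    (hmem : ∀ x : Fin n → S, (∀ i, x i ∈ Ω) → f x ∈ Ω)
    (hsub : IsNQuasigroup fun x : Fin n → Ω =>
      (⟨f fun i => (x i : S), hmem _ fun i => (x i).2⟩ : Ω)) :
    IsPermutablyReducible fun x : Fin n → Ω =>
      (⟨f fun i => (x i : S), hmem _ fun i => (x i).2⟩ : Ω) := by
  classical
  obtain ⟨k, hk1, hkn, σ, g, h, hgq, hhq, hdec⟩ := hred
  obtain ⟨w, hw⟩ := hΩ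
  have hkm : k - 1 < k := by omega
  have hk1n : k - 1 < n := by omega
  set ωΩ : Ω := (⟨w, hw⟩ : Ω) with hωdef
  set F : (Fin n → Ω) → Ω :=
    fun x => (⟨f fun i => (x i : S), hmem _ fun i => (x i).2⟩ : Ω) with hFdef
  -- basic facts about padAux
  have padσ1 : ∀ (y : Fin k → Ω) (j : Fin k),
      padAux ωΩ σ y (σ ⟨j.1, lt_trans j.2 hkn⟩) = y j := by
    intro y j
    unfold padAux
    rw [Equiv.symm_apply_apply, dif_pos j.2, Fin.eta]
  have padσ2 : ∀ (y : Fin k → Ω) (j : Fin (n - k)),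
      padAux ωΩ σ y (σ ⟨k + j.1, by have := j.2; omega⟩) = ωΩ := by
    intro y j
    unfold padAux
    rw [Equiv.symm_apply_apply, dif_neg (show ¬ (k + j.1 < k) by omega)]
  have padupd : ∀ (y : Fin k → Ω) (i : Fin k) (a : Ω),
      padAux ωΩ σ (Function.update y i a)
        = Function.update (padAux ωΩ σ y) (σ ⟨i.1, lt_trans i.2 hkn⟩) a := by
    intro y i a
    funext m
    unfold padAux
    by_cases hm : m = σ ⟨i.1, lt_trans i.2 hkn⟩
    · subst hm
      rw [Function.update_self, Equiv.symm_apply_apply, dif_pos i.2, Fin.eta,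
        Function.update_self]
    · rw [Function.update_of_ne hm]
      by_cases h1 : (σ.symm m).1 < k
      · rw [dif_pos h1, dif_pos h1, Function.update_of_ne]
        intro hc
        apply hm
        have hv : (σ.symm m) = (⟨i.1, lt_trans i.2 hkn⟩ : Fin n) := by
          apply Fin.ext
          simpa using congrArg Fin.val hc
        rw [← hv, Equiv.apply_symm_apply]
      · rw [dif_neg h1, dif_neg h1]
  -- G is a quasigroup
  have hG : IsNQuasigroup (fun y : Fin k → Ω => F (padAux ωΩ σ y)) := by
    intro i y
    have heq : (fun a : Ω => F (padAux ωΩ σ (Function.update y i a)))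
        = fun a => F (Function.update (padAux ωΩ σ y) (σ ⟨i.1, lt_trans i.2 hkn⟩) a) := by
      funext a; rw [padupd]
    show Function.Bijective fun a => F (padAux ωΩ σ (Function.update y i a))
    rw [heq]
    exact hsub _ _
  -- θ is injective
  have hθinj : Function.Injective
      (fun t : S => h (Fin.cons t fun _ : Fin (n - k) => (w : S))) := by
    intro a b hab
    have hi := (hhq 0 (Fin.cons a fun _ => (w : S))).injective
    apply hi
    show h (Function.update (Fin.cons a fun _ : Fin (n - k) => (w : S)) 0 a)
      = h (Function.update (Fin.cons a fun _ : Fin (n - k) => (w : S)) 0 b)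
    rw [Fin.update_cons_zero, Fin.update_cons_zero]
    exact hab
  -- value of G via θ and g
  have hGθ : ∀ y : Fin k → Ω,
      ((F (padAux ωΩ σ y) : Ω) : S)
        = h (Fin.cons (g fun j => (y j : S)) fun _ : Fin (n - k) => (w : S)) := by
    intro y
    show f (fun i => ((padAux ωΩ σ y i : Ω) : S)) = _
    rw [hdec]
    congr 1
    funext i
    refine Fin.cases ?_ ?_ i
    · rw [Fin.cons_zero, Fin.cons_zero]
      congr 1
      funext j
      show ((padAux ωΩ σ y (σ ⟨j.1, lt_trans j.2 hkn⟩) : Ω) : S) = _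
      rw [padσ1]
    · intro j
      rw [Fin.cons_succ, Fin.cons_succ]
      show ((padAux ωΩ σ y (σ ⟨k + j.1, _⟩) : Ω) : S) = (w : S)
      rw [padσ2]
  -- the bijection φ and its inverse
  have hφ : Function.Bijective
      (fun a : Ω => F (padAux ωΩ σ (Function.update (fun _ : Fin k => ωΩ) ⟨k - 1, hkm⟩ a))) :=
    hG ⟨k - 1, hkm⟩ (fun _ => ωΩ)
  set e : Ω ≃ Ω := Equiv.ofBijective _ hφ with hedef
  have hes : ∀ u : Ω,
      F (padAux ωΩ σ (Function.update (fun _ : Fin k => ωΩ) ⟨k - 1, hkm⟩ (e.symm u))) = u :=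
    fun u => e.apply_symm_apply u
  -- facts about embAux
  have embσ1 : ∀ (z : Fin (n - k + 1) → Ω) (j : Fin k),
      embAux ωΩ hkm σ e.symm z (σ ⟨j.1, lt_trans j.2 hkn⟩)
        = Function.update (fun _ : Fin k => ωΩ) ⟨k - 1, hkm⟩ (e.symm (z 0)) j := by
    intro z j
    have hc : ((σ.symm (σ ⟨j.1, lt_trans j.2 hkn⟩)).1 < k) := by
      rw [Equiv.symm_apply_apply]; exact j.2
    unfold embAux
    rw [dif_pos hc]
    have hidx : (⟨(σ.symm (σ ⟨j.1, lt_trans j.2 hkn⟩)).1, hc⟩ : Fin k) = j := by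
      apply Fin.ext
      show ((σ.symm (σ ⟨j.1, lt_trans j.2 hkn⟩)).1 : ℕ) = j.1
      rw [Equiv.symm_apply_apply]
    rw [hidx]
  have embσ2 : ∀ (z : Fin (n - k + 1) → Ω) (j : Fin (n - k)),
      embAux ωΩ hkm σ e.symm z (σ ⟨k + j.1, by have := j.2; omega⟩)
        = z ⟨j.1 + 1, by omega⟩ := by
    intro z j
    have hc : ¬ ((σ.symm (σ ⟨k + j.1, by have := j.2; omega⟩)).1 < k) := by
      rw [Equiv.symm_apply_apply]
      show ¬ (k + j.1 < k)
      omega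
    unfold embAux
    rw [dif_neg hc]
    congr 1
    apply Fin.ext
    show min ((σ.symm (σ ⟨k + j.1, _⟩)).1 - k + 1) (n - k) = j.1 + 1
    rw [Equiv.symm_apply_apply]
    show min (k + j.1 - k + 1) (n - k) = j.1 + 1
    have := j.2
    omega
  have embupd0 : ∀ (z : Fin (n - k + 1) → Ω) (a : Ω),
      embAux ωΩ hkm σ e.symm (Function.update z 0 a)
        = Function.update (embAux ωΩ hkm σ e.symm z) (σ ⟨k - 1, hk1n⟩) (e.symm a) := by
    intro z a
    funext m
    by_cases hm : m = σ ⟨k - 1, hk1n⟩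
    · subst hm
      rw [Function.update_self]
      have hc : ((σ.symm (σ ⟨k - 1, hk1n⟩)).1 < k) := by
        rw [Equiv.symm_apply_apply]; exact hkm
      unfold embAux
      rw [dif_pos hc]
      have hidx : (⟨(σ.symm (σ ⟨k - 1, hk1n⟩)).1, hc⟩ : Fin k) = ⟨k - 1, hkm⟩ := by
        apply Fin.ext
        show ((σ.symm (σ ⟨k - 1, hk1n⟩)).1 : ℕ) = k - 1
        rw [Equiv.symm_apply_apply]
      rw [hidx, Function.update_self, Function.update_self]
    · rw [Function.update_of_ne hm]
      unfold embAux
      by_cases h1 : (σ.symm m).1 < k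
      · rw [dif_pos h1, dif_pos h1]
        have h2 : (⟨(σ.symm m).1, h1⟩ : Fin k) ≠ ⟨k - 1, hkm⟩ := by
          intro hc
          apply hm
          have hv : (σ.symm m) = (⟨k - 1, hk1n⟩ : Fin n) := by
            apply Fin.ext
            simpa using congrArg Fin.val hc
          rw [← hv, Equiv.apply_symm_apply]
        rw [Function.update_of_ne h2, Function.update_of_ne h2]
      · rw [dif_neg h1, dif_neg h1, Function.update_of_ne]
        intro hc
        have hv : min ((σ.symm m).1 - k + 1) (n - k) = 0 := by
          simpa using congrArg Fin.val hc
        omega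
  have embupds : ∀ (z : Fin (n - k + 1) → Ω) (j : ℕ) (hj : j < n - k)
      (hkj : k + j < n) (hj1 : j + 1 < n - k + 1) (a : Ω),
      embAux ωΩ hkm σ e.symm (Function.update z ⟨j + 1, hj1⟩ a)
        = Function.update (embAux ωΩ hkm σ e.symm z) (σ ⟨k + j, hkj⟩) a := by
    intro z j hj hkj hj1 a
    funext m
    by_cases hm : m = σ ⟨k + j, hkj⟩
    · subst hm
      rw [Function.update_self]
      have hc : ¬ ((σ.symm (σ ⟨k + j, hkj⟩)).1 < k) := by
        rw [Equiv.symm_apply_apply]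
        show ¬ (k + j < k)
        omega
      unfold embAux
      rw [dif_neg hc]
      have hidx : (⟨min ((σ.symm (σ ⟨k + j, hkj⟩)).1 - k + 1) (n - k),
          Nat.lt_succ_of_le (Nat.min_le_right _ _)⟩ : Fin (n - k + 1)) = ⟨j + 1, hj1⟩ := by
        apply Fin.ext
        show min ((σ.symm (σ ⟨k + j, hkj⟩)).1 - k + 1) (n - k) = j + 1
        rw [Equiv.symm_apply_apply]
        show min (k + j - k + 1) (n - k) = j + 1
        omega
      rw [hidx, Function.update_self]
    · rw [Function.update_of_ne hm]
      unfold embAux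
      by_cases h1 : (σ.symm m).1 < k
      · rw [dif_pos h1, dif_pos h1]
        rw [Function.update_of_ne (show (0 : Fin (n - k + 1)) ≠ ⟨j + 1, hj1⟩ by
          intro hc
          have hv : (0 : ℕ) = j + 1 := by simpa using congrArg Fin.val hc
          omega)]
      · rw [dif_neg h1, dif_neg h1, Function.update_of_ne]
        intro hc
        apply hm
        have hv : min ((σ.symm m).1 - k + 1) (n - k) = j + 1 := by
          simpa using congrArg Fin.val hc
        have hb := (σ.symm m).2
        have hv2 : (σ.symm m) = (⟨k + j, hkj⟩ : Fin n) := by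
          apply Fin.ext
          show (σ.symm m).1 = k + j
          omega
        rw [← hv2, Equiv.apply_symm_apply]
  -- H' is a quasigroup
  have hH : IsNQuasigroup (fun z : Fin (n - k + 1) → Ω => F (embAux ωΩ hkm σ e.symm z)) := by
    intro i z
    obtain ⟨iv, hi⟩ := i
    show Function.Bijective fun a => F (embAux ωΩ hkm σ e.symm (Function.update z ⟨iv, hi⟩ a))
    cases iv with
    | zero =>
      have h0 : (⟨0, hi⟩ : Fin (n - k + 1)) = 0 := rfl
      have heq : (fun a : Ω => F (embAux ωΩ hkm σ e.symm (Function.update z ⟨0, hi⟩ a)))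
          = (fun b : Ω =>
              F (Function.update (embAux ωΩ hkm σ e.symm z) (σ ⟨k - 1, hk1n⟩) b)) ∘ e.symm := by
        funext a
        show F (embAux ωΩ hkm σ e.symm (Function.update z ⟨0, hi⟩ a)) = _
        rw [h0, embupd0]
        rfl
      rw [heq]
      exact (hsub _ _).comp e.symm.bijective
    | succ j =>
      have hj : j < n - k := by omega
      have hkj : k + j < n := by omega
      have heq : (fun a : Ω => F (embAux ωΩ hkm σ e.symm (Function.update z ⟨j + 1, hi⟩ a)))
          = fun a =>
              F (Function.update (embAux ωΩ hkm σ e.symm z) (σ ⟨k + j, hkj⟩) a) := by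
        funext a
        rw [embupds z j hj hkj hi]
      rw [heq]
      exact hsub _ _
  -- conclusion
  refine ⟨k, hk1, hkn, σ, (fun y : Fin k → Ω => F (padAux ωΩ σ y)),
    (fun z : Fin (n - k + 1) → Ω => F (embAux ωΩ hkm σ e.symm z)), hG, hH, ?_⟩
  intro x
  apply Subtype.ext
  show f (fun i => ((x i : Ω) : S))
      = f (fun i => ((embAux ωΩ hkm σ e.symm
          (Fin.cons (F (padAux ωΩ σ fun j => x (σ ⟨j.1, lt_trans j.2 hkn⟩)))
            (fun j : Fin (n - k) => x (σ ⟨k + j.1, by have := j.2; omega⟩))) i : Ω) : S))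
  set u : Ω := F (padAux ωΩ σ fun j => x (σ ⟨j.1, lt_trans j.2 hkn⟩)) with hudef
  set zz : Fin (n - k + 1) → Ω :=
    Fin.cons u (fun j : Fin (n - k) => x (σ ⟨k + j.1, by have := j.2; omega⟩)) with hzzdef
  have L : f (fun i => ((x i : Ω) : S))
      = h (Fin.cons (g fun j => ((x (σ ⟨j.1, lt_trans j.2 hkn⟩) : Ω) : S))
          fun j : Fin (n - k) => ((x (σ ⟨k + j.1, by have := j.2; omega⟩) : Ω) : S)) :=
    hdec _
  have R : f (fun i => ((embAux ωΩ hkm σ e.symm zz i : Ω) : S))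
      = h (Fin.cons (g fun j => ((embAux ωΩ hkm σ e.symm zz (σ ⟨j.1, lt_trans j.2 hkn⟩) : Ω) : S))
          fun j : Fin (n - k) =>
            ((embAux ωΩ hkm σ e.symm zz (σ ⟨k + j.1, by have := j.2; omega⟩) : Ω) : S)) :=
    hdec _
  rw [L, R]
  congr 1
  funext i
  refine Fin.cases ?_ ?_ i
  · rw [Fin.cons_zero, Fin.cons_zero]
    apply hθinj
    show h (Fin.cons (g fun j => ((x (σ ⟨j.1, lt_trans j.2 hkn⟩) : Ω) : S))
        fun _ : Fin (n - k) => (w : S))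
      = h (Fin.cons (g fun j => ((embAux ωΩ hkm σ e.symm zz (σ ⟨j.1, lt_trans j.2 hkn⟩) : Ω) : S))
        fun _ : Fin (n - k) => (w : S))
    rw [← hGθ]
    have hA : (fun j : Fin k => ((embAux ωΩ hkm σ e.symm zz (σ ⟨j.1, lt_trans j.2 hkn⟩) : Ω) : S))
        = fun j => ((Function.update (fun _ : Fin k => ωΩ) ⟨k - 1, hkm⟩ (e.symm u) j : Ω) : S) := by
      funext j
      rw [embσ1]
      congr 2
    rw [hA, ← hGθ, hes]
  · intro j
    rw [Fin.cons_succ, Fin.cons_succ]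
    rw [embσ2]
    rfl
end

section
/- Let g : Σ^n → Σ be an n-ary quasigroup that is not permutably reducible (n ≥ 3), and let q : Σ'^n → Σ' be any n-ary quasigroup on a nonempty set Σ'. Then the direct product g×q on Σ×Σ', defined by (g×q)((x_1,y_1),…,(x_n,y_n)) = (g(x_1,…,x_n), q(y_1,…,y_n)), is an n-ary quasigroup on Σ×Σ' that is not permutably reducible. -/
section MixAux

variable {T : Type*} {n k : ℕ}

/-- Recombine a `k`-tuple and an `(n-k)`-tuple into an `n`-tuple along a permutation. -/
def mixFn (σ : Equiv.Perm (Fin n)) (u : Fin k → T) (v : Fin (n - k) → T) : Fin n → T :=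
  fun i => if h : (σ.symm i).1 < k then u ⟨(σ.symm i).1, h⟩
    else v ⟨(σ.symm i).1 - k, by have := (σ.symm i).2; omega⟩

lemma mixFn_apply_left (σ : Equiv.Perm (Fin n)) (u : Fin k → T) (v : Fin (n - k) → T)
    (j : Fin k) (hj : j.1 < n) : mixFn σ u v (σ ⟨j.1, hj⟩) = u j := by
  unfold mixFn
  simp only [Equiv.symm_apply_apply]
  rw [dif_pos j.2]

lemma mixFn_apply_right (σ : Equiv.Perm (Fin n)) (u : Fin k → T) (v : Fin (n - k) → T)
    (j : Fin (n - k)) (hj : k + j.1 < n) : mixFn σ u v (σ ⟨k + j.1, hj⟩) = v j := by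
  unfold mixFn
  simp only [Equiv.symm_apply_apply]
  rw [dif_neg (by omega)]
  congr 1
  exact Fin.ext (by simp)

lemma mixFn_recon (σ : Equiv.Perm (Fin n)) (hkn : k < n) (x : Fin n → T) :
    mixFn σ (fun j : Fin k => x (σ ⟨j.1, lt_trans j.2 hkn⟩))
      (fun j : Fin (n - k) => x (σ ⟨k + j.1, by have := j.2; omega⟩)) = x := by
  funext i
  unfold mixFn
  rcases lt_or_ge (σ.symm i).1 k with h | h
  · rw [dif_pos h]
    have h2 : σ (⟨(σ.symm i).1, lt_trans h hkn⟩ : Fin n) = i := by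
      have he : (⟨(σ.symm i).1, lt_trans h hkn⟩ : Fin n) = σ.symm i := rfl
      rw [he, Equiv.apply_symm_apply]
    exact congrArg x h2
  · rw [dif_neg (by omega)]
    have h2 : σ (⟨k + ((σ.symm i).1 - k), by have := (σ.symm i).2; omega⟩ : Fin n) = i := by
      have he : (⟨k + ((σ.symm i).1 - k), by have := (σ.symm i).2; omega⟩ : Fin n) = σ.symm i :=
        Fin.ext (by simp; omega)
      rw [he, Equiv.apply_symm_apply]
    exact congrArg x h2

lemma mixFn_update_left (σ : Equiv.Perm (Fin n)) (u : Fin k → T) (v : Fin (n - k) → T)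
    (i : Fin k) (a : T) (hi : i.1 < n) :
    mixFn σ (Function.update u i a) v = Function.update (mixFn σ u v) (σ ⟨i.1, hi⟩) a := by
  funext i'
  rcases eq_or_ne i' (σ ⟨i.1, hi⟩) with hc | hc
  · subst hc
    rw [mixFn_apply_left, Function.update_self, Function.update_self]
  · rw [Function.update_of_ne hc]
    unfold mixFn
    rcases lt_or_ge (σ.symm i').1 k with h | h
    · rw [dif_pos h, dif_pos h]
      have hne : (⟨(σ.symm i').1, h⟩ : Fin k) ≠ i := by
        intro he
        apply hc
        have hv : ((σ.symm i') : Fin n).1 = i.1 := congrArg Fin.val he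
        have : σ.symm i' = ⟨i.1, hi⟩ := Fin.ext hv
        rw [← this, Equiv.apply_symm_apply]
      rw [Function.update_of_ne hne]
    · rw [dif_neg (by omega), dif_neg (by omega)]

lemma mixFn_update_right (σ : Equiv.Perm (Fin n)) (u : Fin k → T) (v : Fin (n - k) → T)
    (j : Fin (n - k)) (a : T) (hj : k + j.1 < n) :
    mixFn σ u (Function.update v j a) = Function.update (mixFn σ u v) (σ ⟨k + j.1, hj⟩) a := by
  funext i'
  rcases eq_or_ne i' (σ ⟨k + j.1, hj⟩) with hc | hc
  · subst hc
    rw [mixFn_apply_right, Function.update_self, Function.update_self]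
  · rw [Function.update_of_ne hc]
    unfold mixFn
    rcases lt_or_ge (σ.symm i').1 k with h | h
    · rw [dif_pos h, dif_pos h]
    · rw [dif_neg (by omega), dif_neg (by omega)]
      have hne : (⟨(σ.symm i').1 - k, by have := (σ.symm i').2; omega⟩ : Fin (n - k)) ≠ j := by
        intro he
        apply hc
        have hv : (σ.symm i').1 - k = j.1 := congrArg Fin.val he
        have : σ.symm i' = ⟨k + j.1, hj⟩ := Fin.ext (by simp; omega)
        rw [← this, Equiv.apply_symm_apply]
      rw [Function.update_of_ne hne]

lemma mixFn_prod {T' : Type*} (σ : Equiv.Perm (Fin n)) (u : Fin k → T) (y : Fin k → T')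
    (v : Fin (n - k) → T) (c : Fin (n - k) → T') :
    mixFn σ (fun j => (u j, y j)) (fun j => (v j, c j))
      = fun i => (mixFn σ u v i, mixFn σ y c i) := by
  funext i
  unfold mixFn
  rcases lt_or_ge (σ.symm i).1 k with h | h
  · rw [dif_pos h, dif_pos h, dif_pos h]
  · rw [dif_neg (by omega), dif_neg (by omega), dif_neg (by omega)]

end MixAux
/-- The direct product of an irreducible `n`-ary quasigroup with any `n`-ary
quasigroup is an irreducible `n`-ary quasigroup. -/
theorem prod_with_irreducible_is_irreducible {S S' : Type*} [Nonempty S'] {n : ℕ}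
    (hn : 3 ≤ n)
    (g : (Fin n → S) → S) (hg : IsNQuasigroup g) (hgirr : ¬ IsPermutablyReducible g)
    (q : (Fin n → S') → S') (hq : IsNQuasigroup q) :
    IsNQuasigroup (fun x : Fin n → S × S' => (g fun i => (x i).1, q fun i => (x i).2)) ∧
    ¬ IsPermutablyReducible
        (fun x : Fin n → S × S' => (g fun i => (x i).1, q fun i => (x i).2)) := by
  constructor
  · -- the product is a quasigroup
    intro i x
    have h1 : ∀ a : S × S',
        (fun j => (Function.update x i a j).1) = Function.update (fun j => (x j).1) i a.1 := by
      intro a; funext j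
      rcases eq_or_ne j i with rfl | hj
      · simp
      · simp [Function.update_of_ne hj]
    have h2 : ∀ a : S × S',
        (fun j => (Function.update x i a j).2) = Function.update (fun j => (x j).2) i a.2 := by
      intro a; funext j
      rcases eq_or_ne j i with rfl | hj
      · simp
      · simp [Function.update_of_ne hj]
    have key : (fun a : S × S' => ((g fun j => (Function.update x i a j).1),
          (q fun j => (Function.update x i a j).2)))
        = fun a : S × S' => (g (Function.update (fun j => (x j).1) i a.1),
            q (Function.update (fun j => (x j).2) i a.2)) := by
      funext a; rw [h1 a, h2 a]
    show Function.Bijective (fun a : S × S' => ((g fun j => (Function.update x i a j).1),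
          (q fun j => (Function.update x i a j).2)))
    rw [key]
    exact Function.Bijective.prodMap (hg i fun j => (x j).1) (hq i fun j => (x j).2)
  · -- irreducibility
    have hS : Nonempty S := by
      by_contra hS
      apply hgirr
      refine ⟨2, one_lt_two, by omega, 1, fun u => u 0, fun v => v 0, ?_, ?_, ?_⟩
      · intro i x; exact (hS ⟨x 0⟩).elim
      · intro i x; exact (hS ⟨x 0⟩).elim
      · intro x; exact (hS ⟨x ⟨0, by omega⟩⟩).elim
    obtain ⟨s₀⟩ := hS
    obtain ⟨t₀⟩ := (inferInstance : Nonempty S')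
    rintro ⟨k, hk1, hkn, σ, G, h, hG, hh, hfx⟩
    apply hgirr
    have hk0 : 0 < k := by omega
    let v₀ : Fin (n - k) → S := fun _ => s₀
    let c₀ : Fin (n - k) → S' := fun _ => t₀
    let y₀ : Fin k → S' := fun _ => t₀
    let A : (Fin k → S) → S := fun u => g (mixFn σ u v₀)
    let B : (Fin k → S') → S' := fun y => q (mixFn σ y c₀)
    -- the decomposition equation in split form
    have E : ∀ (u : Fin k → S) (y : Fin k → S') (v : Fin (n - k) → S) (c : Fin (n - k) → S'),
        ((g (mixFn σ u v)), (q (mixFn σ y c)))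
          = h (Fin.cons (G fun j => (u j, y j)) (fun j => (v j, c j))) := by
      intro u y v c
      have hx := hfx (mixFn σ (fun j => (u j, y j)) (fun j => (v j, c j)))
      simp only [mixFn_prod] at hx
      simp only [mixFn_apply_left, mixFn_apply_right] at hx
      exact hx
    let w₀ : Fin (n - k) → S × S' := fun j => (v₀ j, c₀ j)
    have hHB : Function.Bijective (fun z : S × S' => h (Fin.cons z w₀)) := by
      have hbij := hh 0 (Fin.cons (s₀, t₀) w₀)
      have he : (fun a => h (Function.update (Fin.cons (s₀, t₀) w₀) 0 a))
          = fun z : S × S' => h (Fin.cons z w₀) := by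
        funext a; rw [Fin.update_cons_zero]
      rwa [he] at hbij
    let eH : (S × S') ≃ (S × S') := Equiv.ofBijective _ hHB
    have K : ∀ (u : Fin k → S) (y : Fin k → S'),
        G (fun j => (u j, y j)) = eH.symm (A u, B y) := by
      intro u y
      have h1 : eH (G fun j => (u j, y j)) = (A u, B y) := (E u y v₀ c₀).symm
      rw [← h1, Equiv.symm_apply_apply]
    let h' : (Fin (n - k + 1) → S) → S := fun w =>
      (h (Fin.cons (eH.symm (w 0, B y₀)) (fun j => (w j.succ, c₀ j)))).1
    -- the key identity
    have M : ∀ (u : Fin k → S) (v : Fin (n - k) → S),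
        h' (Fin.cons (A u) v) = g (mixFn σ u v) := by
      intro u v
      simp only [h', Fin.cons_zero, Fin.cons_succ]
      rw [← K u y₀, ← E u y₀ v c₀]
    -- A is a quasigroup
    have hAq : IsNQuasigroup A := by
      intro i u
      have hrw : (fun a => A (Function.update u i a))
          = fun a => g (Function.update (mixFn σ u v₀) (σ ⟨i.1, lt_trans i.2 hkn⟩) a) := by
        funext a
        simp only [A]
        rw [mixFn_update_left σ u v₀ i a (lt_trans i.2 hkn)]
      rw [hrw]
      exact hg _ _
    -- an equiv realizing A in its first coordinate
    let u₀ : Fin k → S := fun _ => s₀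
    let ρ : S ≃ S := Equiv.ofBijective _ (hAq ⟨0, hk0⟩ u₀)
    have hρa : ∀ a : S, A (Function.update u₀ ⟨0, hk0⟩ (ρ.symm a)) = a := fun a =>
      ρ.apply_symm_apply a
    -- h' is a quasigroup
    have hh'q : IsNQuasigroup h' := by
      intro i w
      induction i using Fin.cases with
      | zero =>
        have hw : ∀ a : S, Function.update w 0 a = Fin.cons a (Fin.tail w) := by
          intro a
          conv_lhs => rw [← Fin.cons_self_tail w]
          rw [Fin.update_cons_zero]
        have hfun : (fun a => h' (Function.update w 0 a))
            = (fun b => g (Function.update (mixFn σ u₀ (Fin.tail w))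
                (σ ⟨(⟨0, hk0⟩ : Fin k).1, lt_trans hk0 hkn⟩) b)) ∘ (fun a => ρ.symm a) := by
          funext a
          rw [hw a]
          conv_lhs => rw [← hρa a]
          rw [M _ (Fin.tail w), mixFn_update_left σ u₀ (Fin.tail w) ⟨0, hk0⟩ (ρ.symm a)
            (lt_trans hk0 hkn)]
          rfl
        rw [hfun]
        exact (hg _ _).comp ρ.symm.bijective
      | succ j =>
        have hw : ∀ a : S, Function.update w j.succ a
            = Fin.cons (w 0) (Function.update (Fin.tail w) j a) := by
          intro a
          rw [Fin.cons_update, Fin.cons_self_tail]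
        have hfun : (fun a => h' (Function.update w j.succ a))
            = fun a => g (Function.update
                (mixFn σ (Function.update u₀ ⟨0, hk0⟩ (ρ.symm (w 0))) (Fin.tail w))
                (σ ⟨k + j.1, by have := j.2; omega⟩) a) := by
          funext a
          rw [hw a]
          conv_lhs => rw [← hρa (w 0)]
          rw [M _ _, mixFn_update_right σ _ (Fin.tail w) j a (by have := j.2; omega)]
        rw [hfun]
        exact hg _ _
    refine ⟨k, hk1, hkn, σ, A, h', hAq, hh'q, ?_⟩
    intro x
    exact ((M _ _).trans (congrArg g (mixFn_recon σ hkn x))).symm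
end

section
/- For all integers n ≥ 2 and s, r ≥ 2, the number of n-ary quasigroups of composite order sr satisfies |Q(n,sr)| ≥ |Q(n,r)| · |Q(n,s)|^{r^n} > |Q(n,s)|^{r^n}. -/
/-- `|Q(n,k)|`: the number of `n`-ary quasigroup operations on a fixed
`k`-element set. -/
noncomputable def numQuasigroups (n k : ℕ) : ℕ :=
  Nat.card {f : (Fin n → Fin k) → Fin k // IsNQuasigroup f}

/-!
For quasigroups `h` on `B` and `g y` on `A` (one for each `y : Fin n → B`), the operation
`x ↦ (g (snd ∘ x) (fst ∘ x), h (snd ∘ x))` is a quasigroup on `A × B` from which `h` and `g` can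
be read off again. With `|A| = s`, `|B| = r` this embeds `Q(n,r) × Q(n,s)^{rⁿ}` into `Q(n,sr)`.
Strictness holds because `x ↦ c + ∑ xᵢ` on `Fin k` gives `k` distinct quasigroups.
-/

open Function

variable {n : ℕ} {A B : Type*}

theorem Function.Bijective.prodShear {A' B' : Type*} {f : B → B'} {g : B → A → A'}
    (hf : Bijective f) (hg : ∀ b, Bijective (g b)) :
    Bijective fun p : A × B => (g p.2 p.1, f p.2) :=
  ((Equiv.prodComm A B).trans <| (Equiv.prodShear (.ofBijective f hf)
    fun b => .ofBijective (g b) (hg b)).trans (Equiv.prodComm B' A')).bijective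

theorem IsNQuasigroup.conj (e : A ≃ B) {f : (Fin n → A) → A} (hf : IsNQuasigroup f) :
    IsNQuasigroup fun x => e (f (e.symm ∘ x)) := by
  intro i x
  simp only [comp_update]
  exact e.bijective.comp ((hf i (e.symm ∘ x)).comp e.symm.bijective)

theorem isNQuasigroup_const_add_sum [AddCommGroup A] (c : A) :
    IsNQuasigroup fun x : Fin n → A => c + ∑ i, x i := by
  intro i x
  simp only [Finset.sum_update_of_mem (Finset.mem_univ i)]
  convert (Equiv.addRight (c + ∑ j ∈ Finset.univ \ {i}, x j)).bijective using 1
  funext a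
  simp only [Equiv.coe_addRight]
  abel

theorem IsNQuasigroup.prod {h : (Fin n → B) → B} {g : (Fin n → B) → (Fin n → A) → A}
    (hh : IsNQuasigroup h) (hg : ∀ y, IsNQuasigroup (g y)) :
    IsNQuasigroup fun x : Fin n → A × B =>
      (g (Prod.snd ∘ x) (Prod.fst ∘ x), h (Prod.snd ∘ x)) := by
  intro i x
  simp only [comp_update]
  exact (hh i _).prodShear fun b => hg _ i _

variable (n A) in
abbrev NQuasigroup := {f : (Fin n → A) → A // IsNQuasigroup f}

def NQuasigroup.congr (e : A ≃ B) : NQuasigroup n A ≃ NQuasigroup n B where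
  toFun f := ⟨_, f.2.conj e⟩
  invFun f := ⟨_, f.2.conj e.symm⟩
  left_inv f := by ext x; simp [comp_def]
  right_inv f := by ext x; simp [comp_def]

def NQuasigroup.prod (h : NQuasigroup n B) (g : (Fin n → B) → NQuasigroup n A) :
    NQuasigroup n (A × B) :=
  ⟨_, h.2.prod fun y => (g y).2⟩

theorem NQuasigroup.prod_injective [Nonempty A] :
    Injective fun p : NQuasigroup n B × ((Fin n → B) → NQuasigroup n A) => p.1.prod p.2 := by
  rintro ⟨h₁, g₁⟩ ⟨h₂, g₂⟩ heq
  have hval := congrArg Subtype.val heq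
  obtain ⟨a⟩ := ‹Nonempty A›
  have hh : h₁ = h₂ := Subtype.ext <| funext fun y => by
    simpa [NQuasigroup.prod, comp_def] using congrArg Prod.snd (congrFun hval fun j => (a, y j))
  have hg : g₁ = g₂ := funext fun y => Subtype.ext <| funext fun x => by
    simpa [NQuasigroup.prod, comp_def] using congrArg Prod.fst (congrFun hval fun j => (x j, y j))
  rw [hh, hg]

theorem le_numQuasigroups (n k : ℕ) : k ≤ numQuasigroups n k := by
  rcases Nat.eq_zero_or_pos k with rfl | hk
  · exact Nat.zero_le _
  have : NeZero k := ⟨hk.ne'⟩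
  have hinj : Injective fun c : Fin k =>
      (⟨_, isNQuasigroup_const_add_sum c⟩ : NQuasigroup n (Fin k)) :=
    fun c d hcd => by simpa using congrFun (congrArg Subtype.val hcd) 0
  simpa [numQuasigroups] using Nat.card_le_card_of_injective _ hinj

theorem numQuasigroups_mul_pow_le {s r : ℕ} (hs : 0 < s) :
    numQuasigroups n r * numQuasigroups n s ^ r ^ n ≤ numQuasigroups n (s * r) := by
  have : NeZero s := ⟨hs.ne'⟩
  calc numQuasigroups n r * numQuasigroups n s ^ r ^ n
      = Nat.card (NQuasigroup n (Fin r) × ((Fin n → Fin r) → NQuasigroup n (Fin s))) := by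
        simp [numQuasigroups, Nat.card_prod, Nat.card_fun]
    _ ≤ Nat.card (NQuasigroup n (Fin s × Fin r)) :=
        Nat.card_le_card_of_injective _ NQuasigroup.prod_injective
    _ = numQuasigroups n (s * r) := Nat.card_congr (NQuasigroup.congr finProdFinEquiv)

theorem numQuasigroups_composite_general {n s r : ℕ} (hs : 2 ≤ s) (hr : 2 ≤ r) :
    numQuasigroups n (s * r) ≥ numQuasigroups n r * numQuasigroups n s ^ r ^ n ∧
    numQuasigroups n r * numQuasigroups n s ^ r ^ n > numQuasigroups n s ^ r ^ n := by
  have hQs := le_numQuasigroups n s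
  have hQr := le_numQuasigroups n r
  exact ⟨numQuasigroups_mul_pow_le (by omega),
    lt_mul_of_one_lt_left (pow_pos (by omega) _) (by omega)⟩

/-- `|Q(n,sr)| ≥ |Q(n,r)|·|Q(n,s)|^{rⁿ} > |Q(n,s)|^{rⁿ}`. -/
theorem numQuasigroups_composite {n s r : ℕ} (hn : 2 ≤ n) (hs : 2 ≤ s) (hr : 2 ≤ r) :
    numQuasigroups n (s * r) ≥ numQuasigroups n r * numQuasigroups n s ^ r ^ n ∧
    numQuasigroups n r * numQuasigroups n s ^ r ^ n > numQuasigroups n s ^ r ^ n :=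
  numQuasigroups_composite_general hs hr
end

section
/- Let s, r ≥ 2, let g : Z_r^n → Z_r be an n-ary quasigroup of order r, and let ω be a function from Z_r^n to the set Q(n,s) of all n-ary quasigroups on {0,…,s−1}. Define f : {0,…,sr−1}^n → {0,…,sr−1} by f(z_1,…,z_n) = g(⌊z_1/s⌋,…,⌊z_n/s⌋)·s + ω⟨⌊z_1/s⌋,…,⌊z_n/s⌋⟩(z_1 mod s, …, z_n mod s). Then f is an n-ary quasigroup of order sr, and (for fixed g) distinct choices of the function ω yield distinct n-ary quasigroups f. -/
private lemma div_mod_key {s a b c d : ℕ} (hs : 0 < s) (hb : b < s) (hd : d < s)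
    (h : a * s + b = c * s + d) : a = c ∧ b = d := by
  have h1 : (a * s + b) / s = a := by
    rw [mul_comm, Nat.mul_add_div hs, Nat.div_eq_of_lt hb, Nat.add_zero]
  have h2 : (c * s + d) / s = c := by
    rw [mul_comm, Nat.mul_add_div hs, Nat.div_eq_of_lt hd, Nat.add_zero]
  have hac : a = c := by rw [← h1, ← h2, h]
  subst hac
  exact ⟨rfl, Nat.add_left_cancel h⟩

/-- The ω-product: given an `n`-ary quasigroup `g` of order `r` and a map `ω` from
`Z_r^n` to the set of `n`-ary quasigroups of order `s`, the function
`f(z̄) = g(⌊z₁/s⌋,…,⌊zₙ/s⌋)·s + ω⟨⌊z₁/s⌋,…,⌊zₙ/s⌋⟩(z₁ mod s,…,zₙ mod s)` is an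
`n`-ary quasigroup of order `sr`, and distinct `ω` yield distinct `f`. -/
theorem omega_product_is_quasigroup_and_injective {n s r : ℕ} (hs : 2 ≤ s) (hr : 2 ≤ r)
    (g : (Fin n → Fin r) → Fin r) (hg : IsNQuasigroup g) :
    (∀ (ω : (Fin n → Fin r) → {h : (Fin n → Fin s) → Fin s // IsNQuasigroup h})
       (f : (Fin n → Fin (s * r)) → Fin (s * r)),
       (∀ z : Fin n → Fin (s * r),
         (f z : ℕ) =
           (g fun i => ⟨(z i : ℕ) / s, Nat.div_lt_of_lt_mul (z i).isLt⟩ : Fin r) * s +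
           ((ω fun i => ⟨(z i : ℕ) / s, Nat.div_lt_of_lt_mul (z i).isLt⟩).1
             fun i => (⟨(z i : ℕ) % s, Nat.mod_lt _ (by omega)⟩ : Fin s) : Fin s)) →
       IsNQuasigroup f) ∧
    (∀ (ω₁ ω₂ : (Fin n → Fin r) → {h : (Fin n → Fin s) → Fin s // IsNQuasigroup h})
       (f₁ f₂ : (Fin n → Fin (s * r)) → Fin (s * r)),
       (∀ z : Fin n → Fin (s * r),
         (f₁ z : ℕ) =
           (g fun i => ⟨(z i : ℕ) / s, Nat.div_lt_of_lt_mul (z i).isLt⟩ : Fin r) * s +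
           ((ω₁ fun i => ⟨(z i : ℕ) / s, Nat.div_lt_of_lt_mul (z i).isLt⟩).1
             fun i => (⟨(z i : ℕ) % s, Nat.mod_lt _ (by omega)⟩ : Fin s) : Fin s)) →
       (∀ z : Fin n → Fin (s * r),
         (f₂ z : ℕ) =
           (g fun i => ⟨(z i : ℕ) / s, Nat.div_lt_of_lt_mul (z i).isLt⟩ : Fin r) * s +
           ((ω₂ fun i => ⟨(z i : ℕ) / s, Nat.div_lt_of_lt_mul (z i).isLt⟩).1
             fun i => (⟨(z i : ℕ) % s, Nat.mod_lt _ (by omega)⟩ : Fin s) : Fin s)) →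
       f₁ = f₂ → ω₁ = ω₂) := by
  have hs0 : 0 < s := by omega
  constructor
  · intro ω f hf i x
    rw [← Finite.injective_iff_bijective]
    intro a b hab
    -- the "quotient" and "remainder" tuples of an updated argument
    have hQ : ∀ c : Fin (s * r),
        (fun j => (⟨((Function.update x i c j : Fin (s * r)) : ℕ) / s,
            Nat.div_lt_of_lt_mul (Function.update x i c j).isLt⟩ : Fin r)) =
        Function.update (fun j => (⟨((x j : Fin (s * r)) : ℕ) / s,
            Nat.div_lt_of_lt_mul (x j).isLt⟩ : Fin r)) i
          ⟨(c : ℕ) / s, Nat.div_lt_of_lt_mul c.isLt⟩ := by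
      intro c; funext j
      rcases eq_or_ne j i with rfl | h
      · simp
      · simp [Function.update_of_ne h]
    have hR : ∀ c : Fin (s * r),
        (fun j => (⟨((Function.update x i c j : Fin (s * r)) : ℕ) % s,
            Nat.mod_lt _ hs0⟩ : Fin s)) =
        Function.update (fun j => (⟨((x j : Fin (s * r)) : ℕ) % s,
            Nat.mod_lt _ hs0⟩ : Fin s)) i ⟨(c : ℕ) % s, Nat.mod_lt _ hs0⟩ := by
      intro c; funext j
      rcases eq_or_ne j i with rfl | h
      · simp
      · simp [Function.update_of_ne h]
    have e1 := hf (Function.update x i a)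
    have e2 := hf (Function.update x i b)
    rw [hQ a, hR a] at e1
    rw [hQ b, hR b] at e2
    have hab' : (f (Function.update x i a) : ℕ) = (f (Function.update x i b) : ℕ) := by
      simpa using congrArg Fin.val hab
    rw [e1, e2] at hab'
    obtain ⟨hgeq, hweq⟩ := div_mod_key hs0 (Fin.isLt _) (Fin.isLt _) hab'
    have hqab : (⟨(a : ℕ) / s, Nat.div_lt_of_lt_mul a.isLt⟩ : Fin r) =
        ⟨(b : ℕ) / s, Nat.div_lt_of_lt_mul b.isLt⟩ :=
      (hg i _).injective (Fin.val_injective hgeq)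
    have hdiv : (a : ℕ) / s = (b : ℕ) / s := congrArg Fin.val hqab
    rw [hqab] at hweq
    have hrab : (⟨(a : ℕ) % s, Nat.mod_lt _ hs0⟩ : Fin s) = ⟨(b : ℕ) % s, Nat.mod_lt _ hs0⟩ :=
      ((ω _).2 i _).injective (Fin.val_injective hweq)
    have hmod : (a : ℕ) % s = (b : ℕ) % s := congrArg Fin.val hrab
    have ha := Nat.div_add_mod (a : ℕ) s
    have hb := Nat.div_add_mod (b : ℕ) s
    exact Fin.val_injective (by rw [← ha, ← hb, hdiv, hmod])
  · intro ω₁ ω₂ f₁ f₂ h1 h2 hf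
    funext x
    apply Subtype.ext
    funext y
    have hzlt : ∀ j, (x j : ℕ) * s + (y j : ℕ) < s * r := by
      intro j
      calc (x j : ℕ) * s + (y j : ℕ) < x j * s + s := by have := (y j).isLt; omega
        _ = ((x j : ℕ) + 1) * s := by ring
        _ ≤ r * s := Nat.mul_le_mul_right _ (x j).isLt
        _ = s * r := Nat.mul_comm _ _
    set z : Fin n → Fin (s * r) := fun j => ⟨(x j : ℕ) * s + (y j : ℕ), hzlt j⟩ with hz
    have hzd : ∀ j, ((z j : Fin (s * r)) : ℕ) / s = (x j : ℕ) := by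
      intro j
      show ((x j : ℕ) * s + (y j : ℕ)) / s = (x j : ℕ)
      rw [mul_comm, Nat.mul_add_div hs0, Nat.div_eq_of_lt (y j).isLt, Nat.add_zero]
    have hzm : ∀ j, ((z j : Fin (s * r)) : ℕ) % s = (y j : ℕ) := by
      intro j
      show ((x j : ℕ) * s + (y j : ℕ)) % s = (y j : ℕ)
      rw [mul_comm, Nat.mul_add_mod, Nat.mod_eq_of_lt (y j).isLt]
    have hQ : (fun j => (⟨((z j : Fin (s * r)) : ℕ) / s,
        Nat.div_lt_of_lt_mul (z j).isLt⟩ : Fin r)) = x := by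
      funext j; exact Fin.val_injective (hzd j)
    have hR : (fun j => (⟨((z j : Fin (s * r)) : ℕ) % s,
        Nat.mod_lt _ hs0⟩ : Fin s)) = y := by
      funext j; exact Fin.val_injective (hzm j)
    have e1 := h1 z
    have e2 := h2 z
    rw [hQ, hR] at e1 e2
    have : (f₁ z : ℕ) = (f₂ z : ℕ) := by rw [hf]
    rw [e1, e2] at this
    exact Fin.val_injective (Nat.add_left_cancel this)
end

section
/- For all n ≥ 2 and k ≥ 8, the number of n-ary quasigroups of order k satisfies |Q(n,k)| ≥ 2^{⌊k/4⌋^n}. -/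
open Function Set

section Transport

variable {S T : Type*} {n : ℕ}

def operationCongr (n : ℕ) (e : S ≃ T) : ((Fin n → S) → S) ≃ ((Fin n → T) → T) where
  toFun f x := e (f (e.symm ∘ x))
  invFun f x := e.symm (f (e ∘ x))
  left_inv f := by ext; simp [comp_def]
  right_inv f := by ext; simp [comp_def]

lemma IsNQuasigroup.congr (e : S ≃ T) {f : (Fin n → S) → S} (hf : IsNQuasigroup f) :
    IsNQuasigroup (operationCongr n e f) := by
  intro i x
  have : (fun a => operationCongr n e f (update x i a)) =
      e ∘ (fun b => f (update (e.symm ∘ x) i b)) ∘ e.symm := by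
    ext a
    simp [operationCongr, comp_update]
  rw [this]
  exact e.bijective.comp ((hf i _).comp e.symm.bijective)

lemma isNQuasigroup_operationCongr_iff (e : S ≃ T) {f : (Fin n → S) → S} :
    IsNQuasigroup (operationCongr n e f) ↔ IsNQuasigroup f := by
  refine ⟨fun h => ?_, IsNQuasigroup.congr e⟩
  simpa [operationCongr, comp_def] using h.congr e.symm

lemma natCard_isNQuasigroup_congr (e : S ≃ T) :
    Nat.card {f : (Fin n → S) → S // IsNQuasigroup f} =
      Nat.card {f : (Fin n → T) → T // IsNQuasigroup f} :=
  Nat.card_congr <|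
    (operationCongr n e).subtypeEquiv fun _ => (isNQuasigroup_operationCongr_iff e).symm

lemma numQuasigroups_natCard (S : Type*) [Finite S] :
    numQuasigroups n (Nat.card S) = Nat.card {f : (Fin n → S) → S // IsNQuasigroup f} :=
  natCard_isNQuasigroup_congr (Finite.equivFin S).symm

end Transport

section Switching

variable {H : Type*} [AddCommGroup H] {n : ℕ}

def switchedSum (g : (Fin n → H) → Bool) (x : Fin n → ZMod 2 × H) : ZMod 2 × H :=
  (∑ i, x i) + ((if g (Prod.snd ∘ x) then 1 else 0), 0)

lemma switchedSum_update (g : (Fin n → H) → Bool) (x : Fin n → ZMod 2 × H) (i : Fin n)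
    (a : ZMod 2 × H) :
    switchedSum g (update x i a) =
      a + (∑ j ∈ Finset.univ.erase i, x j) +
        ((if g (update (Prod.snd ∘ x) i a.2) then 1 else 0), 0) := by
  rw [switchedSum, Finset.sum_update_of_mem (Finset.mem_univ i), comp_update,
    Finset.sdiff_singleton_eq_erase]

lemma isNQuasigroup_switchedSum [Finite H] (g : (Fin n → H) → Bool) :
    IsNQuasigroup (switchedSum g) := by
  intro i x
  refine Finite.injective_iff_bijective.mp fun a b hab => ?_
  simp only [switchedSum_update] at hab
  have hsnd : a.2 = b.2 := by simpa using congrArg Prod.snd hab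
  rw [hsnd] at hab
  exact add_right_cancel (add_right_cancel hab)

lemma switchedSum_injective : Injective (switchedSum (H := H) (n := n)) := by
  intro g g' h
  funext v
  have := congrArg Prod.fst (congrFun h fun i => (0, v i))
  have hv : (Prod.snd ∘ fun i => ((0 : ZMod 2), v i)) = v := rfl
  simp only [switchedSum, hv, Prod.fst_add, Prod.fst_sum, Finset.sum_const_zero,
    zero_add] at this
  revert this
  cases g v <;> cases g' v <;> decide

lemma two_pow_card_pow_le_natCard_isNQuasigroup [Finite H] :
    2 ^ Nat.card H ^ n ≤ Nat.card {f : (Fin n → ZMod 2 × H) → ZMod 2 × H // IsNQuasigroup f} := by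
  have := Nat.card_le_card_of_injective
    (fun g : (Fin n → H) → Bool => (⟨switchedSum g, isNQuasigroup_switchedSum g⟩ :
      {f : (Fin n → ZMod 2 × H) → ZMod 2 × H // IsNQuasigroup f}))
    fun g g' h => switchedSum_injective (congrArg Subtype.val h)
  simpa [Nat.card_fun] using this

end Switching

section Extension

variable {α S : Type*} {n : ℕ}

/-- A coordinate section of `f` maps `A` into itself injectively, hence onto `A`, so it cannot
send a point outside `A` into `A`. -/
lemma IsNQuasigroup.apply_update_notMem [Finite S] {f : (Fin n → S) → S} (hf : IsNQuasigroup f)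
    {A : Set S} (hA : ∀ x, (∀ i, x i ∈ A) → f x ∈ A) {i : Fin n} {x : Fin n → S}
    (hx : ∀ j ≠ i, x j ∈ A) {a : S} (ha : a ∉ A) : f (update x i a) ∉ A := by
  have hupd : ∀ b ∈ A, ∀ j, update x i b j ∈ A := fun b hb =>
    (forall_update_iff x fun _ c => c ∈ A).mpr ⟨hb, hx⟩
  have hmaps : MapsTo (fun b => f (update x i b)) A A := fun b hb => hA _ (hupd b hb)
  intro hfa
  obtain ⟨b, hb, hfb⟩ := ((A.toFinite.injOn_iff_bijOn_of_mapsTo hmaps).mp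
    (hf i x).injective.injOn).surjOn hfa
  exact ha ((hf i x).injective hfb ▸ hb)

open Classical in
noncomputable def extendAlong (ι : α → S) (ρ : S → α) (f₀ : (Fin n → S) → S)
    (f₁ : (Fin n → α) → α) (x : Fin n → S) : S :=
  if ∀ i, x i ∈ range ι then ι (f₁ (ρ ∘ x)) else f₀ x

variable {ι : α → S} {ρ : S → α} {f₀ : (Fin n → S) → S}

lemma extendAlong_comp (hρ : LeftInverse ρ ι) (f₁ : (Fin n → α) → α) (y : Fin n → α) :
    extendAlong ι ρ f₀ f₁ (ι ∘ y) = ι (f₁ y) := by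
  simp [extendAlong, ← comp_assoc, hρ.comp_eq_id]

lemma isNQuasigroup_extendAlong [Finite S] (hρ : LeftInverse ρ ι) (hf₀ : IsNQuasigroup f₀)
    (hclosed : ∀ x, (∀ i, x i ∈ range ι) → f₀ x ∈ range ι) {f₁ : (Fin n → α) → α}
    (hf₁ : IsNQuasigroup f₁) : IsNQuasigroup (extendAlong ι ρ f₀ f₁) := by
  classical
  intro i x
  refine Finite.injective_iff_bijective.mp fun a b hab => ?_
  by_cases hx : ∀ j ≠ i, x j ∈ range ι
  · have hmem : ∀ c, (∀ j, update x i c j ∈ range ι) ↔ c ∈ range ι := fun c =>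
      (forall_update_iff x fun _ c => c ∈ range ι).trans (and_iff_left hx)
    have hin : ∀ c ∈ range ι, extendAlong ι ρ f₀ f₁ (update x i c) =
        ι (f₁ (update (ρ ∘ x) i (ρ c))) := fun c hc => by
      rw [extendAlong, if_pos ((hmem c).mpr hc), comp_update]
    have hout : ∀ c ∉ range ι, extendAlong ι ρ f₀ f₁ (update x i c) = f₀ (update x i c) :=
      fun c hc => by rw [extendAlong, if_neg (mt (hmem c).mp hc)]
    have hf₀out := fun c (hc : c ∉ range ι) => hf₀.apply_update_notMem hclosed hx hc
    by_cases ha : a ∈ range ι <;> by_cases hb : b ∈ range ι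
    · obtain ⟨a, rfl⟩ := ha
      obtain ⟨b, rfl⟩ := hb
      rw [hin _ ⟨a, rfl⟩, hin _ ⟨b, rfl⟩, hρ, hρ] at hab
      rw [(hf₁ i _).injective (hρ.injective hab)]
    · rw [hin a ha, hout b hb] at hab
      exact absurd (hab ▸ mem_range_self _) (hf₀out b hb)
    · rw [hout a ha, hin b hb] at hab
      exact absurd (hab ▸ mem_range_self _) (hf₀out a ha)
    · rw [hout a ha, hout b hb] at hab
      exact (hf₀ i x).injective hab
  · obtain ⟨j, hji, hj⟩ : ∃ j ≠ i, x j ∉ range ι := by simpa using hx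
    have hout : ∀ c, extendAlong ι ρ f₀ f₁ (update x i c) = f₀ (update x i c) := fun c => by
      rw [extendAlong, if_neg fun h => hj (update_of_ne hji c x ▸ h j)]
    rw [hout, hout] at hab
    exact (hf₀ i x).injective hab

lemma natCard_isNQuasigroup_le_of_closed [Finite S] (hρ : LeftInverse ρ ι)
    (hf₀ : IsNQuasigroup f₀)
    (hclosed : ∀ x, (∀ i, x i ∈ range ι) → f₀ x ∈ range ι) :
    Nat.card {f : (Fin n → α) → α // IsNQuasigroup f} ≤
      Nat.card {f : (Fin n → S) → S // IsNQuasigroup f} := by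
  refine Nat.card_le_card_of_injective
    (fun f₁ => ⟨extendAlong ι ρ f₀ f₁, isNQuasigroup_extendAlong hρ hf₀ hclosed f₁.2⟩)
    fun f₁ f₁' h => Subtype.ext (funext fun y => hρ.injective ?_)
  simpa [extendAlong_comp hρ] using congrFun (congrArg Subtype.val h) (ι ∘ y)

end Extension

section Fold

variable {S : Type*} (L : S → S → S)

def foldOp : ∀ {n : ℕ}, (Fin (n + 1) → S) → S
  | 0, x => x 0
  | _ + 1, x => L (x 0) (foldOp (Fin.tail x))

variable {L}

lemma isNQuasigroup_foldOp (hrow : ∀ a, Bijective (L a)) (hcol : ∀ b, Bijective (L · b)) :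
    ∀ {n : ℕ}, IsNQuasigroup (foldOp L (n := n))
  | 0, i, x => by
    obtain rfl : i = 0 := Fin.fin_one_eq_zero i
    simp only [foldOp, update_self]
    exact bijective_id
  | n + 1, i, x => by
    induction i using Fin.cases with
    | zero => simpa [foldOp, Fin.tail_update_zero] using hcol _
    | succ j =>
      simpa [foldOp, Fin.tail_update_succ, update_of_ne (Fin.succ_ne_zero j).symm, comp_def] using
        (hrow (x 0)).comp (isNQuasigroup_foldOp hrow hcol j (Fin.tail x))

lemma foldOp_mem {A : Set S} (hA : ∀ a ∈ A, ∀ b ∈ A, L a b ∈ A) :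
    ∀ {n : ℕ} {x : Fin (n + 1) → S}, (∀ i, x i ∈ A) → foldOp L x ∈ A
  | 0, _, hx => hx 0
  | _ + 1, _, hx => hA _ (hx 0) _ (foldOp_mem hA fun i => hx i.succ)

end Fold

section Prolongation

variable {α β : Type*} [AddCommGroup β] (op : α → α → α) (ι : α → β) (ρ : β → α)

open Classical in
/-- The cell `(x, x + ι c)` of the square `x + y` receives the new symbol `c`; its old entry
`x + x + ι c` moves to the new column `c` of row `x` and to the new row `c` of column `x + ι c`. -/
noncomputable def prolongation : α ⊕ β → α ⊕ β → α ⊕ β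
  | .inl a, .inl b => .inl (op a b)
  | .inl a, .inr y => .inr (y + y - ι a)
  | .inr x, .inl b => .inr (x + x + ι b)
  | .inr x, .inr y => if y - x ∈ range ι then .inl (ρ (y - x)) else .inr (x + y)

variable {op ι ρ}

lemma prolongation_left_injective (hρ : LeftInverse ρ ι) (hrow : ∀ a, Injective (op a))
    (hdouble : Injective fun y : β => y + y) (u : α ⊕ β) : Injective (prolongation op ι ρ u) := by
  have hρ' : InjOn ρ (range ι) := Injective.injOn_range (hρ.comp_eq_id ▸ injective_id)
  rcases u with a | x <;> rintro (b | y) (b' | y') h <;> simp only [prolongation] at h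
    <;> try split_ifs at h
  all_goals simp only [Sum.inl.injEq, Sum.inr.injEq, reduceCtorEq] at h ⊢
  · exact hrow a h
  · exact hdouble (sub_left_inj.mp h)
  · exact hρ.injective (add_left_cancel h)
  · exact ‹y' - x ∉ range ι› ⟨b, by linear_combination (norm := abel) h⟩
  · exact ‹y - x ∉ range ι› ⟨b', by linear_combination (norm := abel) -h⟩
  · exact sub_left_inj.mp (hρ' (by assumption) (by assumption) h)
  · exact add_left_cancel h

lemma prolongation_right_injective (hρ : LeftInverse ρ ι) (hcol : ∀ b, Injective (op · b))
    (hdouble : Injective fun y : β => y + y) (v : α ⊕ β) : Injective (prolongation op ι ρ · v) := by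
  have hρ' : InjOn ρ (range ι) := Injective.injOn_range (hρ.comp_eq_id ▸ injective_id)
  rcases v with b | y <;> rintro (a | x) (a' | x') h <;> simp only [prolongation] at h
    <;> try split_ifs at h
  all_goals simp only [Sum.inl.injEq, Sum.inr.injEq, reduceCtorEq] at h ⊢
  · exact hcol b h
  · exact hdouble (add_right_cancel h)
  · exact hρ.injective (sub_right_injective h)
  · exact ‹y - x' ∉ range ι› ⟨a, by linear_combination (norm := abel) -h⟩
  · exact ‹y - x ∉ range ι› ⟨a', by linear_combination (norm := abel) h⟩
  · exact sub_right_inj.mp (hρ' (by assumption) (by assumption) h)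
  · exact add_right_cancel h

end Prolongation

lemma natCard_isNQuasigroup_le_sum {α β : Type*} [Finite α] [Finite β] [AddCommGroup β]
    {op : α → α → α} (hrow : ∀ a, Injective (op a)) (hcol : ∀ b, Injective (op · b))
    {ι : α → β} {ρ : β → α} (hρ : LeftInverse ρ ι) (hdouble : Injective fun y : β => y + y)
    (n : ℕ) :
    Nat.card {f : (Fin (n + 1) → α) → α // IsNQuasigroup f} ≤
      Nat.card {f : (Fin (n + 1) → α ⊕ β) → α ⊕ β // IsNQuasigroup f} := by
  have hP : IsNQuasigroup (foldOp (prolongation op ι ρ) (n := n)) := isNQuasigroup_foldOp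
    (fun u => Finite.injective_iff_bijective.mp (prolongation_left_injective hρ hrow hdouble u))
    (fun v => Finite.injective_iff_bijective.mp (prolongation_right_injective hρ hcol hdouble v))
  refine natCard_isNQuasigroup_le_of_closed (ι := Sum.inl) (ρ := Sum.elim id ρ) (fun _ => rfl) hP
    fun x hx => foldOp_mem ?_ hx
  rintro _ ⟨a, rfl⟩ _ ⟨b, rfl⟩
  exact ⟨op a b, rfl⟩

lemma two_pow_pow_le_numQuasigroups_two_mul {l : ℕ} (hl : 0 < l) (n : ℕ) :
    2 ^ l ^ n ≤ numQuasigroups n (2 * l) := by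
  have : NeZero l := ⟨hl.ne'⟩
  have h := two_pow_card_pow_le_natCard_isNQuasigroup (H := ZMod l) (n := n)
  rwa [← numQuasigroups_natCard, Nat.card_prod, Nat.card_zmod, Nat.card_zmod] at h

lemma numQuasigroups_le_add_of_odd {d r : ℕ} (hd : 0 < d) (hdr : d ≤ r) (hr : Odd r) (n : ℕ) :
    numQuasigroups (n + 1) d ≤ numQuasigroups (n + 1) (d + r) := by
  have : NeZero d := ⟨hd.ne'⟩
  have : NeZero r := ⟨(hd.trans_le hdr).ne'⟩
  have hρ : LeftInverse (fun y : ZMod r => (y.val : ZMod d)) (fun a : ZMod d => (a.val : ZMod r)) :=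
    fun a => by
      dsimp only
      rw [ZMod.val_natCast_of_lt ((ZMod.val_lt a).trans_le hdr), ZMod.natCast_zmod_val]
  have hdouble : Injective fun y : ZMod r => y + y := by
    have h2 : IsUnit (2 : ZMod r) := by
      exact_mod_cast (ZMod.isUnit_iff_coprime 2 r).mpr hr.coprime_two_left
    simpa [← two_mul] using h2.mul_right_injective
  have h := natCard_isNQuasigroup_le_sum (op := (· + ·)) add_right_injective add_left_injective
    hρ hdouble n
  rwa [← numQuasigroups_natCard, ← numQuasigroups_natCard, Nat.card_sum, Nat.card_zmod,
    Nat.card_zmod] at h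

/-- For `n ≥ 2` and `k ≥ 8`, `|Q(n,k)| ≥ 2^{⌊k/4⌋ⁿ}`. -/
theorem numQuasigroups_ge_of_eight_le {n k : ℕ} (hn : 2 ≤ n) (hk : 8 ≤ k) :
    numQuasigroups n k ≥ 2 ^ (k / 4) ^ n := by
  obtain ⟨n, rfl⟩ : ∃ n', n = n' + 1 := ⟨n - 1, by omega⟩
  rcases Nat.even_or_odd' k with ⟨l, rfl | rfl⟩
  · calc 2 ^ (2 * l / 4) ^ (n + 1) ≤ 2 ^ l ^ (n + 1) :=
          Nat.pow_le_pow_right two_pos (Nat.pow_le_pow_left (by omega) _)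
      _ ≤ numQuasigroups (n + 1) (2 * l) := two_pow_pow_le_numQuasigroups_two_mul (by omega) _
  · set m := (2 * l + 1) / 4
    calc 2 ^ m ^ (n + 1) ≤ numQuasigroups (n + 1) (2 * m) :=
          two_pow_pow_le_numQuasigroups_two_mul (by omega) _
      _ ≤ numQuasigroups (n + 1) (2 * m + (2 * l + 1 - 2 * m)) :=
          numQuasigroups_le_add_of_odd (by omega) (by omega) ⟨l - m, by omega⟩ _
      _ = numQuasigroups (n + 1) (2 * l + 1) := by congr 1; omega
end

section
/- Let Σ contain distinct elements 0, 1 and let q be an n-ary quasigroup on Σ for which {0,1}^n is a 01-component. For each i ∈ {1,…,n}, let q_i be an n_i-ary quasigroup on Σ and let Θ_i ⊆ Σ^{n_i} be a 01-component of q_i. Then Θ_1 × … × Θ_n is a 01-component of the (n_1 + … + n_n)-ary quasigroup f defined by f(x_{1,1},…,x_{1,n_1}, x_{2,1},…, x_{n,n_n}) = q(q_1(x_{1,1},…,x_{1,n_1}), …, q_n(x_{n,1},…,x_{n,n_n})). -/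
/-- A quasigroup operation with arguments indexed by `I`: bijective in each
argument when the others are fixed. -/
def IsQuasigroupOn {I S : Type*} [DecidableEq I] (f : (I → S) → S) : Prop :=
  ∀ (i : I) (x : I → S), Function.Bijective fun a => f (Function.update x i a)

/-- The function obtained from `q` by interchanging the values `a` and `b` on `Θ`
and leaving `q` unchanged elsewhere. -/
noncomputable def switchFunOn {I S : Type*} (q : (I → S) → S) (a b : S)
    (Θ : Set (I → S)) : (I → S) → S := fun x =>
  haveI := Classical.dec (x ∈ Θ)
  haveI := Classical.decEq S
  if x ∈ Θ then (if q x = a then b else if q x = b then a else q x) else q x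

/-- `Θ` is an `ab`-component (switching component) of `q`. -/
def IsSwitchingComponentOn {I S : Type*} [DecidableEq I] (q : (I → S) → S) (a b : S)
    (Θ : Set (I → S)) : Prop :=
  Θ.Nonempty ∧ q '' Θ = {a, b} ∧ IsQuasigroupOn (switchFunOn q a b Θ)

set_option maxHeartbeats 1000000

/-- If `{0,1}ⁿ` is a `01`-component of `q` and `Θᵢ` is a `01`-component of `qᵢ`
for each `i`, then `Θ₁ × … × Θₙ` is a `01`-component of the superposition
`f(…) = q(q₁(…),…,qₙ(…))`. -/
theorem product_of_components {S : Type*} (zero one : S) (hne : zero ≠ one)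
    {n : ℕ} (m : Fin n → ℕ)
    (q : (Fin n → S) → S) (hq : IsQuasigroupOn q)
    (hqc : IsSwitchingComponentOn q zero one
      {x : Fin n → S | ∀ i, x i = zero ∨ x i = one})
    (qs : ∀ i : Fin n, (Fin (m i) → S) → S)
    (hqs : ∀ i, IsQuasigroupOn (qs i))
    (Θ : ∀ i : Fin n, Set (Fin (m i) → S))
    (hΘ : ∀ i, IsSwitchingComponentOn (qs i) zero one (Θ i)) :
    IsSwitchingComponentOn
      (fun x : ((i : Fin n) × Fin (m i)) → S => q fun i => qs i fun j => x ⟨i, j⟩)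
      zero one
      {x : ((i : Fin n) × Fin (m i)) → S | ∀ i : Fin n, (fun j => x ⟨i, j⟩) ∈ Θ i} := by
  classical
  obtain ⟨-, hqim, -⟩ := hqc
  have hswitch : ∀ {I : Type} (g : (I → S) → S) (Θ' : Set (I → S)) (x : I → S),
      switchFunOn g zero one Θ' x =
        if x ∈ Θ' then (if g x = zero then one else if g x = one then zero else g x)
        else g x := by
    intro I g Θ' x
    unfold switchFunOn
    split_ifs <;> rfl
  have hCim : ∀ y : Fin n → S, (∀ i, y i = zero ∨ y i = one) →
      q y = zero ∨ q y = one := by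
    intro y hy
    have h : q y ∈ q '' {x : Fin n → S | ∀ i, x i = zero ∨ x i = one} :=
      Set.mem_image_of_mem q hy
    rw [hqim] at h
    simpa using h
  have himΘ : ∀ i, ∀ x ∈ Θ i, qs i x = zero ∨ qs i x = one := by
    intro i x hx
    have h : qs i x ∈ qs i '' Θ i := Set.mem_image_of_mem _ hx
    rw [(hΘ i).2.1] at h
    simpa using h
  -- key flip lemma: flipping one coordinate of a `{zero,one}` point flips the value of `q`
  have flip : ∀ (i₀ : Fin n) (Y : Fin n → S),
      (∀ i, i ≠ i₀ → Y i = zero ∨ Y i = one) → ∀ c, (c = zero ∨ c = one) →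
      q (Function.update Y i₀ (if c = zero then one else if c = one then zero else c)) =
        (if q (Function.update Y i₀ c) = zero then one
         else if q (Function.update Y i₀ c) = one then zero
         else q (Function.update Y i₀ c)) := by
    intro i₀ Y hY c hc
    have hmem : ∀ d, (d = zero ∨ d = one) →
        ∀ i, Function.update Y i₀ d i = zero ∨ Function.update Y i₀ d i = one := by
      intro d hd i
      rcases eq_or_ne i i₀ with rfl | hi
      · simpa using hd
      · rw [Function.update_of_ne hi]; exact hY i hi
    have hA := hCim _ (hmem zero (Or.inl rfl))
    have hB := hCim _ (hmem one (Or.inr rfl))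
    have hAB : q (Function.update Y i₀ zero) ≠ q (Function.update Y i₀ one) := by
      intro h
      exact hne ((hq i₀ Y).injective h)
    rcases hc with rfl | rfl
    · rw [if_pos rfl]
      rcases hA with hA | hA <;> rcases hB with hB | hB <;>
        simp_all [hne, hne.symm]
    · rw [if_neg hne.symm, if_pos rfl]
      rcases hA with hA | hA <;> rcases hB with hB | hB <;>
        simp_all [hne, hne.symm]
  refine ⟨?_, ?_, ?_⟩
  · -- nonempty
    exact ⟨fun p => ((hΘ p.1).1.choose) p.2, fun i => (hΘ i).1.choose_spec⟩
  · -- image is {zero, one}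
    apply Set.eq_of_subset_of_subset
    · rintro s ⟨x, hx, rfl⟩
      simp only [Set.mem_insert_iff, Set.mem_singleton_iff]
      exact hCim _ (fun i => himΘ i _ (hx i))
    · intro s hs
      have h : s ∈ q '' {x : Fin n → S | ∀ i, x i = zero ∨ x i = one} := by
        rw [hqim]; exact hs
      obtain ⟨Y, hY, rfl⟩ := h
      have hx : ∀ i, ∃ t, t ∈ Θ i ∧ qs i t = Y i := by
        intro i
        have h : Y i ∈ qs i '' Θ i := by
          rw [(hΘ i).2.1]
          rcases hY i with h | h <;> simp [h]
        obtain ⟨t, ht, h⟩ := h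
        exact ⟨t, ht, h⟩
      choose t ht hqt using hx
      refine ⟨fun p => t p.1 p.2, fun i => ht i, ?_⟩
      show q (fun i => qs i fun j => t i j) = q Y
      congr 1
      funext i
      exact hqt i
  · -- quasigroup condition
    rintro ⟨i₀, j₀⟩ x
    set u : Fin (m i₀) → S := fun j => x ⟨i₀, j⟩ with hu
    set Y : Fin n → S := fun i => qs i fun j => x ⟨i, j⟩ with hYdef
    have hupd : ∀ (a : S) (j : Fin (m i₀)),
        Function.update x ⟨i₀, j₀⟩ a ⟨i₀, j⟩ = Function.update u j₀ a j := by
      intro a j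
      rcases eq_or_ne j j₀ with rfl | hj
      · rw [Function.update_self, Function.update_self]
      · rw [Function.update_of_ne hj, Function.update_of_ne (by simp [hj]), hu]
    have hne' : ∀ (a : S) (i : Fin n), i ≠ i₀ → ∀ j,
        Function.update x ⟨i₀, j₀⟩ a ⟨i, j⟩ = x ⟨i, j⟩ := by
      intro a i hi j
      exact Function.update_of_ne (fun h => hi (congrArg Sigma.fst h)) _ _
    have hYa : ∀ a : S, (fun i => qs i fun j => Function.update x ⟨i₀, j₀⟩ a ⟨i, j⟩)
        = Function.update Y i₀ (qs i₀ (Function.update u j₀ a)) := by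
      intro a
      funext i
      rcases eq_or_ne i i₀ with rfl | hi
      · rw [Function.update_self]
        congr 1
        funext j
        exact hupd a j
      · rw [Function.update_of_ne hi, hYdef]
        congr 1
        funext j
        exact hne' a i hi j
    have hmemiff : ∀ a : S,
        (Function.update x ⟨i₀, j₀⟩ a ∈
            {x : ((i : Fin n) × Fin (m i)) → S | ∀ i : Fin n, (fun j => x ⟨i, j⟩) ∈ Θ i})
          ↔ ((∀ i, i ≠ i₀ → (fun j => x ⟨i, j⟩) ∈ Θ i) ∧ Function.update u j₀ a ∈ Θ i₀) := by
      intro a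
      constructor
      · intro h
        refine ⟨fun i hi => ?_, ?_⟩
        · have hh := h i
          rwa [show (fun j => Function.update x ⟨i₀, j₀⟩ a ⟨i, j⟩) = fun j => x ⟨i, j⟩ from
            funext (hne' a i hi)] at hh
        · have hh := h i₀
          rwa [show (fun j => Function.update x ⟨i₀, j₀⟩ a ⟨i₀, j⟩) = Function.update u j₀ a from
            funext (hupd a)] at hh
      · rintro ⟨h1, h2⟩ i
        rcases eq_or_ne i i₀ with h | hi
        · rw [h]
          rwa [show (fun j => Function.update x ⟨i₀, j₀⟩ a ⟨i₀, j⟩) = Function.update u j₀ a from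
            funext (hupd a)]
        · rw [show (fun j => Function.update x ⟨i₀, j₀⟩ a ⟨i, j⟩) = fun j => x ⟨i, j⟩ from
            funext (hne' a i hi)]
          exact h1 i hi
    by_cases hrest : ∀ i, i ≠ i₀ → (fun j => x ⟨i, j⟩) ∈ Θ i
    · -- all other blocks in their components: compose with the switched inner quasigroup
      have key : ∀ a : S,
          switchFunOn
            (fun x : ((i : Fin n) × Fin (m i)) → S => q fun i => qs i fun j => x ⟨i, j⟩)
            zero one
            {x : ((i : Fin n) × Fin (m i)) → S | ∀ i : Fin n, (fun j => x ⟨i, j⟩) ∈ Θ i}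
            (Function.update x ⟨i₀, j₀⟩ a)
          = q (Function.update Y i₀
              (switchFunOn (qs i₀) zero one (Θ i₀) (Function.update u j₀ a))) := by
        intro a
        rw [hswitch, hswitch]
        by_cases hv : Function.update u j₀ a ∈ Θ i₀
        · rw [if_pos ((hmemiff a).2 ⟨hrest, hv⟩), if_pos hv]
          simp only [hYa a]
          exact (flip i₀ Y (fun i hi => himΘ i _ (hrest i hi)) _ (himΘ i₀ _ hv)).symm
        · rw [if_neg (fun h => hv ((hmemiff a).1 h).2), if_neg hv]
          simp only [hYa a]
      have heq : (fun a => switchFunOn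
            (fun x : ((i : Fin n) × Fin (m i)) → S => q fun i => qs i fun j => x ⟨i, j⟩)
            zero one
            {x : ((i : Fin n) × Fin (m i)) → S | ∀ i : Fin n, (fun j => x ⟨i, j⟩) ∈ Θ i}
            (Function.update x ⟨i₀, j₀⟩ a))
          = (fun b => q (Function.update Y i₀ b)) ∘
            (fun a => switchFunOn (qs i₀) zero one (Θ i₀) (Function.update u j₀ a)) :=
        funext key
      rw [heq]
      exact (hq i₀ Y).comp ((hΘ i₀).2.2 j₀ u)
    · -- some other block is outside its component: the switch never applies
      have key : ∀ a : S,
          switchFunOn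
            (fun x : ((i : Fin n) × Fin (m i)) → S => q fun i => qs i fun j => x ⟨i, j⟩)
            zero one
            {x : ((i : Fin n) × Fin (m i)) → S | ∀ i : Fin n, (fun j => x ⟨i, j⟩) ∈ Θ i}
            (Function.update x ⟨i₀, j₀⟩ a)
          = q (Function.update Y i₀ (qs i₀ (Function.update u j₀ a))) := by
        intro a
        rw [hswitch, if_neg (fun h => hrest ((hmemiff a).1 h).1)]
        simp only [hYa a]
      have heq : (fun a => switchFunOn
            (fun x : ((i : Fin n) × Fin (m i)) → S => q fun i => qs i fun j => x ⟨i, j⟩)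
            zero one
            {x : ((i : Fin n) × Fin (m i)) → S | ∀ i : Fin n, (fun j => x ⟨i, j⟩) ∈ Θ i}
            (Function.update x ⟨i₀, j₀⟩ a))
          = (fun b => q (Function.update Y i₀ b)) ∘
            (fun a => qs i₀ (Function.update u j₀ a)) :=
        funext key
      rw [heq]
      exact (hq i₀ Y).comp (hqs i₀ j₀ u)
end

section
/- The number |Q(n,5)| of n-ary quasigroups of order 5 satisfies: if n = 3m (m ≥ 1) then |Q(n,5)| ≥ 2^{3^m}; if n = 3m+1 (m ≥ 1) then |Q(n,5)| ≥ 2^{4·3^{m−1}}; and if n = 3m+2 (m ≥ 0) then |Q(n,5)| ≥ 2^{2·3^m}. In particular, |Q(n,5)| > 2^{3^{n/3 − 0.072}} for all n ≥ 2. -/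
/- ------------------------------------------------------------------
   Auxiliary combinatorial machinery: {0,1}-component switching.
------------------------------------------------------------------ -/

/-- `QHas n t` : there is an `n`-ary quasigroup of order 5 together with `t`
nonempty pairwise disjoint "switchable" families of cells (closed unions of
{0,1}-components), recorded via a labelling function. -/
def QHas (n t : ℕ) : Prop :=
  ∃ (f : (Fin n → Fin 5) → Fin 5) (lab : (Fin n → Fin 5) → ℕ),
    IsNQuasigroup f ∧
    (∀ j : Fin t, ∃ x, lab x = j.val + 1) ∧
    (∀ x, lab x ≠ 0 → f x = 0 ∨ f x = 1) ∧
    (∀ (x : Fin n → Fin 5) (i : Fin n) (v : Fin 5), lab x ≠ 0 →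
      (f (Function.update x i v) = 0 ∨ f (Function.update x i v) = 1) →
      lab (Function.update x i v) = lab x)

def sw : Fin 5 → Fin 5 := fun v => if v = 0 then 1 else if v = 1 then 0 else v

lemma sw_bij : Function.Bijective sw := by decide
lemma sw_ne : ∀ v : Fin 5, (v = 0 ∨ v = 1) → sw v ≠ v := by decide
lemma sw_id : ∀ v : Fin 5, ¬(v = 0 ∨ v = 1) → sw v = v := by decide

lemma counting {n t : ℕ} (h : QHas n t) : 2 ^ t ≤ numQuasigroups n 5 := by
  classical
  obtain ⟨f, lab, hq, hne, hval, hcl⟩ := h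
  set act : (Fin t → Bool) → (Fin n → Fin 5) → Prop :=
    fun s x => ∃ j : Fin t, s j = true ∧ lab x = j.val + 1 with hact
  set F : (Fin t → Bool) → (Fin n → Fin 5) → Fin 5 :=
    fun s x => if act s x then sw (f x) else f x with hF
  have key : ∀ (s : Fin t → Bool) (i : Fin n) (x : Fin n → Fin 5),
      (∀ v, F s (Function.update x i v) = f (Function.update x i v)) ∨
      (∀ v, F s (Function.update x i v) = sw (f (Function.update x i v))) := by
    intro s i x
    by_cases hA : ∃ v, act s (Function.update x i v)
    · right
      obtain ⟨v₀, j, hsj, hlab⟩ := hA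
      intro v
      by_cases hv : act s (Function.update x i v)
      · simp only [hF, if_pos hv]
      · have h01 : ¬(f (Function.update x i v) = 0 ∨ f (Function.update x i v) = 1) := by
          intro h01
          apply hv
          have h2 : Function.update (Function.update x i v₀) i v = Function.update x i v :=
            Function.update_idem ..
          have := hcl (Function.update x i v₀) i v (by rw [hlab]; omega) (by rw [h2]; exact h01)
          rw [h2] at this
          exact ⟨j, hsj, by rw [this, hlab]⟩
        simp only [hF, if_neg hv]
        exact (sw_id _ h01).symm
    · left
      intro v
      have : ¬ act s (Function.update x i v) := fun hc => hA ⟨v, hc⟩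
      simp only [hF, if_neg this]
  have hFq : ∀ s, IsNQuasigroup (F s) := by
    intro s i x
    rcases key s i x with hk | hk
    · have : (fun a => F s (Function.update x i a)) = fun a => f (Function.update x i a) :=
        funext hk
      rw [this]; exact hq i x
    · have : (fun a => F s (Function.update x i a)) =
        sw ∘ (fun a => f (Function.update x i a)) := funext hk
      rw [this]; exact sw_bij.comp (hq i x)
  have hinj : Function.Injective (fun s => (⟨F s, hFq s⟩ : {g // IsNQuasigroup g})) := by
    intro s s' hss
    have hFF : F s = F s' := congrArg Subtype.val hss
    by_contra hne'
    obtain ⟨j, hj⟩ : ∃ j, s j ≠ s' j := by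
      by_contra hc; push_neg at hc; exact hne' (funext hc)
    obtain ⟨x₀, hx₀⟩ := hne j
    have hval0 : f x₀ = 0 ∨ f x₀ = 1 := hval x₀ (by rw [hx₀]; omega)
    have hact_iff : ∀ (s'' : Fin t → Bool), act s'' x₀ ↔ s'' j = true := by
      intro s''
      constructor
      · rintro ⟨j', hsj', hlab'⟩
        have hjj : j' = j := Fin.ext (by omega)
        rwa [hjj] at hsj'
      · intro hj'
        exact ⟨j, hj', hx₀⟩
    have := congrFun hFF x₀
    simp only [hF] at this
    cases hsj : s j <;> cases hsj' : s' j
    · exact hj (by rw [hsj, hsj'])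
    · rw [if_neg (by rw [hact_iff]; simp [hsj]), if_pos ((hact_iff s').mpr hsj')] at this
      exact sw_ne _ hval0 this.symm
    · rw [if_pos ((hact_iff s).mpr hsj), if_neg (by rw [hact_iff]; simp [hsj'])] at this
      exact sw_ne _ hval0 this
    · exact hj (by rw [hsj, hsj'])
  have hcard := Nat.card_le_card_of_injective _ hinj
  have hbool : Nat.card (Fin t → Bool) = 2 ^ t := by
    simp [Nat.card_eq_fintype_card]
  unfold numQuasigroups
  omega

/- lookup tables -/
def lk (N k : ℕ) : Fin 5 := ⟨N / 5 ^ k % 5, Nat.mod_lt _ (by norm_num)⟩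
def lkN (N k : ℕ) : ℕ := N / 5 ^ k % 5

def LCf (a b : Fin 5) : Fin 5 := lk 192079108814302930 (a.val * 5 + b.val)

lemma lcBij1 : ∀ b, Function.Bijective (fun a => LCf a b) := by decide
lemma lcBij2 : ∀ a, Function.Bijective (LCf a) := by decide
lemma lcBlock : ∀ a b : Fin 5, (a = 0 ∨ a = 1) → (b = 0 ∨ b = 1) →
    (LCf a b = 0 ∨ LCf a b = 1) := by decide
lemma lcBlockRev : ∀ a b : Fin 5, (b = 0 ∨ b = 1) → (LCf a b = 0 ∨ LCf a b = 1) →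
    (a = 0 ∨ a = 1) := by decide
lemma lcBlockRev2 : ∀ a b : Fin 5, (a = 0 ∨ a = 1) → (LCf a b = 0 ∨ LCf a b = 1) →
    (b = 0 ∨ b = 1) := by decide

section upd
variable {p q : ℕ} (x : Fin (p + q) → Fin 5) (v : Fin 5)

lemma upd_cast (i : Fin p) :
    (fun k : Fin p => Function.update x (Fin.castAdd q i) v (Fin.castAdd q k))
      = Function.update (fun k => x (Fin.castAdd q k)) i v := by
  funext k
  rcases eq_or_ne k i with hk | hk
  · subst hk; simp
  · rw [Function.update_of_ne hk, Function.update_of_ne]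
    intro hc
    have := congrArg Fin.val hc
    simp only [Fin.coe_castAdd] at this
    exact hk (Fin.ext this)

lemma upd_cast_right (i : Fin p) :
    (fun k : Fin q => Function.update x (Fin.castAdd q i) v (Fin.natAdd p k))
      = fun k => x (Fin.natAdd p k) := by
  funext k
  rw [Function.update_of_ne]
  intro hc
  have := congrArg Fin.val hc
  simp only [Fin.coe_natAdd, Fin.coe_castAdd] at this
  omega

lemma upd_nat_left (i : Fin q) :
    (fun k : Fin p => Function.update x (Fin.natAdd p i) v (Fin.castAdd q k))
      = fun k => x (Fin.castAdd q k) := by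
  funext k
  rw [Function.update_of_ne]
  intro hc
  have := congrArg Fin.val hc
  simp only [Fin.coe_natAdd, Fin.coe_castAdd] at this
  omega

lemma upd_nat (i : Fin q) :
    (fun k : Fin q => Function.update x (Fin.natAdd p i) v (Fin.natAdd p k))
      = Function.update (fun k => x (Fin.natAdd p k)) i v := by
  funext k
  rcases eq_or_ne k i with hk | hk
  · subst hk; simp
  · rw [Function.update_of_ne hk, Function.update_of_ne]
    intro hc
    have := congrArg Fin.val hc
    simp only [Fin.coe_natAdd] at this
    exact hk (Fin.ext (by omega))

end upd

lemma qhas_comp {p q s t : ℕ} (hp : QHas p s) (hq2 : QHas q t) : QHas (p + q) (s * t) := by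
  classical
  obtain ⟨g, labg, hgq, hgne, hgval, hgcl⟩ := hp
  obtain ⟨h, labh, hhq, hhne, hhval, hhcl⟩ := hq2
  refine ⟨fun z => LCf (g fun k => z (Fin.castAdd q k)) (h fun k => z (Fin.natAdd p k)),
    fun z => if labg (fun k => z (Fin.castAdd q k)) = 0 ∨ labh (fun k => z (Fin.natAdd p k)) = 0
      then 0
      else (labg (fun k => z (Fin.castAdd q k)) - 1)
        + s * (labh (fun k => z (Fin.natAdd p k)) - 1) + 1,
    ?_, ?_, ?_, ?_⟩
  · intro i x
    refine Fin.addCases (motive := fun i => Function.Bijective fun a =>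
      LCf (g fun k => Function.update x i a (Fin.castAdd q k))
          (h fun k => Function.update x i a (Fin.natAdd p k))) ?_ ?_ i
    · intro i₀
      have e1 : ∀ a : Fin 5, (fun k => Function.update x (Fin.castAdd q i₀) a (Fin.castAdd q k))
          = Function.update (fun k => x (Fin.castAdd q k)) i₀ a := fun a => upd_cast x a i₀
      have e2 : ∀ a : Fin 5, (fun k => Function.update x (Fin.castAdd q i₀) a (Fin.natAdd p k))
          = fun k => x (Fin.natAdd p k) := fun a => upd_cast_right x a i₀
      have : (fun a => LCf (g fun k => Function.update x (Fin.castAdd q i₀) a (Fin.castAdd q k))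
          (h fun k => Function.update x (Fin.castAdd q i₀) a (Fin.natAdd p k)))
          = (fun u => LCf u (h fun k => x (Fin.natAdd p k)))
            ∘ (fun a => g (Function.update (fun k => x (Fin.castAdd q k)) i₀ a)) := by
        funext a; rw [e1 a, e2 a]; rfl
      rw [this]
      exact (lcBij1 _).comp (hgq i₀ _)
    · intro i₀
      have e1 : ∀ a : Fin 5, (fun k => Function.update x (Fin.natAdd p i₀) a (Fin.castAdd q k))
          = fun k => x (Fin.castAdd q k) := fun a => upd_nat_left x a i₀
      have e2 : ∀ a : Fin 5, (fun k => Function.update x (Fin.natAdd p i₀) a (Fin.natAdd p k))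
          = Function.update (fun k => x (Fin.natAdd p k)) i₀ a := fun a => upd_nat x a i₀
      have : (fun a => LCf (g fun k => Function.update x (Fin.natAdd p i₀) a (Fin.castAdd q k))
          (h fun k => Function.update x (Fin.natAdd p i₀) a (Fin.natAdd p k)))
          = (LCf (g fun k => x (Fin.castAdd q k)))
            ∘ (fun a => h (Function.update (fun k => x (Fin.natAdd p k)) i₀ a)) := by
        funext a; rw [e1 a, e2 a]; rfl
      rw [this]
      exact (lcBij2 _).comp (hhq i₀ _)
  · intro j
    have hs : 0 < s := by
      rcases Nat.eq_zero_or_pos s with h0 | h0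
      · exact absurd j.isLt (by simp [h0])
      · exact h0
    have hj1 : j.val % s < s := Nat.mod_lt _ hs
    have hj2 : j.val / s < t := Nat.div_lt_iff_lt_mul hs |>.mpr
      (Nat.lt_of_lt_of_le j.isLt (le_of_eq (Nat.mul_comm s t)))
    obtain ⟨xg, hxg⟩ := hgne ⟨j.val % s, hj1⟩
    obtain ⟨xh, hxh⟩ := hhne ⟨j.val / s, hj2⟩
    refine ⟨Fin.append xg xh, ?_⟩
    have e1 : (fun k => Fin.append xg xh (Fin.castAdd q k)) = xg := by
      funext k; exact Fin.append_left xg xh k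
    have e2 : (fun k => Fin.append xg xh (Fin.natAdd p k)) = xh := by
      funext k; exact Fin.append_right xg xh k
    show (if labg (fun k => Fin.append xg xh (Fin.castAdd q k)) = 0 ∨
        labh (fun k => Fin.append xg xh (Fin.natAdd p k)) = 0 then 0
      else (labg (fun k => Fin.append xg xh (Fin.castAdd q k)) - 1)
        + s * (labh (fun k => Fin.append xg xh (Fin.natAdd p k)) - 1) + 1) = j.val + 1
    have hxg' : labg xg = j.val % s + 1 := hxg
    have hxh' : labh xh = j.val / s + 1 := hxh
    rw [e1, e2, hxg', hxh']
    rw [if_neg (by simp)]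
    simp only [Nat.add_sub_cancel]
    have hmd : j.val % s + s * (j.val / s) = j.val := Nat.mod_add_div _ _
    omega
  · intro z hz
    by_cases hc : labg (fun k => z (Fin.castAdd q k)) = 0 ∨ labh (fun k => z (Fin.natAdd p k)) = 0
    · simp [hc] at hz
    · push_neg at hc
      exact lcBlock _ _ (hgval _ hc.1) (hhval _ hc.2)
  · intro z i v hz hf
    by_cases hc : labg (fun k => z (Fin.castAdd q k)) = 0 ∨ labh (fun k => z (Fin.natAdd p k)) = 0
    · simp [hc] at hz
    push_neg at hc
    revert hf
    refine Fin.addCases (motive := fun i =>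
      (LCf (g fun k => Function.update z i v (Fin.castAdd q k))
           (h fun k => Function.update z i v (Fin.natAdd p k)) = 0 ∨
       LCf (g fun k => Function.update z i v (Fin.castAdd q k))
           (h fun k => Function.update z i v (Fin.natAdd p k)) = 1) →
      (if labg (fun k => Function.update z i v (Fin.castAdd q k)) = 0 ∨
          labh (fun k => Function.update z i v (Fin.natAdd p k)) = 0 then 0
       else (labg (fun k => Function.update z i v (Fin.castAdd q k)) - 1)
        + s * (labh (fun k => Function.update z i v (Fin.natAdd p k)) - 1) + 1)
      = (if labg (fun k => z (Fin.castAdd q k)) = 0 ∨ labh (fun k => z (Fin.natAdd p k)) = 0 then 0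
       else (labg (fun k => z (Fin.castAdd q k)) - 1)
        + s * (labh (fun k => z (Fin.natAdd p k)) - 1) + 1)) ?_ ?_ i
    · intro i₀ hf
      rw [upd_cast z v i₀, upd_cast_right z v i₀] at hf ⊢
      have hg01 : g (Function.update (fun k => z (Fin.castAdd q k)) i₀ v) = 0 ∨
          g (Function.update (fun k => z (Fin.castAdd q k)) i₀ v) = 1 :=
        lcBlockRev _ _ (hhval _ hc.2) hf
      rw [hgcl _ i₀ v hc.1 hg01]
    · intro i₀ hf
      rw [upd_nat_left z v i₀, upd_nat z v i₀] at hf ⊢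
      have hh01 : h (Function.update (fun k => z (Fin.natAdd p k)) i₀ v) = 0 ∨
          h (Function.update (fun k => z (Fin.natAdd p k)) i₀ v) = 1 :=
        lcBlockRev2 _ _ (hgval _ hc.1) hf
      rw [hhcl _ i₀ v hc.2 hh01]

/- base tables -/
def B2f (a b : Fin 5) : Fin 5 := lk 51773329791363554 (a.val * 5 + b.val)
def B2lab (a b : Fin 5) : ℕ := lkN 61989748555475630 (a.val * 5 + b.val)

def T3N : ℕ := 2081492248245257532044748081303920917277396745421998345616685380163161919600348621927402
def T3L : ℕ := 19561672811741619668644108234739160128324199022787375668308231985204220436110839925030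
def T3f (a b c : Fin 5) : Fin 5 := lk T3N ((a.val * 5 + b.val) * 5 + c.val)
def T3lab (a b c : Fin 5) : ℕ := lkN T3L ((a.val * 5 + b.val) * 5 + c.val)

set_option maxRecDepth 40000 in
lemma qhas2 : QHas 2 2 := by
  refine ⟨fun x => B2f (x 0) (x 1), fun x => B2lab (x 0) (x 1),
    by unfold IsNQuasigroup; decide, ?_, by decide, by decide⟩
  intro j
  fin_cases j
  · exact ⟨![0, 1], by decide⟩
  · exact ⟨![1, 0], by decide⟩

set_option maxRecDepth 100000 in
lemma qhas3 : QHas 3 3 := by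
  refine ⟨fun x => T3f (x 0) (x 1) (x 2), fun x => T3lab (x 0) (x 1) (x 2),
    by unfold IsNQuasigroup; decide, ?_, by decide, by decide⟩
  intro j
  fin_cases j
  · exact ⟨![0, 0, 1], by decide⟩
  · exact ⟨![0, 2, 3], by decide⟩
  · exact ⟨![3, 0, 3], by decide⟩

lemma qhas_cast {n t n' t' : ℕ} (h : QHas n t) (hn : n = n') (ht : t = t') : QHas n' t' := by
  subst hn; subst ht; exact h

lemma qhasA : ∀ m : ℕ, QHas (3 * (m + 1)) (3 ^ (m + 1)) := by
  intro m
  induction m with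
  | zero => exact qhas_cast qhas3 (by norm_num) (by norm_num)
  | succ m ih =>
      exact qhas_cast (qhas_comp qhas3 ih) (by ring) (by ring)

lemma qhasB : ∀ m : ℕ, QHas (3 * (m + 1) + 1) (4 * 3 ^ m) := by
  intro m
  induction m with
  | zero => exact qhas_cast (qhas_comp qhas2 qhas2) (by norm_num) (by norm_num)
  | succ m ih =>
      exact qhas_cast (qhas_comp qhas3 ih) (by ring) (by ring)

lemma qhasC : ∀ m : ℕ, QHas (3 * m + 2) (2 * 3 ^ m) := by
  intro m
  induction m with
  | zero => exact qhas_cast qhas2 (by norm_num) (by norm_num)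
  | succ m ih =>
      exact qhas_cast (qhas_comp qhas3 ih) (by ring) (by ring)

/- numeric bounds for the real-exponent part -/
set_option exponentiation.threshold 1000 in
lemma key1 : (3 : ℝ) ^ ((473 : ℝ) / 375) < 4 := by
  have h0 : (0 : ℝ) ≤ (3 : ℝ) ^ ((473 : ℝ) / 375) := Real.rpow_nonneg (by norm_num) _
  refine lt_of_pow_lt_pow_left₀ 375 (by norm_num) ?_
  have e : ((3 : ℝ) ^ ((473 : ℝ) / 375)) ^ (375 : ℕ) = ((3 ^ 473 : ℕ) : ℝ) := by
    rw [← Real.rpow_natCast ((3 : ℝ) ^ ((473 : ℝ) / 375)) 375,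
      ← Real.rpow_mul (by norm_num : (0:ℝ) ≤ 3),
      show (473 : ℝ) / 375 * ((375 : ℕ) : ℝ) = ((473 : ℕ) : ℝ) by norm_num,
      Real.rpow_natCast]
    push_cast
    ring
  rw [e]
  have h : (3 : ℕ) ^ 473 < 4 ^ 375 := by norm_num
  calc ((3 ^ 473 : ℕ) : ℝ) < ((4 ^ 375 : ℕ) : ℝ) := by exact_mod_cast h
    _ = 4 ^ 375 := by push_cast; ring

set_option exponentiation.threshold 1000 in
lemma key2 : (3 : ℝ) ^ ((223 : ℝ) / 375) < 2 := by
  have h0 : (0 : ℝ) ≤ (3 : ℝ) ^ ((223 : ℝ) / 375) := Real.rpow_nonneg (by norm_num) _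
  refine lt_of_pow_lt_pow_left₀ 375 (by norm_num) ?_
  have e : ((3 : ℝ) ^ ((223 : ℝ) / 375)) ^ (375 : ℕ) = ((3 ^ 223 : ℕ) : ℝ) := by
    rw [← Real.rpow_natCast ((3 : ℝ) ^ ((223 : ℝ) / 375)) 375,
      ← Real.rpow_mul (by norm_num : (0:ℝ) ≤ 3),
      show (223 : ℝ) / 375 * ((375 : ℕ) : ℝ) = ((223 : ℕ) : ℝ) by norm_num,
      Real.rpow_natCast]
    push_cast
    ring
  rw [e]
  have h : (3 : ℕ) ^ 223 < 2 ^ 375 := by norm_num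
  calc ((3 ^ 223 : ℕ) : ℝ) < ((2 ^ 375 : ℕ) : ℝ) := by exact_mod_cast h
    _ = 2 ^ 375 := by push_cast; ring

/-- Lower bounds for the number of `n`-ary quasigroups of order `5`. -/
theorem numQuasigroups_order_five :
    (∀ m : ℕ, 1 ≤ m → numQuasigroups (3 * m) 5 ≥ 2 ^ 3 ^ m) ∧
    (∀ m : ℕ, 1 ≤ m → numQuasigroups (3 * m + 1) 5 ≥ 2 ^ (4 * 3 ^ (m - 1))) ∧
    (∀ m : ℕ, numQuasigroups (3 * m + 2) 5 ≥ 2 ^ (2 * 3 ^ m)) ∧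
    (∀ n : ℕ, 2 ≤ n →
      (numQuasigroups n 5 : ℝ) > (2 : ℝ) ^ ((3 : ℝ) ^ ((n : ℝ) / 3 - 0.072))) := by
  have hA : ∀ m : ℕ, 1 ≤ m → numQuasigroups (3 * m) 5 ≥ 2 ^ 3 ^ m := by
    intro m hm
    obtain ⟨m', rfl⟩ : ∃ m', m = m' + 1 := ⟨m - 1, by omega⟩
    exact counting (qhasA m')
  have hB : ∀ m : ℕ, 1 ≤ m → numQuasigroups (3 * m + 1) 5 ≥ 2 ^ (4 * 3 ^ (m - 1)) := by
    intro m hm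
    obtain ⟨m', rfl⟩ : ∃ m', m = m' + 1 := ⟨m - 1, by omega⟩
    simpa using counting (qhasB m')
  have hC : ∀ m : ℕ, numQuasigroups (3 * m + 2) 5 ≥ 2 ^ (2 * 3 ^ m) := fun m =>
    counting (qhasC m)
  refine ⟨hA, hB, hC, ?_⟩
  intro n hn
  -- reduce to: the natural exponent t with numQ ≥ 2^t dominates 3^{n/3 - 0.072}
  have main : ∀ t : ℕ, 2 ^ t ≤ numQuasigroups n 5 →
      (3 : ℝ) ^ ((n : ℝ) / 3 - 0.072) < (t : ℝ) →
      (numQuasigroups n 5 : ℝ) > (2 : ℝ) ^ ((3 : ℝ) ^ ((n : ℝ) / 3 - 0.072)) := by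
    intro t ht hlt
    have h1 : (2 : ℝ) ^ ((3 : ℝ) ^ ((n : ℝ) / 3 - 0.072)) < (2 : ℝ) ^ (t : ℝ) := by
      exact Real.rpow_lt_rpow_left_iff (by norm_num : (1:ℝ) < 2) |>.mpr hlt
    have h2 : (2 : ℝ) ^ (t : ℝ) ≤ (numQuasigroups n 5 : ℝ) := by
      rw [Real.rpow_natCast]
      exact_mod_cast ht
    linarith
  have hmod : n % 3 = 0 ∨ n % 3 = 1 ∨ n % 3 = 2 := by omega
  rcases hmod with h0 | h1 | h2
  · -- n = 3m
    obtain ⟨m, hnm⟩ : ∃ m, n = 3 * m := ⟨n / 3, by omega⟩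
    have hm1 : 1 ≤ m := by omega
    refine main (3 ^ m) (hnm ▸ hA m hm1) ?_
    have hcast : ((3 ^ m : ℕ) : ℝ) = (3 : ℝ) ^ ((m : ℕ) : ℝ) := by
      rw [Real.rpow_natCast]; push_cast; ring
    rw [hcast]
    apply Real.rpow_lt_rpow_of_exponent_lt (by norm_num : (1:ℝ) < 3)
    have : (n : ℝ) = 3 * (m : ℝ) := by exact_mod_cast congrArg (Nat.cast : ℕ → ℝ) hnm
    rw [this]
    norm_num
  · -- n = 3m + 1
    obtain ⟨m, hnm⟩ : ∃ m, n = 3 * m + 1 := ⟨n / 3, by omega⟩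
    have hm1 : 1 ≤ m := by omega
    refine main (4 * 3 ^ (m - 1)) (hnm ▸ hB m hm1) ?_
    obtain ⟨m', rfl⟩ : ∃ m', m = m' + 1 := ⟨m - 1, by omega⟩
    have hexp : (n : ℝ) / 3 - 0.072 = (m' : ℝ) + (473 : ℝ) / 375 := by
      have : (n : ℝ) = 3 * ((m' : ℝ) + 1) + 1 := by
        rw [hnm]; push_cast; ring
      rw [this]; norm_num; ring
    rw [hexp, Real.rpow_add (by norm_num : (0:ℝ) < 3)]
    have h3m : (3 : ℝ) ^ ((m' : ℕ) : ℝ) = ((3 ^ m' : ℕ) : ℝ) := by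
      rw [Real.rpow_natCast]; push_cast; ring
    rw [h3m]
    have hpos : (0 : ℝ) < ((3 ^ m' : ℕ) : ℝ) := by positivity
    have := key1
    have hcast : ((4 * 3 ^ ((m' + 1) - 1) : ℕ) : ℝ) = 4 * ((3 ^ m' : ℕ) : ℝ) := by
      push_cast; ring
    rw [hcast]
    nlinarith
  · -- n = 3m + 2
    obtain ⟨m, hnm⟩ : ∃ m, n = 3 * m + 2 := ⟨n / 3, by omega⟩
    refine main (2 * 3 ^ m) (hnm ▸ hC m) ?_
    have hexp : (n : ℝ) / 3 - 0.072 = (m : ℝ) + (223 : ℝ) / 375 := by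
      have : (n : ℝ) = 3 * (m : ℝ) + 2 := by
        rw [hnm]; push_cast; ring
      rw [this]; norm_num; ring
    rw [hexp, Real.rpow_add (by norm_num : (0:ℝ) < 3)]
    have h3m : (3 : ℝ) ^ ((m : ℕ) : ℝ) = ((3 ^ m : ℕ) : ℝ) := by
      rw [Real.rpow_natCast]; push_cast; ring
    rw [h3m]
    have hpos : (0 : ℝ) < ((3 ^ m : ℕ) : ℝ) := by positivity
    have := key2
    have hcast : ((2 * 3 ^ m : ℕ) : ℝ) = 2 * ((3 ^ m : ℕ) : ℝ) := by
      push_cast; ring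
    rw [hcast]
    nlinarith
end

section
/- Let g be a binary quasigroup on Σ, and define the binary quasigroup g⁻ by g(x,y) = z ⟺ g⁻(z,y) = x. If {c,d} × {e,f} is an ab-component of g (with a ≠ b, c ≠ d, e ≠ f), then {a,b} × {e,f} is a cd-component of g⁻. -/
/-- The function obtained from a binary quasigroup `g` by interchanging the values
`a` and `b` on `Θ ⊆ S²` and leaving `g` unchanged elsewhere. -/
noncomputable def switchFun2 {S : Type*} (g : S → S → S) (a b : S)
    (Θ : Set (S × S)) : S → S → S := fun x y =>
  haveI := Classical.dec ((x, y) ∈ Θ)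
  haveI := Classical.decEq S
  if (x, y) ∈ Θ then (if g x y = a then b else if g x y = b then a else g x y)
  else g x y

/-- `Θ ⊆ S²` is an `ab`-component (switching component) of a binary quasigroup `g`. -/
def IsSwitchingComponent2 {S : Type*} (g : S → S → S) (a b : S)
    (Θ : Set (S × S)) : Prop :=
  Θ.Nonempty ∧ ((fun p : S × S => g p.1 p.2) '' Θ = {a, b}) ∧
    IsQuasigroupOp (switchFun2 g a b Θ)

/-!
On each column `y ∈ {e, f}` the rows `c, d` take exactly the values `a, b`, and no other row
does. Hence switching `g` on `{c, d} × {e, f}` transposes the values: with `σ = (c d)` and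
`τ = (a b)`, the switched quasigroup is `g' x y = τ (g x y) = g (σ x) y` on these columns.
Dually the switched `g⁻` is `σ (g⁻ z y)` there, so `g⁻'(g' x y, y) = σ (σ x) = x`: the switched
`g⁻` is the inverse of the quasigroup `g'`, hence itself a quasigroup.
-/

open Equiv

section

variable {S : Type*}

theorem IsQuasigroupOp.of_leftInverse {q h : S → S → S} (hq : IsQuasigroupOp q)
    (hh : ∀ x y, h (q x y) y = x) : IsQuasigroupOp h := by
  have hq_h : ∀ z y, q (h z y) y = z := by
    intro z y
    obtain ⟨x, rfl⟩ := (hq.2 y).2 z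
    rw [hh]
  refine ⟨fun z => ⟨fun y₁ y₂ hy => (hq.1 (h z y₁)).1 ?_, fun x => ?_⟩,
    fun y => Function.bijective_iff_has_inverse.2 ⟨(q · y), (hq_h · y), (hh · y)⟩⟩
  · rw [hq_h, hy, hq_h]
  · obtain ⟨y, hy⟩ := (hq.1 x).2 z
    exact ⟨y, hy ▸ hh x y⟩

theorem Set.pair_eq_of_mem_of_ne {u v a b : S} (hu : u ∈ ({a, b} : Set S))
    (hv : v ∈ ({a, b} : Set S)) (huv : u ≠ v) : ({u, v} : Set S) = {a, b} := by
  simp only [Set.mem_insert_iff, Set.mem_singleton_iff] at hu hv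
  rcases hu with rfl | rfl <;> rcases hv with rfl | rfl <;> simp_all [Set.pair_comm]

theorem Equiv.swap_eq_of_pair_eq [DecidableEq S] {u v a b : S}
    (h : ({u, v} : Set S) = {a, b}) : swap u v = swap a b := by
  rcases Set.pair_eq_pair_iff.1 h with ⟨rfl, rfl⟩ | ⟨rfl, rfl⟩
  · rfl
  · exact swap_comm u v

theorem switchFun2_apply [DecidableEq S] (g : S → S → S) (a b : S) (Θ : Set (S × S))
    [DecidablePred (· ∈ Θ)] (x y : S) :
    switchFun2 g a b Θ x y = if (x, y) ∈ Θ then swap a b (g x y) else g x y := by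
  simp only [switchFun2, swap_apply_def]
  congr

theorem switchFun2_prod_apply [DecidableEq S] {g : S → S → S} {a b : S} {C E : Set S}
    [DecidablePred (· ∈ C)] [DecidablePred (· ∈ E)]
    (hC : ∀ x, ∀ y ∈ E, g x y ∈ ({a, b} : Set S) → x ∈ C) (x y : S) :
    switchFun2 g a b (C ×ˢ E) x y = if y ∈ E then swap a b (g x y) else g x y := by
  rw [switchFun2_apply]
  by_cases hy : y ∈ E
  · by_cases hx : x ∈ C
    · simp [hx, hy]
    · have hab : g x y ∉ ({a, b} : Set S) := fun h => hx (hC x y hy h)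
      simp only [Set.mem_insert_iff, Set.mem_singleton_iff, not_or] at hab
      simp [hx, hy, swap_apply_of_ne_of_ne hab.1 hab.2]
  · simp [hy]

variable {g : S → S → S} {a b c d x y : S} {E : Set S}

theorem apply_mem_of_image_prod_eq (himg : (fun p : S × S => g p.1 p.2) '' ({c, d} ×ˢ E) = {a, b})
    (hx : x ∈ ({c, d} : Set S)) (hy : y ∈ E) : g x y ∈ ({a, b} : Set S) :=
  himg ▸ ⟨(x, y), ⟨hx, hy⟩, rfl⟩

theorem pair_apply_eq_of_image_prod_eq (hg : IsQuasigroupOp g) (hcd : c ≠ d)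
    (himg : (fun p : S × S => g p.1 p.2) '' ({c, d} ×ˢ E) = {a, b}) (hy : y ∈ E) :
    ({g c y, g d y} : Set S) = {a, b} :=
  Set.pair_eq_of_mem_of_ne (apply_mem_of_image_prod_eq himg (by simp) hy)
    (apply_mem_of_image_prod_eq himg (by simp) hy) fun h => hcd ((hg.2 y).1 h)

theorem mem_of_apply_mem_of_image_prod_eq (hg : IsQuasigroupOp g) (hcd : c ≠ d)
    (himg : (fun p : S × S => g p.1 p.2) '' ({c, d} ×ˢ E) = {a, b}) :
    ∀ x, ∀ y ∈ E, g x y ∈ ({a, b} : Set S) → x ∈ ({c, d} : Set S) := by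
  intro x y hy hx
  rw [← pair_apply_eq_of_image_prod_eq hg hcd himg hy] at hx
  rcases hx with hx | hx
  · exact Or.inl ((hg.2 y).1 hx)
  · exact Or.inr ((hg.2 y).1 hx)

theorem image_prod_eq_of_leftInverse {ginv : S → S → S} (hinv : ∀ x y, ginv (g x y) y = x)
    (hcol : ∀ y ∈ E, ({g c y, g d y} : Set S) = {a, b}) (hE : E.Nonempty) :
    (fun p : S × S => ginv p.1 p.2) '' ({a, b} ×ˢ E) = {c, d} := by
  obtain ⟨y, hy⟩ := hE
  refine Set.Subset.antisymm ?_ fun x hx => ⟨(g x y, y), ⟨?_, hy⟩, hinv x y⟩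
  · rintro _ ⟨⟨z, y'⟩, ⟨hz, hy'⟩, rfl⟩
    rw [← hcol y' hy'] at hz
    rcases hz with rfl | rfl <;> simp [hinv]
  · rw [← hcol y hy]
    rcases hx with rfl | rfl <;> simp

end

theorem inverse_component_general {S : Type*} (g ginv : S → S → S)
    (hg : IsQuasigroupOp g)
    (hinv : ∀ x y z : S, g x y = z ↔ ginv z y = x)
    (a b c d e f : S) (hcd : c ≠ d)
    (hcomp : IsSwitchingComponent2 g a b (({c, d} : Set S) ×ˢ ({e, f} : Set S))) :
    IsSwitchingComponent2 ginv c d (({a, b} : Set S) ×ˢ ({e, f} : Set S)) := by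
  classical
  obtain ⟨-, himg, hswitch⟩ := hcomp
  have ginv_g (x y : S) : ginv (g x y) y = x := (hinv x y _).1 rfl
  have hcol (y) (hy : y ∈ ({e, f} : Set S)) := pair_apply_eq_of_image_prod_eq hg hcd himg hy
  have hvals (z y) (hy : y ∈ ({e, f} : Set S)) (hz : ginv z y ∈ ({c, d} : Set S)) :
      z ∈ ({a, b} : Set S) :=
    (hinv _ y z).2 rfl ▸ apply_mem_of_image_prod_eq himg hz hy
  refine ⟨⟨(a, e), by simp⟩, image_prod_eq_of_leftInverse ginv_g hcol ⟨e, by simp⟩,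
    hswitch.of_leftInverse fun x y => ?_⟩
  rw [switchFun2_prod_apply (mem_of_apply_mem_of_image_prod_eq hg hcd himg),
    switchFun2_prod_apply hvals]
  by_cases hy : y ∈ ({e, f} : Set S)
  · -- `τ (g x y) = g (σ x) y`, then `σ (σ x) = x`
    rw [if_pos hy, if_pos hy, ← swap_eq_of_pair_eq (hcol y hy), (hg.2 y).1.swap_apply, ginv_g,
      swap_apply_self]
  · rw [if_neg hy, if_neg hy, ginv_g]

/-- If `{c,d} × {e,f}` is an `ab`-component of `g`, then `{a,b} × {e,f}` is a
`cd`-component of the quasigroup `g⁻` defined by `g x y = z ↔ g⁻ z y = x`. -/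
theorem inverse_component {S : Type*} (g ginv : S → S → S)
    (hg : IsQuasigroupOp g)
    (hinv : ∀ x y z : S, g x y = z ↔ ginv z y = x)
    (a b c d e f : S) (hab : a ≠ b) (hcd : c ≠ d) (hef : e ≠ f)
    (hcomp : IsSwitchingComponent2 g a b (({c, d} : Set S) ×ˢ ({e, f} : Set S))) :
    IsSwitchingComponent2 ginv c d (({a, b} : Set S) ×ˢ ({e, f} : Set S)) :=
  inverse_component_general g ginv hg hinv a b c d e f hcd hcomp
end

section
/- Let g be a binary quasigroup on Σ such that {c,d} × {e,f} is an ab-component of g, and let q be an n-ary quasigroup on Σ such that {a_1,b_1} × … × {a_n,b_n} is an ef-component of q. Then {c,d} × {a_1,b_1} × … × {a_n,b_n} is an ab-component of the (n+1)-ary quasigroup defined by (x_0, x_1, …, x_n) ↦ g(x_0, q(x_1,…,x_n)). -/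
/- ### Auxiliary lemmas -/

/-- The value-switching function. -/
noncomputable def mySw {S : Type*} (s a b : S) : S :=
  haveI := Classical.decEq S
  if s = a then b else if s = b then a else s

lemma switchFunOn_pos {I S : Type*} (q : (I → S) → S) (a b : S) (Θ : Set (I → S))
    {x} (hx : x ∈ Θ) : switchFunOn q a b Θ x = mySw (q x) a b := by
  unfold switchFunOn mySw
  rw [if_pos hx]

lemma switchFunOn_neg {I S : Type*} (q : (I → S) → S) (a b : S) (Θ : Set (I → S))
    {x} (hx : x ∉ Θ) : switchFunOn q a b Θ x = q x := by
  unfold switchFunOn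
  rw [if_neg hx]

lemma switchFun2_pos {S : Type*} (g : S → S → S) (a b : S) (Θ : Set (S × S))
    {x y} (h : (x, y) ∈ Θ) : switchFun2 g a b Θ x y = mySw (g x y) a b := by
  unfold switchFun2 mySw
  rw [if_pos h]

lemma switchFun2_neg {S : Type*} (g : S → S → S) (a b : S) (Θ : Set (S × S))
    {x y} (h : (x, y) ∉ Θ) : switchFun2 g a b Θ x y = g x y := by
  unfold switchFun2
  rw [if_neg h]

lemma mySw_left {S : Type*} (a b : S) : mySw a a b = b := by
  unfold mySw; rw [if_pos rfl]

lemma mySw_right {S : Type*} (a b : S) : mySw b a b = a := by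
  unfold mySw
  split_ifs with h1 h2
  · exact h1
  · rfl
  · exact absurd rfl h2

lemma mySw_self {S : Type*} (s a : S) : mySw s a a = s := by
  unfold mySw
  split_ifs with h1
  · exact h1.symm
  · rfl

lemma mySw_of_ne {S : Type*} {s a b : S} (h1 : s ≠ a) (h2 : s ≠ b) : mySw s a b = s := by
  unfold mySw
  rw [if_neg h1, if_neg h2]

/-- If `{c,d} × {e,f}` is an `ab`-component of the binary quasigroup `g` and
`{a₁,b₁} × … × {aₙ,bₙ}` is an `ef`-component of the `n`-ary quasigroup `q`, then
`{c,d} × {a₁,b₁} × … × {aₙ,bₙ}` is an `ab`-component of the `(n+1)`-ary quasigroup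
`(x₀,x₁,…,xₙ) ↦ g(x₀, q(x₁,…,xₙ))`. -/
theorem component_of_superposition {S : Type*} {n : ℕ}
    (g : S → S → S) (hg : IsQuasigroupOp g)
    (a b c d e f : S)
    (hgc : IsSwitchingComponent2 g a b (({c, d} : Set S) ×ˢ ({e, f} : Set S)))
    (q : (Fin n → S) → S) (hq : IsQuasigroupOn q)
    (A B : Fin n → S)
    (hqc : IsSwitchingComponentOn q e f {x : Fin n → S | ∀ i, x i = A i ∨ x i = B i}) :
    IsSwitchingComponentOn
      (fun x : Fin (n + 1) → S => g (x 0) (q fun i => x i.succ)) a b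
      {x : Fin (n + 1) → S |
        (x 0 = c ∨ x 0 = d) ∧ ∀ i : Fin n, x i.succ = A i ∨ x i.succ = B i} := by
  obtain ⟨hgne, hgim, hgq⟩ := hgc
  obtain ⟨hqne, hqim, hqq⟩ := hqc
  -- membership helpers
  have hrect : ∀ {u v : S}, (u = c ∨ u = d) → (v = e ∨ v = f) →
      (u, v) ∈ (({c, d} : Set S) ×ˢ ({e, f} : Set S)) := by
    intro u v hu hv
    exact ⟨by simpa using hu, by simpa using hv⟩
  have hmemg : ∀ {u v : S}, (u = c ∨ u = d) → (v = e ∨ v = f) →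
      g u v ∈ ({a, b} : Set S) := by
    intro u v hu hv
    rw [← hgim]
    exact ⟨(u, v), hrect hu hv, rfl⟩
  have hmemq : ∀ {t : Fin n → S}, (∀ i, t i = A i ∨ t i = B i) →
      (q t = e ∨ q t = f) := by
    intro t ht
    have : q t ∈ q '' {x : Fin n → S | ∀ i, x i = A i ∨ x i = B i} := ⟨t, ht, rfl⟩
    rw [hqim] at this
    simpa using this
  -- a = b ↔ e = f analysis
  have hab_ef : a = b → e = f := by
    intro hab
    have h1 := hmemg (Or.inl rfl) (Or.inl rfl)
    have h2 := hmemg (Or.inl rfl) (Or.inr rfl)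
    rw [← hab] at h1 h2
    simp only [Set.mem_insert_iff, Set.mem_singleton_iff, or_self] at h1 h2
    exact (hg.1 c).injective (h1.trans h2.symm)
  have hnab_ef : a ≠ b → e ≠ f := by
    intro hab hef
    have ha : a ∈ (fun p : S × S => g p.1 p.2) '' (({c, d} : Set S) ×ˢ ({e, f} : Set S)) := by
      rw [hgim]; exact Set.mem_insert a {b}
    obtain ⟨p, hp, hpa0⟩ := ha
    have hpa : g p.1 p.2 = a := hpa0
    have hp2 : p.2 = e := by
      rcases (by simpa using hp.2 : p.2 = e ∨ p.2 = f) with h | h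
      · exact h
      · exact h.trans hef.symm
    obtain ⟨y, hy⟩ := (hg.1 p.1).surjective b
    have hne : p.2 ≠ y := by
      intro h
      apply hab
      rw [← hpa, h, hy]
    have hyn : (p.1, y) ∉ (({c, d} : Set S) ×ˢ ({e, f} : Set S)) := by
      intro hmem
      apply hne
      rcases (by simpa using hmem.2 : y = e ∨ y = f) with h | h
      · rw [hp2, h]
      · rw [hp2, h, hef]
    have hval1 : switchFun2 g a b (({c, d} : Set S) ×ˢ ({e, f} : Set S)) p.1 p.2 = b := by
      rw [switchFun2_pos _ _ _ _ (show ((p.1, p.2) : S × S) ∈ _ from hp), hpa, mySw_left]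
    have hval2 : switchFun2 g a b (({c, d} : Set S) ×ˢ ({e, f} : Set S)) p.1 y = b := by
      rw [switchFun2_neg _ _ _ _ hyn, hy]
    have := (hgq.1 p.1).injective (hval1.trans hval2.symm)
    exact hne this
  -- the key switching-compatibility lemma
  have key : ∀ {u v : S}, (u = c ∨ u = d) → (v = e ∨ v = f) →
      g u (mySw v e f) = mySw (g u v) a b := by
    intro u v hu hv
    by_cases hab : a = b
    · have hef := hab_ef hab
      subst hab
      subst hef
      rw [mySw_self, mySw_self]
    · have hef := hnab_ef hab
      have h1 := hmemg hu (Or.inl rfl)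
      have h2 := hmemg hu (Or.inr rfl)
      simp only [Set.mem_insert_iff, Set.mem_singleton_iff] at h1 h2
      have hne : g u e ≠ g u f := fun h => hef ((hg.1 u).injective h)
      rcases hv with rfl | rfl
      · rw [mySw_left]
        rcases h1 with h1 | h1
        · rw [h1, mySw_left]
          rcases h2 with h2 | h2
          · exact absurd (h1.trans h2.symm) hne
          · exact h2
        · rw [h1, mySw_right]
          rcases h2 with h2 | h2
          · exact h2
          · exact absurd (h1.trans h2.symm) hne
      · rw [mySw_right]
        rcases h2 with h2 | h2
        · rw [h2, mySw_left]
          rcases h1 with h1 | h1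
          · exact absurd (h1.trans h2.symm) hne
          · exact h1
        · rw [h2, mySw_right]
          rcases h1 with h1 | h1
          · exact h1
          · exact absurd (h1.trans h2.symm) hne
  refine ⟨?_, ?_, ?_⟩
  -- nonemptiness
  · obtain ⟨y, hy⟩ := hqne
    refine ⟨Fin.cons c y, Or.inl (by simp), fun i => ?_⟩
    simp only [Fin.cons_succ]
    exact hy i
  -- image
  · apply Set.Subset.antisymm
    · rintro s ⟨x, ⟨hx0, hxt⟩, rfl⟩
      rw [← hgim]
      exact ⟨(x 0, q fun i => x i.succ), hrect hx0 (hmemq hxt), rfl⟩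
    · intro s hs
      have hs' : s ∈ (fun p : S × S => g p.1 p.2) ''
          (({c, d} : Set S) ×ˢ ({e, f} : Set S)) := by rw [hgim]; exact hs
      obtain ⟨p, hp, hps⟩ := hs'
      have hp2 : p.2 ∈ q '' {x : Fin n → S | ∀ i, x i = A i ∨ x i = B i} := by
        rw [hqim]; simpa using hp.2
      obtain ⟨y, hy, hqy⟩ := hp2
      refine ⟨Fin.cons p.1 y, ⟨?_, fun i => ?_⟩, ?_⟩
      · simpa [Fin.cons_zero] using (show p.1 = c ∨ p.1 = d by simpa using hp.1)
      · simp only [Fin.cons_succ]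
        exact hy i
      · have hps' : g p.1 p.2 = s := hps
        simp only [Fin.cons_zero, Fin.cons_succ]
        rw [hqy]
        exact hps'

  -- quasigroup property of the switched function
  · intro i x
    refine Fin.cases ?_ ?_ i
    -- coordinate 0
    · have htail : ∀ (s : S) (j : Fin n),
          Function.update x 0 s j.succ = x j.succ :=
        fun s j => Function.update_of_ne (Fin.succ_ne_zero j) s x
      by_cases ht : ∀ j : Fin n, x j.succ = A j ∨ x j.succ = B j
      · have heq : (fun s : S => switchFunOn
            (fun x : Fin (n + 1) → S => g (x 0) (q fun i => x i.succ)) a b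
            {x : Fin (n + 1) → S |
              (x 0 = c ∨ x 0 = d) ∧ ∀ i : Fin n, x i.succ = A i ∨ x i.succ = B i}
            (Function.update x 0 s)) =
            fun s => switchFun2 g a b (({c, d} : Set S) ×ˢ ({e, f} : Set S)) s
              (q fun j : Fin n => x j.succ) := by
          funext s
          have hT : (fun j : Fin n => Function.update x 0 s j.succ) =
              fun j : Fin n => x j.succ := funext (htail s)
          by_cases hs : s = c ∨ s = d
          · have hmem : Function.update x 0 s ∈ {x : Fin (n + 1) → S |
                (x 0 = c ∨ x 0 = d) ∧ ∀ i : Fin n, x i.succ = A i ∨ x i.succ = B i} :=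
              ⟨by rw [Function.update_self]; exact hs,
               fun j => by rw [htail s j]; exact ht j⟩
            rw [switchFunOn_pos _ _ _ _ hmem,
              switchFun2_pos _ _ _ _ (hrect hs (hmemq ht))]
            show mySw (g (Function.update x 0 s 0) (q fun j => Function.update x 0 s j.succ))
              a b = _
            rw [Function.update_self, congrArg q hT]
          · have hnot : Function.update x 0 s ∉ {x : Fin (n + 1) → S |
                (x 0 = c ∨ x 0 = d) ∧ ∀ i : Fin n, x i.succ = A i ∨ x i.succ = B i} := by
              intro hmem
              apply hs
              have := hmem.1
              rwa [Function.update_self] at this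
            have hnot2 : ((s, q fun j => x j.succ) : S × S) ∉
                (({c, d} : Set S) ×ˢ ({e, f} : Set S)) := by
              intro hmem
              exact hs (by simpa using hmem.1)
            rw [switchFunOn_neg _ _ _ _ hnot, switchFun2_neg _ _ _ _ hnot2]
            show g (Function.update x 0 s 0) (q fun j => Function.update x 0 s j.succ) = _
            rw [Function.update_self, congrArg q hT]
        rw [heq]
        exact hgq.2 (q fun j : Fin n => x j.succ)
      · have heq : (fun s : S => switchFunOn
            (fun x : Fin (n + 1) → S => g (x 0) (q fun i => x i.succ)) a b
            {x : Fin (n + 1) → S |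
              (x 0 = c ∨ x 0 = d) ∧ ∀ i : Fin n, x i.succ = A i ∨ x i.succ = B i}
            (Function.update x 0 s)) =
            fun s => g s (q fun j : Fin n => x j.succ) := by
          funext s
          have hT : (fun j : Fin n => Function.update x 0 s j.succ) =
              fun j : Fin n => x j.succ := funext (htail s)
          have hnot : Function.update x 0 s ∉ {x : Fin (n + 1) → S |
              (x 0 = c ∨ x 0 = d) ∧ ∀ i : Fin n, x i.succ = A i ∨ x i.succ = B i} := by
            intro hmem
            apply ht
            intro j
            have := hmem.2 j
            rwa [htail s j] at this
          rw [switchFunOn_neg _ _ _ _ hnot]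
          show g (Function.update x 0 s 0) (q fun j => Function.update x 0 s j.succ) = _
          rw [Function.update_self, congrArg q hT]
        rw [heq]
        exact hg.2 (q fun j : Fin n => x j.succ)
    -- coordinate j.succ
    · intro j
      have h0 : ∀ s : S, Function.update x j.succ s 0 = x 0 :=
        fun s => Function.update_of_ne (Fin.succ_ne_zero j).symm s x
      have htail : ∀ (s : S) (k : Fin n), Function.update x j.succ s k.succ =
          Function.update (fun m => x m.succ) j s k := by
        intro s k
        by_cases hk : k = j
        · subst hk
          rw [Function.update_self, Function.update_self]
        · rw [Function.update_of_ne (fun h => hk (Fin.succ_injective n h)),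
            Function.update_of_ne hk]
      by_cases h0c : x 0 = c ∨ x 0 = d
      · have heq : (fun s : S => switchFunOn
            (fun x : Fin (n + 1) → S => g (x 0) (q fun i => x i.succ)) a b
            {x : Fin (n + 1) → S |
              (x 0 = c ∨ x 0 = d) ∧ ∀ i : Fin n, x i.succ = A i ∨ x i.succ = B i}
            (Function.update x j.succ s)) =
            fun s => g (x 0) (switchFunOn q e f
              {x : Fin n → S | ∀ i, x i = A i ∨ x i = B i}
              (Function.update (fun m => x m.succ) j s)) := by
          funext s
          have hT : (fun k => Function.update x j.succ s k.succ) =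
              Function.update (fun m => x m.succ) j s := funext (htail s)
          by_cases hTm : ∀ k, Function.update (fun m => x m.succ) j s k = A k ∨
              Function.update (fun m => x m.succ) j s k = B k
          · have hmem : Function.update x j.succ s ∈ {x : Fin (n + 1) → S |
                (x 0 = c ∨ x 0 = d) ∧ ∀ i : Fin n, x i.succ = A i ∨ x i.succ = B i} :=
              ⟨by rw [h0 s]; exact h0c, fun k => by rw [htail s k]; exact hTm k⟩
            rw [switchFunOn_pos _ _ _ _ hmem, switchFunOn_pos q e f _
                (show Function.update (fun m => x m.succ) j s ∈
                  {x : Fin n → S | ∀ i, x i = A i ∨ x i = B i} from hTm)]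
            show mySw (g (Function.update x j.succ s 0)
              (q fun k => Function.update x j.succ s k.succ)) a b = _
            rw [h0 s, congrArg q hT]
            exact (key h0c (hmemq hTm)).symm
          · have hnot : Function.update x j.succ s ∉ {x : Fin (n + 1) → S |
                (x 0 = c ∨ x 0 = d) ∧ ∀ i : Fin n, x i.succ = A i ∨ x i.succ = B i} := by
              intro hmem
              apply hTm
              intro k
              have := hmem.2 k
              rwa [htail s k] at this
            rw [switchFunOn_neg _ _ _ _ hnot, switchFunOn_neg q e f _
                (show Function.update (fun m => x m.succ) j s ∉
                  {x : Fin n → S | ∀ i, x i = A i ∨ x i = B i} from hTm)]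
            show g (Function.update x j.succ s 0)
              (q fun k => Function.update x j.succ s k.succ) = _
            rw [h0 s, congrArg q hT]
        rw [heq]
        exact (hg.1 (x 0)).comp (hqq j fun m => x m.succ)
      · have heq : (fun s : S => switchFunOn
            (fun x : Fin (n + 1) → S => g (x 0) (q fun i => x i.succ)) a b
            {x : Fin (n + 1) → S |
              (x 0 = c ∨ x 0 = d) ∧ ∀ i : Fin n, x i.succ = A i ∨ x i.succ = B i}
            (Function.update x j.succ s)) =
            fun s => g (x 0) (q (Function.update (fun m => x m.succ) j s)) := by
          funext s
          have hT : (fun k => Function.update x j.succ s k.succ) =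
              Function.update (fun m => x m.succ) j s := funext (htail s)
          have hnot : Function.update x j.succ s ∉ {x : Fin (n + 1) → S |
              (x 0 = c ∨ x 0 = d) ∧ ∀ i : Fin n, x i.succ = A i ∨ x i.succ = B i} := by
            intro hmem
            apply h0c
            have := hmem.1
            rwa [h0 s] at this
          rw [switchFunOn_neg _ _ _ _ hnot]
          show g (Function.update x j.succ s 0)
            (q fun k => Function.update x j.succ s k.succ) = _
          rw [h0 s, congrArg q hT]
        rw [heq]
        exact (hg.1 (x 0)).comp (hq j fun m => x m.succ)
end
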